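/- arXiv:math/0606075 — 9 statements merged into one kernel-verified Lean document; each statement's English description precedes it below -/
import Mathlib

section
/- Let f ≥ 1, let Ṽ be the 𝔽₂-vector space with basis e_0, e_1, …, e_{2f}, and let V be its quotient by the one-dimensional subspace spanned by e_0 + e_2 + ⋯ + e_{2f}. Equip Ṽ with the symmetric bilinear form determined by ⟨e_i, e_j⟩ = 1 if |i − j| = 1 and ⟨e_i, e_j⟩ = 0 otherwise; this form has kernel spanned by e_0 + e_2 + ⋯ + e_{2f} and hence induces a nondegenerate symmetric bilinear form on V. Let 𝒢 ⊆ V be the span of (the images of) e_1, e_3, …, e_{2f−1} and let Ĝ ⊆ V be the span of (the images of) e_0, e_2, …, e_{2f}. Fix x ∈ 𝒢 and write x = Σ_{j ∈ n(x)} e_j with n(x) ⊆ {1, 3, …, 2f−1}, and let H_x ⊆ 𝒢 be the span of {e_j : j ∈ n(x)}. Then the annihilator {μ ∈ Ĝ : ⟨μ, h⟩ = 0 for all h ∈ H_x} is exactly the span in V of the blocks of x. -/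
/-- `Ṽ`: the `𝔽₂`-vector space with basis `e 0, …, e (2f)`. -/
abbrev Vt (f : ℕ) := Fin (2 * f + 1) → ZMod 2

/-- The basis vector `e j` of `Ṽ` (zero if `j > 2f`). -/
def e (f : ℕ) (j : ℕ) : Vt f := fun t => if (t : ℕ) = j then 1 else 0

/-- The symmetric bilinear form on `Ṽ` with `⟨e i, e j⟩ = 1` iff `|i - j| = 1`. -/
def Bt (f : ℕ) (v w : Vt f) : ZMod 2 :=
  ∑ i : Fin (2 * f + 1), ∑ j : Fin (2 * f + 1),
    (if (i : ℕ) + 1 = (j : ℕ) ∨ (j : ℕ) + 1 = (i : ℕ) then v i * w j else 0)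

/-- The relation `e 0 + e 2 + ⋯ + e (2f)`, spanning the kernel of the form. -/
def zrel (f : ℕ) : Vt f := ∑ i ∈ Finset.range (f + 1), e f (2 * i)

/-- `V`: the quotient of `Ṽ` by the span of `e 0 + e 2 + ⋯ + e (2f)`. -/
abbrev Vq (f : ℕ) := Vt f ⧸ (Submodule.span (ZMod 2) {zrel f})

/-- The quotient map `Ṽ → V`. -/
def toVq (f : ℕ) (v : Vt f) : Vq f := Submodule.Quotient.mk v

/-- The symmetric bilinear form induced on `V` by the form on `Ṽ` (the form on
`Ṽ` kills `zrel f`, so evaluating on any representatives gives the induced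
form; it is nondegenerate on `V`). -/
noncomputable def Bq (f : ℕ) (v w : Vq f) : ZMod 2 :=
  Bt f (Quotient.out v) (Quotient.out w)

/-!
The form satisfies `⟨v, e j⟩ = v (j - 1) + v (j + 1)` and kills `e 0 + e 2 + ⋯ + e (2f)`, so it
descends to `V`. An element of `Ĝ` lifts to a vector `u` supported on even indices, and it
annihilates `H_x` iff `u (j - 1) = u (j + 1)` for every `j ∈ n(x)`, i.e. iff `u` is constant along
each maximal run of even indices linked through `n(x)`. These runs are the blocks, so every block
lies in the annihilator. Conversely, adding to `u` the block that starts at its first nonzero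
coordinate preserves both conditions and moves the first nonzero coordinate to the right, so by
descending induction `u` is a sum of blocks.
-/

open Finset

def coord {f : ℕ} (v : Vt f) (m : ℕ) : ZMod 2 := if h : m < 2 * f + 1 then v ⟨m, h⟩ else 0

lemma coord_val {f : ℕ} (v : Vt f) (t : Fin (2 * f + 1)) : coord v t = v t := dif_pos t.isLt

lemma coord_eq_zero_of_le {f m : ℕ} (v : Vt f) (hm : 2 * f + 1 ≤ m) : coord v m = 0 :=
  dif_neg (by omega)

lemma sum_ite_val_eq {f : ℕ} (v : Vt f) (m : ℕ) :
    (∑ i : Fin (2 * f + 1), if (i : ℕ) = m then v i else 0) = coord v m := by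
  unfold coord
  split_ifs with h
  · simp [← Fin.ext_iff (b := ⟨m, h⟩)]
  · exact sum_eq_zero fun i _ => if_neg (by omega)

def pathAdj (f : ℕ) : Matrix (Fin (2 * f + 1)) (Fin (2 * f + 1)) (ZMod 2) :=
  fun i j => if (i : ℕ) + 1 = j ∨ (j : ℕ) + 1 = i then 1 else 0

noncomputable def BtForm (f : ℕ) : LinearMap.BilinForm (ZMod 2) (Vt f) :=
  Matrix.toLinearMap₂' (ZMod 2) (pathAdj f)

lemma BtForm_apply (f : ℕ) (v w : Vt f) : BtForm f v w = Bt f v w := by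
  simp only [BtForm, Bt, Matrix.toLinearMap₂'_apply, pathAdj, smul_eq_mul]
  refine sum_congr rfl fun i _ => sum_congr rfl fun j _ => ?_
  split_ifs <;> ring

lemma Bt_symm (f : ℕ) (v w : Vt f) : Bt f v w = Bt f w v := by
  unfold Bt
  rw [sum_comm]
  refine sum_congr rfl fun j _ => sum_congr rfl fun i _ => ?_
  simp only [or_comm, mul_comm]

lemma Bt_e_right {f m : ℕ} (v : Vt f) (hm : m ≤ 2 * f) :
    Bt f v (e f m) = (if 1 ≤ m then coord v (m - 1) else 0) + coord v (m + 1) := by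
  have hcol : ∀ i : Fin (2 * f + 1), (∑ j : Fin (2 * f + 1),
      if (i : ℕ) + 1 = j ∨ (j : ℕ) + 1 = i then v i * e f m j else 0) =
      (if (i : ℕ) = m - 1 ∧ 1 ≤ m then v i else 0) + (if (i : ℕ) = m + 1 then v i else 0) := by
    intro i
    have hne : ∀ j : Fin (2 * f + 1), j ≠ ⟨m, Nat.lt_succ_of_le hm⟩ → (j : ℕ) ≠ m :=
      fun j hj h => hj (Fin.ext h)
    rw [sum_eq_single ⟨m, Nat.lt_succ_of_le hm⟩ (fun j _ hj => by simp [e, hne j hj]) (by simp)]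
    simp only [e, if_true]
    split_ifs <;> first | omega | simp
  simp only [Bt, hcol, sum_add_distrib, sum_ite_val_eq]
  split_ifs with h1 <;> simp [h1, sum_ite_val_eq]

lemma Bt_zrel_right (f : ℕ) (v : Vt f) : Bt f v (zrel f) = 0 := by
  have hsum : Bt f v (zrel f) = ∑ i ∈ range (f + 1), Bt f v (e f (2 * i)) := by
    simp only [zrel, ← BtForm_apply, map_sum]
  have hodd : ∑ i ∈ range (f + 1), (if 1 ≤ 2 * i then coord v (2 * i - 1) else 0) =
      ∑ i ∈ range (f + 1), coord v (2 * i + 1) := by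
    rw [sum_range_succ', sum_range_succ, coord_eq_zero_of_le v (m := 2 * f + 1) le_rfl]
    simp [show ∀ i, 2 * (i + 1) - 1 = 2 * i + 1 by omega, show ∀ i, 1 ≤ 2 * (i + 1) by omega]
  rw [hsum, sum_congr rfl fun i hi => Bt_e_right v (by simp at hi; omega), sum_add_distrib, hodd]
  exact CharTwo.add_self_eq_zero _

lemma span_zrel_le_ker (f : ℕ) : Submodule.span (ZMod 2) {zrel f} ≤ LinearMap.ker (BtForm f) := by
  rw [Submodule.span_le, Set.singleton_subset_iff, SetLike.mem_coe, LinearMap.mem_ker]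
  ext w
  simp [BtForm_apply, Bt_symm f (zrel f), Bt_zrel_right]

noncomputable def BtFormLiftLeft (f : ℕ) : Vq f →ₗ[ZMod 2] Vt f →ₗ[ZMod 2] ZMod 2 :=
  (Submodule.span (ZMod 2) {zrel f}).liftQ (BtForm f) (span_zrel_le_ker f)

lemma span_zrel_le_ker_flip (f : ℕ) :
    Submodule.span (ZMod 2) {zrel f} ≤ LinearMap.ker (BtFormLiftLeft f).flip := by
  rw [Submodule.span_le, Set.singleton_subset_iff, SetLike.mem_coe, LinearMap.mem_ker]
  refine Submodule.linearMap_qext _ (LinearMap.ext fun v => ?_)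
  simp [BtFormLiftLeft, BtForm_apply, Bt_zrel_right]

noncomputable def BqForm (f : ℕ) : LinearMap.BilinForm (ZMod 2) (Vq f) :=
  ((Submodule.span (ZMod 2) {zrel f}).liftQ (BtFormLiftLeft f).flip (span_zrel_le_ker_flip f)).flip

lemma BqForm_mk (f : ℕ) (v w : Vt f) : BqForm f (toVq f v) (toVq f w) = Bt f v w := by
  simp [BqForm, BtFormLiftLeft, toVq, BtForm_apply]

lemma Bq_eq_BqForm (f : ℕ) (v w : Vq f) : Bq f v w = BqForm f v w := by
  conv_rhs => rw [← Quotient.out_eq v, ← Quotient.out_eq w]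
  exact (BqForm_mk f _ _).symm

lemma coord_add {f : ℕ} (u v : Vt f) (m : ℕ) : coord (u + v) m = coord u m + coord v m := by
  unfold coord
  split_ifs <;> simp

def block (f i k : ℕ) : Vt f := ∑ t ∈ range (k + 1), e f (i + 2 * t)

lemma coord_block {f i k : ℕ} (hik : i + 2 * k ≤ 2 * f) (m : ℕ) :
    coord (block f i k) m = if ∃ t ≤ k, m = i + 2 * t then 1 else 0 := by
  by_cases hm : m < 2 * f + 1
  · simp only [coord, dif_pos hm, block, Finset.sum_apply, e]
    split_ifs with h
    · obtain ⟨t, htk, rfl⟩ := h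
      rw [sum_eq_single t (fun s _ hs => if_neg (by simp; omega)) (by simp; omega), if_pos rfl]
    · exact sum_eq_zero fun t ht => if_neg fun h' => h ⟨t, by simp at ht; omega, h'⟩
  · rw [coord_eq_zero_of_le _ (by omega), if_neg (by omega)]

lemma Bt_block_e {f i k j : ℕ} (hik : i + 2 * k ≤ 2 * f) (hj : 1 ≤ j) (hjf : j ≤ 2 * f)
    (hleft : j + 1 ≠ i) (hright : j ≠ i + 2 * k + 1) : Bt f (block f i k) (e f j) = 0 := by
  have hiff : (∃ t ≤ k, j - 1 = i + 2 * t) ↔ (∃ t ≤ k, j + 1 = i + 2 * t) := by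
    constructor
    · rintro ⟨t, htk, ht⟩
      exact ⟨t + 1, by omega, by omega⟩
    · rintro ⟨t, htk, ht⟩
      exact ⟨t - 1, by omega, by omega⟩
  rw [Bt_e_right _ hjf, if_pos hj, coord_block hik, coord_block hik, if_congr hiff rfl rfl]
  exact CharTwo.add_self_eq_zero _

lemma Bt_block_e_of_mem {f i k j : ℕ} {N : Finset ℕ} (hN : ∀ j ∈ N, Odd j ∧ j < 2 * f)
    (hik : i + 2 * k ≤ 2 * f) (hleft : 1 ≤ i → i - 1 ∉ N) (hright : i + 2 * k + 1 ∉ N)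
    (hj : j ∈ N) : Bt f (block f i k) (e f j) = 0 :=
  Bt_block_e hik (hN j hj).1.pos (hN j hj).2.le
    (fun h => hleft (by omega) (by rwa [show i - 1 = j by omega])) (fun h => hright (h ▸ hj))

def evenSupported (f : ℕ) : Submodule (ZMod 2) (Vt f) :=
  ⨅ (t : Fin (2 * f + 1)) (_ : Odd (t : ℕ)), LinearMap.ker (LinearMap.proj t)

lemma mem_evenSupported {f : ℕ} {v : Vt f} :
    v ∈ evenSupported f ↔ ∀ t : Fin (2 * f + 1), Odd (t : ℕ) → v t = 0 := by
  simp [evenSupported]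

lemma e_mem_evenSupported {f j : ℕ} (hj : Even j) : e f j ∈ evenSupported f :=
  mem_evenSupported.2 fun t ht => if_neg fun (h : (t : ℕ) = j) => Nat.not_even_iff_odd.2 ht (h ▸ hj)

lemma block_mem_evenSupported {f i : ℕ} (hi : Even i) (k : ℕ) : block f i k ∈ evenSupported f :=
  Submodule.sum_mem _ fun t _ => e_mem_evenSupported (hi.add (even_two_mul t))

lemma coord_eq_zero_of_odd {f m : ℕ} {v : Vt f} (hv : v ∈ evenSupported f) (hm : Odd m) :
    coord v m = 0 := by
  unfold coord
  split_ifs with h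
  · exact mem_evenSupported.1 hv _ hm
  · rfl

lemma exists_maximal_block {f i : ℕ} {N : Finset ℕ} (hN : ∀ j ∈ N, j < 2 * f) (hi : Even i)
    (hif : i ≤ 2 * f) : ∃ k, i + 2 * k ≤ 2 * f ∧
      (∀ j, Odd j → i < j → j < i + 2 * k → j ∈ N) ∧ i + 2 * k + 1 ∉ N := by
  have hex : ∃ k, i + 2 * k + 1 ∉ N := ⟨f, fun h => by have := hN _ h; omega⟩
  have hrun : ∀ t < Nat.find hex, i + 2 * t + 1 ∈ N := fun t ht => not_not.1 (Nat.find_min hex ht)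
  refine ⟨Nat.find hex, ?_, fun j hj hij hjk => ?_, Nat.find_spec hex⟩
  · rcases Nat.eq_zero_or_pos (Nat.find hex) with h | h
    · omega
    · have := hN _ (hrun (Nat.find hex - 1) (by omega))
      omega
  · obtain ⟨r, rfl⟩ := hj
    obtain ⟨s, rfl⟩ := hi
    convert hrun (r - s) (by omega) using 1
    omega

def blocks (f : ℕ) (N : Finset ℕ) : Set (Vq f) :=
  {v | ∃ i k, Even i ∧ i + 2 * k ≤ 2 * f ∧ (∀ j, Odd j → i < j → j < i + 2 * k → j ∈ N) ∧
    (1 ≤ i → i - 1 ∉ N) ∧ i + 2 * k + 1 ∉ N ∧ v = toVq f (block f i k)}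

lemma toVq_mem_span_blocks_of_vanish_below {f : ℕ} {N : Finset ℕ}
    (hN : ∀ j ∈ N, Odd j ∧ j < 2 * f) {m : ℕ} (hm : m ≤ 2 * f + 1) :
    ∀ u ∈ evenSupported f, (∀ j ∈ N, Bt f u (e f j) = 0) → (∀ t < m, coord u t = 0) →
      toVq f u ∈ Submodule.span (ZMod 2) (blocks f N) := by
  induction hm using Nat.decreasingInduction with
  | self =>
    intro u _ _ hzero
    have hu : u = 0 := funext fun t => by rw [← coord_val u t, hzero t t.isLt]; rfl
    rw [hu]
    exact Submodule.zero_mem _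
  | of_succ m _ ih =>
    intro u hu hcompat hzero
    by_cases hum : coord u m = 0
    · exact ih u hu hcompat fun t ht => (Nat.lt_succ_iff_lt_or_eq.1 ht).elim (hzero t) (· ▸ hum)
    have hmf : m ≤ 2 * f := by
      by_contra h
      exact hum (coord_eq_zero_of_le u (by omega))
    have hmeven : Even m := Nat.not_odd_iff_even.1 fun h => hum (coord_eq_zero_of_odd hu h)
    have hleft : 1 ≤ m → m - 1 ∉ N := by
      intro h1 hmem
      have hstep := hcompat _ hmem
      rw [Bt_e_right u (by omega), if_pos (show 1 ≤ m - 1 from (hN _ hmem).1.pos),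
        show m - 1 + 1 = m by omega, hzero _ (by omega), zero_add] at hstep
      exact hum hstep
    obtain ⟨k, hik, hrun, hright⟩ := exists_maximal_block (fun j hj => (hN j hj).2) hmeven hmf
    have hu' : toVq f (u + block f m k) ∈ Submodule.span (ZMod 2) (blocks f N) := by
      refine ih _ (add_mem hu (block_mem_evenSupported hmeven k)) (fun j hj => ?_) fun t ht => ?_
      · rw [← BtForm_apply, map_add, LinearMap.add_apply, BtForm_apply, BtForm_apply,
          hcompat j hj, Bt_block_e_of_mem hN hik hleft hright hj, add_zero]
      · rw [coord_add, coord_block hik]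
        rcases Nat.lt_succ_iff_lt_or_eq.1 ht with ht | rfl
        · rw [hzero t ht, if_neg (by omega), add_zero]
        · rw [if_pos ⟨0, by omega, by omega⟩]
          have hone : ∀ a : ZMod 2, a ≠ 0 → a + 1 = 0 := by decide
          exact hone _ hum
    have hsplit : u = (u + block f m k) + block f m k := by
      rw [add_assoc, CharTwo.add_self_eq_zero, add_zero]
    rw [hsplit, toVq, Submodule.Quotient.mk_add]
    exact add_mem hu' (Submodule.subset_span ⟨m, k, hmeven, hik, hrun, hleft, hright, rfl⟩)

lemma toVq_mem_span_blocks {f : ℕ} {N : Finset ℕ} (hN : ∀ j ∈ N, Odd j ∧ j < 2 * f) {u : Vt f}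
    (hu : u ∈ evenSupported f) (hcompat : ∀ j ∈ N, Bt f u (e f j) = 0) :
    toVq f u ∈ Submodule.span (ZMod 2) (blocks f N) :=
  toVq_mem_span_blocks_of_vanish_below hN (Nat.zero_le _) u hu hcompat
    fun _ h => absurd h (Nat.not_lt_zero _)

lemma span_toVq_even_le_map (f : ℕ) :
    Submodule.span (ZMod 2) {v | ∃ j, Even j ∧ j ≤ 2 * f ∧ v = toVq f (e f j)} ≤
      (evenSupported f).map (Submodule.span (ZMod 2) {zrel f}).mkQ :=
  Submodule.span_le.2 fun _ ⟨_, hj, _, hv⟩ => ⟨_, e_mem_evenSupported hj, hv.symm⟩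

lemma toVq_block_mem_span_even {f i k : ℕ} (hi : Even i) (hik : i + 2 * k ≤ 2 * f) :
    toVq f (block f i k) ∈
      Submodule.span (ZMod 2) {v | ∃ j, Even j ∧ j ≤ 2 * f ∧ v = toVq f (e f j)} := by
  change (Submodule.span (ZMod 2) {zrel f}).mkQ (block f i k) ∈ _
  rw [block, map_sum]
  exact Submodule.sum_mem _ fun t ht =>
    Submodule.subset_span ⟨i + 2 * t, hi.add (even_two_mul t), by simp at ht; omega, rfl⟩

lemma toVq_block_mem_orthogonalBilin {f i k : ℕ} {N : Finset ℕ} (hN : ∀ j ∈ N, Odd j ∧ j < 2 * f)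
    (hik : i + 2 * k ≤ 2 * f) (hleft : 1 ≤ i → i - 1 ∉ N) (hright : i + 2 * k + 1 ∉ N) :
    toVq f (block f i k) ∈
      (Submodule.span (ZMod 2) {v | ∃ j ∈ N, v = toVq f (e f j)}).orthogonalBilin
        (BqForm f).flip := by
  have hle : Submodule.span (ZMod 2) {v | ∃ j ∈ N, v = toVq f (e f j)} ≤
      LinearMap.ker (BqForm f (toVq f (block f i k))) := by
    refine Submodule.span_le.2 fun _ ⟨j, hj, hv⟩ => ?_
    rw [hv, SetLike.mem_coe, LinearMap.mem_ker, BqForm_mk]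
    exact Bt_block_e_of_mem hN hik hleft hright hj
  exact fun h hh => hle hh

theorem stmt0_general (f : ℕ) (N : Finset ℕ)
    (hN : ∀ j ∈ N, Odd j ∧ j < 2 * f)
    (Ghat : Submodule (ZMod 2) (Vq f))
    (hGhat : Ghat = Submodule.span (ZMod 2)
      {v | ∃ j, Even j ∧ j ≤ 2 * f ∧ v = toVq f (e f j)})
    (Hx : Submodule (ZMod 2) (Vq f))
    (hHx : Hx = Submodule.span (ZMod 2) {v | ∃ j ∈ N, v = toVq f (e f j)}) :
    {μ : Vq f | μ ∈ Ghat ∧ ∀ h ∈ Hx, Bq f μ h = 0} =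
      ↑(Submodule.span (ZMod 2)
        {v : Vq f | ∃ i k, Even i ∧ i + 2 * k ≤ 2 * f ∧
          (∀ j, Odd j → i < j → j < i + 2 * k → j ∈ N) ∧
          (1 ≤ i → i - 1 ∉ N) ∧ (i + 2 * k + 1 ∉ N) ∧
          v = toVq f (∑ t ∈ Finset.range (k + 1), e f (i + 2 * t))}) := by
  have hann : {μ : Vq f | μ ∈ Ghat ∧ ∀ h ∈ Hx, Bq f μ h = 0} =
      ↑(Ghat ⊓ Hx.orthogonalBilin (BqForm f).flip) := by
    ext μ
    simp [Bq_eq_BqForm]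
  change _ = (Submodule.span (ZMod 2) (blocks f N) : Set (Vq f))
  rw [hann, SetLike.coe_set_eq]
  subst hGhat hHx
  refine le_antisymm (fun μ hμ => ?_) (Submodule.span_le.2 ?_)
  · obtain ⟨hμG, hμH⟩ := Submodule.mem_inf.1 hμ
    obtain ⟨u, hu, rfl⟩ := span_toVq_even_le_map f hμG
    refine toVq_mem_span_blocks hN hu fun j hj => ?_
    rw [← BqForm_mk]
    exact hμH _ (Submodule.subset_span ⟨j, hj, rfl⟩)
  · rintro _ ⟨i, k, hi, hik, -, hleft, hright, rfl⟩
    exact Submodule.mem_inf.2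
      ⟨toVq_block_mem_span_even hi hik, toVq_block_mem_orthogonalBilin hN hik hleft hright⟩

/-- Let `N = n(x) ⊆ {1, 3, …, 2f-1}` be the support of `x = ∑_{j ∈ N} e j ∈ 𝒢`,
`𝒢` the span in `V` of the images of odd basis vectors, `Ĝ` the span of the
images of even basis vectors, and `H_x ⊆ 𝒢` the span of `{e j : j ∈ N}`.  Then
the annihilator `{μ ∈ Ĝ : ⟨μ, h⟩ = 0 for all h ∈ H_x}` is exactly the span in
`V` of the blocks of `x`, where a block of `x` is the image of
`e i + e (i+2) + ⋯ + e (i+2k)` with `i` even, `{i+1, …, i+2k-1}` odd ⊆ `N`,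
`i - 1 ∉ N`, and `i + 2k + 1 ∉ N`. -/
theorem stmt0 (f : ℕ) (hf : 1 ≤ f) (N : Finset ℕ)
    (hN : ∀ j ∈ N, Odd j ∧ j < 2 * f)
    (x : Vq f) (hx : x = toVq f (∑ j ∈ N, e f j))
    (G : Submodule (ZMod 2) (Vq f))
    (hG : G = Submodule.span (ZMod 2)
      {v | ∃ j, Odd j ∧ j < 2 * f ∧ v = toVq f (e f j)})
    (Ghat : Submodule (ZMod 2) (Vq f))
    (hGhat : Ghat = Submodule.span (ZMod 2)
      {v | ∃ j, Even j ∧ j ≤ 2 * f ∧ v = toVq f (e f j)})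
    (Hx : Submodule (ZMod 2) (Vq f))
    (hHx : Hx = Submodule.span (ZMod 2) {v | ∃ j ∈ N, v = toVq f (e f j)}) :
    {μ : Vq f | μ ∈ Ghat ∧ ∀ h ∈ Hx, Bq f μ h = 0} =
      ↑(Submodule.span (ZMod 2)
        {v : Vq f | ∃ i k, Even i ∧ i + 2 * k ≤ 2 * f ∧
          (∀ j, Odd j → i < j → j < i + 2 * k → j ∈ N) ∧
          (1 ≤ i → i - 1 ∉ N) ∧ (i + 2 * k + 1 ∉ N) ∧
          v = toVq f (∑ t ∈ Finset.range (k + 1), e f (i + 2 * t))}) :=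
  stmt0_general f N hN Ghat hGhat Hx hHx
end

section
/- Let (a_0, …, a_r) be any nondecreasing finite sequence of integers satisfying a_i ≤ a_{i+2} − 2 for 0 ≤ i ≤ r−2. Then the index set {0, …, r} is the disjoint union of the ladders and staircases of the sequence: every index lies in exactly one part. -/
/-!
The hypotheses say that the steps `a (i + 1) - a i` are nonnegative and that two consecutive
steps add up to at least `2`; in particular equal neighbours come in isolated pairs. Call `i`
and `i + 1` linked when the step between them is `0` or `1`, or is `2` and joins two such pairs.
The parts are then exactly the maximal runs of linked indices, and the maximal runs of any
linking predicate partition `{0, …, r}`.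
-/

/-- `[k,l]` is a ladder of the sequence `a` (with index set `{0,…,r}`):
the entries `a k, …, a l` are `c, c+1, …, c+l-k` for some `c`, with
`a (k-1) < c - 1` if `k > 0` and `a (l+1) > c + (l-k) + 1` if `l < r`. -/
def IsLadderZ (r : ℕ) (a : ℕ → ℤ) (k l : ℕ) : Prop :=
  k ≤ l ∧ l ≤ r ∧ (∀ j, k ≤ j → j ≤ l → a j = a k + ((j - k : ℕ) : ℤ)) ∧
    (0 < k → a (k - 1) < a k - 1) ∧ (l < r → a l + 1 < a (l + 1))

/-- `[k,l]` is a staircase of the sequence `a` (with index set `{0,…,r}`):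
`l - k + 1` is even, the entries `a k, …, a l` are
`c, c, c+2, c+2, …, c+l-k-1, c+l-k-1` for some `c`, with `a (k-2) < c - 2`
if `k > 1` and `a (l+2) > c + (l-k) + 1` if `l < r - 1`. -/
def IsStairZ (r : ℕ) (a : ℕ → ℤ) (k l : ℕ) : Prop :=
  k ≤ l ∧ l ≤ r ∧ (l - k) % 2 = 1 ∧
    (∀ j, k ≤ j → j ≤ l → a j = a k + 2 * (((j - k) / 2 : ℕ) : ℤ)) ∧
    (1 < k → a (k - 2) < a k - 2) ∧ (l + 2 ≤ r → a l + 2 < a (l + 2))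

/-- A part is a ladder or a staircase. -/
def IsPartZ (r : ℕ) (a : ℕ → ℤ) (k l : ℕ) : Prop :=
  IsLadderZ r a k l ∨ IsStairZ r a k l

section Runs

variable {link : ℕ → Prop} {r k l : ℕ}

def IsRun (link : ℕ → Prop) (r k l : ℕ) : Prop :=
  k ≤ l ∧ l ≤ r ∧ (∀ j, k ≤ j → j < l → link j) ∧ (0 < k → ¬ link (k - 1)) ∧
    (l < r → ¬ link l)

theorem IsRun.eq_of_mem {k' l' i : ℕ} (h : IsRun link r k l) (h' : IsRun link r k' l')
    (hki : k ≤ i) (hil : i ≤ l) (hki' : k' ≤ i) (hil' : i ≤ l') : k = k' ∧ l = l' := by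
  obtain ⟨-, hlr, hin, hbot, htop⟩ := h
  obtain ⟨-, hlr', hin', hbot', htop'⟩ := h'
  refine ⟨le_antisymm ?_ ?_, le_antisymm ?_ ?_⟩
  · by_contra! hlt
    exact hbot (by omega) (hin' (k - 1) (by omega) (by omega))
  · by_contra! hlt
    exact hbot' (by omega) (hin (k' - 1) (by omega) (by omega))
  · by_contra! hlt
    exact htop' (by omega) (hin l' (by omega) hlt)
  · by_contra! hlt
    exact htop (by omega) (hin' l (by omega) hlt)

theorem exists_isRun {i : ℕ} (hi : i ≤ r) : ∃ k l, IsRun link r k l ∧ k ≤ i ∧ i ≤ l := by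
  classical
  have hbot : ∃ k, ∀ j, k ≤ j → j < i → link j := ⟨i, fun j hij hji => by omega⟩
  have htop : ∃ l, i ≤ l ∧ (r ≤ l ∨ ¬ link l) := ⟨r, hi, Or.inl le_rfl⟩
  have hki : Nat.find hbot ≤ i := Nat.find_min' hbot fun j hij hji => by omega
  have hil : i ≤ Nat.find htop := (Nat.find_spec htop).1
  have hlr : Nat.find htop ≤ r := Nat.find_min' htop ⟨hi, Or.inl le_rfl⟩
  refine ⟨Nat.find hbot, Nat.find htop, ⟨by omega, hlr,
    fun j hkj hjl => ?_, fun hk hlink => ?_, fun hl => ?_⟩, hki, hil⟩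
  · by_cases hji : j < i
    · exact Nat.find_spec hbot j hkj hji
    · have := Nat.find_min htop hjl
      push Not at this
      exact (this (by omega)).2
  · refine Nat.find_min hbot (Nat.sub_one_lt_of_lt hk) fun j hkj hji => ?_
    rcases hkj.eq_or_lt with rfl | hlt
    · exact hlink
    · exact Nat.find_spec hbot j (by omega) hji
  · exact (Nat.find_spec htop).2.resolve_left (by omega)

theorem existsUnique_isRun (link : ℕ → Prop) {i : ℕ} (hi : i ≤ r) :
    ∃! kl : ℕ × ℕ, IsRun link r kl.1 kl.2 ∧ kl.1 ≤ i ∧ i ≤ kl.2 := by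
  obtain ⟨k, l, hrun, hki, hil⟩ := exists_isRun hi
  refine ⟨(k, l), ⟨hrun, hki, hil⟩, fun ⟨k', l'⟩ ⟨hrun', hki', hil'⟩ => ?_⟩
  obtain ⟨rfl, rfl⟩ := hrun'.eq_of_mem hrun hki' hil' hki hil
  rfl

end Runs

section Parts

variable {r k l : ℕ} {a : ℕ → ℤ}

/-- `i` and `i + 1` lie in the same part. The guard `0 < i` matters: `a (0 - 1) = a 0`
holds trivially. -/
def Linked (r : ℕ) (a : ℕ → ℤ) (i : ℕ) : Prop :=
  a (i + 1) = a i ∨ a (i + 1) = a i + 1 ∨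
    (a (i + 1) = a i + 2 ∧ 0 < i ∧ a (i - 1) = a i ∧ i + 2 ≤ r ∧ a (i + 2) = a (i + 1))

theorem eq_add_of_forall_succ_eq_add_one (h : ∀ j, k ≤ j → j < l → a (j + 1) = a j + 1) :
    ∀ j, k ≤ j → j ≤ l → a j = a k + ((j - k : ℕ) : ℤ) := by
  intro j hkj hjl
  induction j, hkj using Nat.le_induction with
  | base => simp
  | succ j hkj ih => have := h j hkj (by omega); have := ih (by omega); omega

theorem eq_add_of_forall_succ_stair
    (h : ∀ j, k ≤ j → j < l → a (j + 1) = a j + if (j - k) % 2 = 0 then 0 else 2) :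
    ∀ j, k ≤ j → j ≤ l → a j = a k + 2 * (((j - k) / 2 : ℕ) : ℤ) := by
  intro j hkj hjl
  induction j, hkj using Nat.le_induction with
  | base => simp
  | succ j hkj ih =>
    have := h j hkj (by omega); have := ih (by omega)
    split_ifs at * <;> omega

theorem IsLadderZ.isRun (h : IsLadderZ r a k l) : IsRun (Linked r a) r k l := by
  obtain ⟨hkl, hlr, hval, hbot, htop⟩ := h
  refine ⟨hkl, hlr, fun j hkj hjl => ?_, fun hk hlink => ?_, fun hl hlink => ?_⟩
  · have := hval j hkj hjl.le
    have := hval (j + 1) (by omega) hjl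
    right; left; omega
  · obtain ⟨k, rfl⟩ : ∃ k', k = k' + 1 := ⟨k - 1, by omega⟩
    simp only [Linked, Nat.add_sub_cancel] at hlink hbot
    have := hbot hk
    rcases hkl.eq_or_lt with rfl | hlt
    · have : a (k + 1) + 1 < a (k + 2) := htop (by omega)
      omega
    · have := hval (k + 2) (by omega) (by omega)
      omega
  · have := htop hl
    rcases hlink with h | h | ⟨h, hl0, hl1, -⟩
    · omega
    · omega
    rcases hkl.eq_or_lt with rfl | hlt
    · have := hbot hl0
      omega
    · have := hval (l - 1) (by omega) (by omega)
      have := hval l hkl le_rfl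
      omega

variable (hmono : ∀ i, i + 1 ≤ r → a i ≤ a (i + 1))
  (hgap : ∀ i, i + 2 ≤ r → a i ≤ a (i + 2) - 2)

include hgap in
theorem IsStairZ.isRun (h : IsStairZ r a k l) :
    IsRun (Linked r a) r k l := by
  obtain ⟨hkl, hlr, hodd, hval, hbot, htop⟩ := h
  refine ⟨hkl, hlr, fun j hkj hjl => ?_, fun hk hlink => ?_, fun hl hlink => ?_⟩
  · have := hval j hkj hjl.le
    have := hval (j + 1) (by omega) hjl
    rcases Nat.mod_two_eq_zero_or_one (j - k) with he | ho
    · left; omega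
    · have := hval (j - 1) (by omega) (by omega)
      have := hval (j + 2) (by omega) (by omega)
      right; right
      omega
  · obtain ⟨k, rfl⟩ : ∃ k', k = k' + 1 := ⟨k - 1, by omega⟩
    simp only [Linked, Nat.add_sub_cancel] at hlink
    have := hval (k + 2) (by omega) (by omega)
    have := hgap k (by omega)
    rcases hlink with h | h | ⟨h, hk0, hk1, -⟩
    · omega
    · omega
    · have := hbot (by omega)
      rw [show k + 1 - 2 = k - 1 by omega] at this
      omega
  · have := hval (l - 1) (by omega) (by omega)
    have := hval l hkl le_rfl
    have := hgap (l - 1) (by omega)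
    rw [show l - 1 + 2 = l + 1 by omega] at this
    rcases hlink with h | h | ⟨h, -, -, hl2, h'⟩
    · omega
    · omega
    · have := htop hl2
      omega

include hgap in
theorem IsRun.succ_eq_add_one (h : IsRun (Linked r a) r k l)
    (hstep : l = k ∨ a (k + 1) = a k + 1) : ∀ j, k ≤ j → j < l → a (j + 1) = a j + 1 := by
  obtain ⟨-, hlr, hin, -, -⟩ := h
  intro j hkj hjl
  induction j, hkj using Nat.le_induction with
  | base => omega
  | succ j hkj ih =>
    have := ih (by omega)
    have := hgap j (by omega)
    have hlink := hin (j + 1) (by omega) hjl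
    simp only [Linked, Nat.add_sub_cancel, add_assoc, Nat.reduceAdd] at hlink ⊢
    omega

include hmono hgap in
theorem IsRun.isLadderZ (h : IsRun (Linked r a) r k l) (hstep : l = k ∨ a (k + 1) = a k + 1) :
    IsLadderZ r a k l := by
  have hsteps := h.succ_eq_add_one hgap hstep
  obtain ⟨hkl, hlr, -, hbot, htop⟩ := h
  refine ⟨hkl, hlr, eq_add_of_forall_succ_eq_add_one hsteps, fun hk => ?_, fun hl => ?_⟩
  · obtain ⟨k, rfl⟩ : ∃ k', k = k' + 1 := ⟨k - 1, by omega⟩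
    have hlink := hbot hk
    simp only [Linked, Nat.add_sub_cancel] at hlink ⊢
    have := hmono k (by omega)
    omega
  · have hlink := htop hl
    simp only [Linked] at hlink
    have := hmono l (by omega)
    omega

include hgap in
theorem IsRun.succ_eq_stair (h : IsRun (Linked r a) r k l) (hkl : k < l)
    (hstep : a (k + 1) ≠ a k + 1) :
    ∀ j, k ≤ j → j < l → a (j + 1) = a j + if (j - k) % 2 = 0 then 0 else 2 := by
  obtain ⟨-, hlr, hin, hbot, -⟩ := h
  intro j hkj hjl
  induction j, hkj using Nat.le_induction with
  | base =>
    rw [Nat.sub_self, if_pos rfl, add_zero]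
    rcases hin k le_rfl hkl with h | h | ⟨-, hk0, hk1, -⟩
    · exact h
    · exact absurd h hstep
    · refine absurd (Or.inl ?_) (hbot hk0)
      rw [Nat.sub_add_cancel hk0, hk1]
  | succ j hkj ih =>
    have := ih (by omega)
    have hlink := hin (j + 1) (by omega) hjl
    have hlink' := hin j hkj (by omega)
    have := hgap j (by omega)
    simp only [Linked, Nat.add_sub_cancel, add_assoc, Nat.reduceAdd] at hlink hlink' ⊢
    split_ifs at * <;> omega

include hmono hgap in
theorem IsRun.isStairZ (h : IsRun (Linked r a) r k l) (hkl : k < l)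
    (hstep : a (k + 1) ≠ a k + 1) : IsStairZ r a k l := by
  have hsteps := h.succ_eq_stair hgap hkl hstep
  obtain ⟨-, hlr, hin, hbot, htop⟩ := h
  obtain ⟨l, rfl⟩ : ∃ l', l = l' + 1 := ⟨l - 1, by omega⟩
  have hodd : (l + 1 - k) % 2 = 1 := by
    -- otherwise the run ends with a step of `2` into a pair, and that pair links `l + 1`
    by_contra heven
    have := hsteps l (by omega) (by omega)
    rw [if_neg (by omega)] at this
    have hlink := hin l (by omega) (by omega)
    have hlink' : ¬ Linked r a (l + 1) := htop (by simp only [Linked] at hlink; omega)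
    simp only [Linked, add_assoc, Nat.reduceAdd] at hlink hlink'
    omega
  refine ⟨hkl.le, hlr, hodd, eq_add_of_forall_succ_stair hsteps, fun hk => ?_, fun hl => ?_⟩
  · obtain ⟨k, rfl⟩ : ∃ k', k = k' + 2 := ⟨k - 2, by omega⟩
    have hlink : ¬ Linked r a (k + 1) := hbot (by omega)
    have : a (k + 3) = a (k + 2) := by simpa using hsteps (k + 2) le_rfl (by omega)
    have : a k ≤ a (k + 1) := hmono k (by omega)
    have : a (k + 1) ≤ a (k + 2) := hmono (k + 1) (by omega)
    simp only [Linked, Nat.add_sub_cancel, add_assoc, Nat.reduceAdd] at hlink ⊢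
    omega
  · have hlink : ¬ Linked r a (l + 1) := htop (by omega)
    have := hsteps l (by omega) (by omega)
    rw [if_pos (by omega)] at this
    have : a (l + 1) ≤ a (l + 2) := hmono (l + 1) (by omega)
    have : a (l + 2) ≤ a (l + 3) := hmono (l + 2) (by omega)
    simp only [Linked, Nat.add_sub_cancel, add_assoc, Nat.reduceAdd] at hlink ⊢
    omega

include hmono hgap in
theorem isPartZ_iff_isRun : IsPartZ r a k l ↔ IsRun (Linked r a) r k l := by
  refine ⟨fun h => h.elim IsLadderZ.isRun (IsStairZ.isRun hgap), fun h => ?_⟩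
  by_cases hstep : l = k ∨ a (k + 1) = a k + 1
  · exact Or.inl (h.isLadderZ hmono hgap hstep)
  · push Not at hstep
    exact Or.inr (h.isStairZ hmono hgap (lt_of_le_of_ne h.1 (Ne.symm hstep.1)) hstep.2)

end Parts

/-- Any nondecreasing finite sequence of integers `(a 0, …, a r)` with
`a i ≤ a (i+2) - 2` has its index set `{0,…,r}` partitioned by its parts:
every index lies in exactly one part. -/
theorem stmt2 (r : ℕ) (a : ℕ → ℤ)
    (hmono : ∀ i, i + 1 ≤ r → a i ≤ a (i + 1))
    (hgap : ∀ i, i + 2 ≤ r → a i ≤ a (i + 2) - 2) :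
    ∀ idx, idx ≤ r →
      ∃! kl : ℕ × ℕ, IsPartZ r a kl.1 kl.2 ∧ kl.1 ≤ idx ∧ idx ≤ kl.2 := by
  intro idx hidx
  simpa only [isPartZ_iff_isRun hmono hgap] using existsUnique_isRun (Linked r a) hidx
end

section
/- Let a be a type-C u-symbol. Then a has an odd number of isolated points. Moreover, writing the isolated points as k_0, …, k_{2f}, numbered so that the corresponding entries of a' = i(a) satisfy a'_{k_0} < a'_{k_1} < ⋯ < a'_{k_{2f}}, if the symbol i(a) is special then k_t ≡ t (mod 2) for every t. -/
open scoped Classical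

/-- The map `i` from type-C u-symbols to type-C symbols: the `j`-th entry is
`a j - ⌈j/2⌉`. -/
def mapC (a : ℕ → ℕ) : ℕ → ℕ := fun j => a j - (j + 1) / 2

/-- A type-C u-symbol of rank `n` (with `2m+1` entries, indexed `0,…,2m`). -/
def IsUSymC (n m : ℕ) (a : ℕ → ℕ) : Prop :=
  1 ≤ a 1 ∧ (∀ i, i + 2 ≤ 2 * m → a i + 2 ≤ a (i + 2)) ∧
    (∑ j ∈ Finset.range (2 * m + 1), a j) = n + 2 * m ^ 2 + m

/-- The symbol `i(a)` is special, i.e. its entries are nondecreasing. -/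
def SpecialC (m : ℕ) (a : ℕ → ℕ) : Prop :=
  ∀ i, i + 1 ≤ 2 * m → mapC a i ≤ mapC a (i + 1)

/-- `k` is an isolated point of the u-symbol `a`: the `k`-th entry of `i(a)` differs
from every other entry of `i(a)`. -/
def IsIsolC (m : ℕ) (a : ℕ → ℕ) (k : ℕ) : Prop :=
  k ≤ 2 * m ∧ ∀ l ≤ 2 * m, l ≠ k → mapC a l ≠ mapC a k

/-- `K 0, …, K (N-1)` enumerates the isolated points of `a`, ordered so that the
corresponding entries of `i(a)` are strictly increasing. -/
def EnumC (m : ℕ) (a : ℕ → ℕ) (N : ℕ) (K : ℕ → ℕ) : Prop :=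
  (∀ t, t < N → IsIsolC m a (K t)) ∧
  (∀ j, IsIsolC m a j → ∃ t, t < N ∧ K t = j) ∧
  (∀ s t, s < t → t < N → mapC a (K s) < mapC a (K t))

/-! At indices of equal parity the entries of `i(a)` strictly increase (`a (i+2) ≥ a i + 2` beats
the shift of `⌈j/2⌉` by one), so each value is taken at most twice and the non-isolated indices
pair off; the isolated ones therefore have the parity of `2m + 1`. If `i(a)` is nondecreasing, the
indices below the isolated point `k_t` are `k_0, …, k_{t-1}` together with whole pairs, so
`k_t ≡ t (mod 2)`. -/

open Finset

theorem Finset.even_card_of_card_fiber_eq_two {α β : Type*} [DecidableEq β] (f : α → β)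
    {s : Finset α} (h : ∀ x ∈ s, #{y ∈ s | f y = f x} = 2) : Even #s := by
  have hfib : ∀ b ∈ s.image f, #{y ∈ s | f y = b} = 2 := by
    rintro b hb
    obtain ⟨x, hx, rfl⟩ := mem_image.mp hb
    exact h x hx
  rw [card_eq_sum_card_image f s, sum_const_nat hfib]
  exact even_two.mul_left _

theorem Finset.card_le_two_of_injOn_mod_two {s : Finset ℕ} (h : Set.InjOn (· % 2) s) :
    #s ≤ 2 :=
  card_le_card_of_injOn (· % 2) (fun x _ ↦ mem_coe.mpr (mem_range.mpr (x.mod_lt two_pos))) h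
    |>.trans_eq (card_range 2)

section
variable {n m : ℕ} {a : ℕ → ℕ}

-- so that the subtraction in `mapC` never truncates
theorem IsUSymC.le_apply (ha : IsUSymC n m a) {i : ℕ} (hi : i ≤ 2 * m) : i ≤ a i := by
  induction i using Nat.strong_induction_on with
  | _ i ih =>
    match i with
    | 0 => exact Nat.zero_le _
    | 1 => exact ha.1
    | i + 2 =>
      have := ih i (by omega) (by omega)
      have := ha.2.1 i hi
      omega

theorem IsUSymC.mapC_add_le (ha : IsUSymC n m a) {i d : ℕ} (hd : i + 2 * d ≤ 2 * m) :
    mapC a i + d ≤ mapC a (i + 2 * d) := by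
  induction d with
  | zero => exact le_rfl
  | succ d ih =>
    have ih := ih (by omega)
    have hstep := ha.2.1 (i + 2 * d) (by omega)
    have hle := ha.le_apply (i := i + 2 * d) (by omega)
    rw [show i + 2 * (d + 1) = i + 2 * d + 2 by ring]
    simp only [mapC] at *
    omega

theorem IsUSymC.eq_of_mapC_eq (ha : IsUSymC n m a) {i j : ℕ} (hi : i ≤ 2 * m) (hj : j ≤ 2 * m)
    (hval : mapC a i = mapC a j) (hpar : i % 2 = j % 2) : i = j := by
  wlog hij : i ≤ j generalizing i j
  · exact (this hj hi hval.symm hpar.symm (by omega)).symm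
  obtain ⟨d, rfl⟩ : ∃ d, j = i + 2 * d := ⟨(j - i) / 2, by omega⟩
  have := ha.mapC_add_le hj
  omega

theorem exists_mapC_eq_of_not_isIsolC {j : ℕ} (hj : j ≤ 2 * m) (h : ¬ IsIsolC m a j) :
    ∃ l ≤ 2 * m, l ≠ j ∧ mapC a l = mapC a j := by
  simpa [IsIsolC, hj] using h

theorem IsUSymC.even_card_filter_not_isIsolC (ha : IsUSymC n m a) {U : Finset ℕ}
    (hU : ∀ j ∈ U, j ≤ 2 * m)
    (hclosed : ∀ j ∈ U, ∀ l ≤ 2 * m, mapC a l = mapC a j → l ∈ U) :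
    Even #{j ∈ U | ¬ IsIsolC m a j} := by
  apply Finset.even_card_of_card_fiber_eq_two (mapC a)
  intro j hj
  obtain ⟨hjU, hjn⟩ := mem_filter.mp hj
  obtain ⟨l, hl, hlj, hval⟩ := exists_mapC_eq_of_not_isIsolC (hU j hjU) hjn
  apply le_antisymm
  · refine card_le_two_of_injOn_mod_two fun x hx y hy hpar ↦ ?_
    simp only [mem_coe, mem_filter] at hx hy
    exact ha.eq_of_mapC_eq (hU x hx.1.1) (hU y hy.1.1) (hx.2.trans hy.2.symm) hpar
  · have hlU := hclosed j hjU l hl hval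
    have hln : ¬ IsIsolC m a l := fun hiso ↦ hiso.2 j (hU j hjU) hlj.symm hval.symm
    calc 2 = #{l, j} := (card_pair hlj).symm
      _ ≤ _ := card_le_card <| by
        intro x hx
        rcases mem_insert.mp hx with rfl | hx
        · simp [hlU, hln, hval]
        · simp [mem_singleton.mp hx, hjU, hjn]

theorem SpecialC.mapC_mono (hsp : SpecialC m a) {i j : ℕ} (hij : i ≤ j) (hj : j ≤ 2 * m) :
    mapC a i ≤ mapC a j := by
  induction j, hij using Nat.le_induction with
  | base => exact le_rfl
  | succ j _ ih => exact (ih (by omega)).trans (hsp j hj)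

theorem SpecialC.lt_of_mapC_lt (hsp : SpecialC m a) {i j : ℕ} (hi : i ≤ 2 * m)
    (h : mapC a i < mapC a j) : i < j := by
  by_contra hji
  exact absurd (hsp.mapC_mono (not_lt.mp hji) hi) (not_le.mpr h)

namespace EnumC
variable {N : ℕ} {K : ℕ → ℕ}

theorem lt_iff_lt (hsp : SpecialC m a) (hK : EnumC m a N K) {s t : ℕ} (hs : s < N) (ht : t < N) :
    K s < K t ↔ s < t := by
  refine ⟨fun hlt ↦ ?_, fun hst ↦ hsp.lt_of_mapC_lt (hK.1 s hs).1 (hK.2.2 s t hst ht)⟩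
  by_contra hts
  rcases (not_lt.mp hts).eq_or_lt with rfl | hts
  · exact lt_irrefl _ hlt
  · exact absurd (hsp.lt_of_mapC_lt (hK.1 t ht).1 (hK.2.2 t s hts hs)) (not_lt.mpr hlt.le)

theorem filter_isIsolC_range_eq_image (hsp : SpecialC m a) (hK : EnumC m a N K) {t : ℕ}
    (ht : t < N) : {j ∈ range (K t) | IsIsolC m a j} = (range t).image K := by
  ext j
  simp only [mem_filter, mem_range, mem_image]
  constructor
  · rintro ⟨hj, hiso⟩
    obtain ⟨s, hs, rfl⟩ := hK.2.1 j hiso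
    exact ⟨s, (hK.lt_iff_lt hsp hs ht).mp hj, rfl⟩
  · rintro ⟨s, hs, rfl⟩
    exact ⟨(hK.lt_iff_lt hsp (hs.trans ht) ht).mpr hs, hK.1 s (hs.trans ht)⟩

theorem card_filter_isIsolC_range (hsp : SpecialC m a) (hK : EnumC m a N K) {t : ℕ}
    (ht : t < N) : #{j ∈ range (K t) | IsIsolC m a j} = t := by
  rw [hK.filter_isIsolC_range_eq_image hsp ht, card_image_of_injOn, card_range]
  intro s hs s' hs' h
  have hs : s < N := (mem_range.mp hs).trans ht
  have hs' : s' < N := (mem_range.mp hs').trans ht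
  by_contra hne
  rcases Nat.lt_or_gt_of_ne hne with hlt | hlt
  · exact absurd h ((hK.lt_iff_lt hsp hs hs').mpr hlt).ne
  · exact absurd h ((hK.lt_iff_lt hsp hs' hs).mpr hlt).ne'

theorem mem_range_of_mapC_eq (hsp : SpecialC m a) (hK : EnumC m a N K) {t : ℕ} (ht : t < N)
    {j l : ℕ} (hj : j < K t) (hl : l ≤ 2 * m) (hval : mapC a l = mapC a j) : l < K t := by
  have hKt := hK.1 t ht
  by_contra hle
  have h₁ := hsp.mapC_mono hj.le hKt.1
  have h₂ := hsp.mapC_mono (not_lt.mp hle) hl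
  exact hKt.2 j (by omega) hj.ne (by omega)

end EnumC
end

theorem stmt3_general (n m : ℕ) (a : ℕ → ℕ)
    (ha : IsUSymC n m a) :
    Odd ((Finset.range (2 * m + 1)).filter (IsIsolC m a)).card ∧
    (SpecialC m a →
      ∀ N K, EnumC m a N K → ∀ t, t < N → K t % 2 = t % 2) := by
  constructor
  · have heven := ha.even_card_filter_not_isIsolC (U := range (2 * m + 1))
      (fun j hj ↦ Nat.lt_succ_iff.mp (mem_range.mp hj)) (fun _ _ l hl _ ↦ mem_range.mpr (by omega))
    have hsplit := card_filter_add_card_filter_not (s := range (2 * m + 1)) (IsIsolC m a)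
    rw [card_range] at hsplit
    obtain ⟨c, hc⟩ := heven
    exact Nat.odd_iff.mpr (by omega)
  · intro hsp N K hK t ht
    have hKt : K t ≤ 2 * m := (hK.1 t ht).1
    have hiso := hK.card_filter_isIsolC_range hsp ht
    have heven := ha.even_card_filter_not_isIsolC (U := range (K t))
      (fun j hj ↦ by have := mem_range.mp hj; omega)
      (fun j hj l hl hval ↦ mem_range.mpr (hK.mem_range_of_mapC_eq hsp ht (mem_range.mp hj) hl hval))
    have hsplit := card_filter_add_card_filter_not (s := range (K t)) (fun j ↦ IsIsolC m a j)
    rw [card_range] at hsplit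
    obtain ⟨c, hc⟩ := heven
    omega

theorem stmt3 (n m : ℕ) (hn : 1 ≤ n) (hm : 1 ≤ m) (a : ℕ → ℕ)
    (ha : IsUSymC n m a) :
    Odd ((Finset.range (2 * m + 1)).filter (IsIsolC m a)).card ∧
    (SpecialC m a →
      ∀ N K, EnumC m a N K → ∀ t, t < N → K t % 2 = t % 2) :=
  stmt3_general n m a ha
end

section
/- Let a = (a_0, …, a_{2m}) be a distinguished type-C u-symbol and a' = i(a) = (a'_0, …, a'_{2m}) the corresponding symbol. If 0 ≤ k < l ≤ 2m and k and l belong to distinct parts of a, then a'_k < a'_l. -/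
/-!
By the spacing condition `a i + 2 ≤ a (i + 2)`, the difference `a l - a k` exceeds
`⌈l/2⌉ - ⌈k/2⌉` except when `l = k + 1` and `a l ≤ a k + 1`, or when `l = k + 3`,
`a (k + 1) = a k` and `a (k + 3) = a k + 2` (here monotonicity of `a` is used). In both
exceptional cases the part through `k` also contains `l`, and two parts of a u-symbol that
share an index coincide.
-/

open scoped Classical

/-- The u-symbol `a` is distinguished: its entries are nondecreasing. -/
def DistC (m : ℕ) (a : ℕ → ℕ) : Prop := ∀ i, i + 1 ≤ 2 * m → a i ≤ a (i + 1)

/-- `[k,l]` is a ladder of `a`: the entries `a k, …, a l` are `c, c+1, …, c+l-k`,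
with `a (k-1) < c - 1` if `k > 0` and `a (l+1) > c + (l-k) + 1` if `l < 2m`. -/
def IsLadderC (m : ℕ) (a : ℕ → ℕ) (k l : ℕ) : Prop :=
  k ≤ l ∧ l ≤ 2 * m ∧ (∀ j, k ≤ j → j ≤ l → a j = a k + (j - k)) ∧
    (0 < k → a (k - 1) + 1 < a k) ∧ (l < 2 * m → a l + 1 < a (l + 1))

/-- `[k,l]` is a staircase of `a`: `l-k+1` is even and the entries `a k, …, a l` are
`c, c, c+2, c+2, …, c+l-k-1, c+l-k-1`, with `a (k-2) < c - 2` if `k > 1` and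
`a (l+2) > c + (l-k) + 1` if `l < 2m - 1`. -/
def IsStairC (m : ℕ) (a : ℕ → ℕ) (k l : ℕ) : Prop :=
  k ≤ l ∧ l ≤ 2 * m ∧ (l - k) % 2 = 1 ∧
    (∀ j, k ≤ j → j ≤ l → a j = a k + 2 * ((j - k) / 2)) ∧
    (1 < k → a (k - 2) + 2 < a k) ∧ (l + 2 ≤ 2 * m → a l + 2 < a (l + 2))

/-- A part is a ladder or a staircase. -/
def IsPartC (m : ℕ) (a : ℕ → ℕ) (k l : ℕ) : Prop :=
  IsLadderC m a k l ∨ IsStairC m a k l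

def IsGappedC (m : ℕ) (a : ℕ → ℕ) : Prop :=
  ∀ i, i + 2 ≤ 2 * m → a i + 2 ≤ a (i + 2)

section Parts

variable {m : ℕ} {a : ℕ → ℕ}

namespace IsGappedC

theorem add_two_mul_le (h : IsGappedC m a) {j : ℕ} :
    ∀ t, j + 2 * t ≤ 2 * m → a j + 2 * t ≤ a (j + 2 * t)
  | 0, _ => le_rfl
  | t + 1, ht => by
    have hprev := add_two_mul_le h (j := j) t (by omega)
    have hstep := h (j + 2 * t) (by omega)
    rw [show j + 2 * (t + 1) = j + 2 * t + 2 by ring]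
    omega

theorem add_sub_le_of_even (h : IsGappedC m a) {j l : ℕ} (hjl : j ≤ l) (hl : l ≤ 2 * m)
    (heven : Even (l - j)) : a j + (l - j) ≤ a l := by
  obtain ⟨t, ht⟩ := heven
  have hchain := h.add_two_mul_le t (j := j) (by omega)
  rw [show j + 2 * t = l by omega] at hchain
  omega

theorem le_apply (h : IsGappedC m a) (h1 : 1 ≤ a 1) {j : ℕ} (hj : j ≤ 2 * m) : j ≤ a j := by
  rcases Nat.even_or_odd j with heven | hodd
  · have := h.add_sub_le_of_even (Nat.zero_le j) hj (by simpa using heven)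
    omega
  · obtain ⟨t, rfl⟩ := hodd
    have := h.add_sub_le_of_even (j := 1) (by omega) hj ⟨t, by omega⟩
    omega

end IsGappedC

variable {p q p' q' j : ℕ}

theorem IsLadderC.eq_of_mem (h : IsLadderC m a p q) (h' : IsLadderC m a p' q')
    (hpj : p ≤ j) (hjq : j ≤ q) (hpj' : p' ≤ j) (hjq' : j ≤ q') :
    p = p' ∧ q = q' := by
  obtain ⟨hpq, hq, hpat, hbot, htop⟩ := h
  obtain ⟨hpq', hq', hpat', hbot', htop'⟩ := h'
  constructor
  · by_contra hne
    rcases Nat.lt_or_gt_of_ne hne with hlt | hlt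
    · have := hbot' (by omega)
      have := hpat p' (by omega) (by omega)
      have := hpat (p' - 1) (by omega) (by omega)
      omega
    · have := hbot (by omega)
      have := hpat' p (by omega) (by omega)
      have := hpat' (p - 1) (by omega) (by omega)
      omega
  · by_contra hne
    rcases Nat.lt_or_gt_of_ne hne with hlt | hlt
    · have := htop (by omega)
      have := hpat' q (by omega) (by omega)
      have := hpat' (q + 1) (by omega) (by omega)
      omega
    · have := htop' (by omega)
      have := hpat q' (by omega) (by omega)
      have := hpat (q' + 1) (by omega) (by omega)
      omega

/-- Two staircases through `j` pair `j` with the same neighbour, since otherwise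
`a (j - 1) = a j = a (j + 1)` would violate the spacing condition. -/
theorem IsStairC.eq_of_mem (hgap : IsGappedC m a) (h : IsStairC m a p q)
    (h' : IsStairC m a p' q') (hpj : p ≤ j) (hjq : j ≤ q) (hpj' : p' ≤ j) (hjq' : j ≤ q') :
    p = p' ∧ q = q' := by
  obtain ⟨hpq, hq, hodd, hpat, hbot, htop⟩ := h
  obtain ⟨hpq', hq', hodd', hpat', hbot', htop'⟩ := h'
  have hpar : (j - p) % 2 = (j - p') % 2 := by
    by_contra hne
    have := hgap (j - 1) (by omega)
    rw [show j - 1 + 2 = j + 1 by omega] at this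
    have := hpat j hpj hjq
    have := hpat' j hpj' hjq'
    rcases Nat.mod_two_eq_zero_or_one (j - p) with h0 | h1
    · have := hpat (j + 1) (by omega) (by omega)
      have := hpat' (j - 1) (by omega) (by omega)
      omega
    · have := hpat (j - 1) (by omega) (by omega)
      have := hpat' (j + 1) (by omega) (by omega)
      omega
  constructor
  · by_contra hne
    rcases Nat.lt_or_gt_of_ne hne with hlt | hlt
    · have := hbot' (by omega)
      have := hpat p' (by omega) (by omega)
      have := hpat (p' - 2) (by omega) (by omega)
      omega
    · have := hbot (by omega)
      have := hpat' p (by omega) (by omega)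
      have := hpat' (p - 2) (by omega) (by omega)
      omega
  · by_contra hne
    rcases Nat.lt_or_gt_of_ne hne with hlt | hlt
    · have := htop (by omega)
      have := hpat' q (by omega) (by omega)
      have := hpat' (q + 2) (by omega) (by omega)
      omega
    · have := htop' (by omega)
      have := hpat q' (by omega) (by omega)
      have := hpat (q' + 2) (by omega) (by omega)
      omega

/-- In a staircase `j` has a neighbour with the same entry; in a ladder, or just outside
it, the neighbours of `j` differ from `a j`. -/
theorem IsLadderC.not_isStairC_of_mem (h : IsLadderC m a p q) (h' : IsStairC m a p' q')
    (hpj : p ≤ j) (hjq : j ≤ q) (hpj' : p' ≤ j) (hjq' : j ≤ q') : False := by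
  obtain ⟨hpq, hq, hpat, hbot, htop⟩ := h
  obtain ⟨hpq', hq', hodd', hpat', -, -⟩ := h'
  have := hpat' j hpj' hjq'
  rcases Nat.mod_two_eq_zero_or_one (j - p') with h0 | h1
  · have := hpat' (j + 1) (by omega) (by omega)
    rcases Nat.lt_or_ge j q with hlt | hge
    · have := hpat j hpj hjq
      have := hpat (j + 1) (by omega) hlt
      omega
    · obtain rfl : j = q := by omega
      have := htop (by omega)
      omega
  · have := hpat' (j - 1) (by omega) (by omega)
    rcases Nat.lt_or_ge p j with hlt | hge
    · have := hpat j hpj hjq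
      have := hpat (j - 1) (by omega) (by omega)
      omega
    · obtain rfl : p = j := by omega
      have := hbot (by omega)
      omega

theorem IsPartC.eq_of_mem (hgap : IsGappedC m a) (h : IsPartC m a p q)
    (h' : IsPartC m a p' q') (hpj : p ≤ j) (hjq : j ≤ q) (hpj' : p' ≤ j) (hjq' : j ≤ q') :
    p = p' ∧ q = q' := by
  rcases h with hL | hS <;> rcases h' with hL' | hS'
  · exact hL.eq_of_mem hL' hpj hjq hpj' hjq'
  · exact (hL.not_isStairC_of_mem hS' hpj hjq hpj' hjq').elim
  · exact (hL'.not_isStairC_of_mem hS hpj' hjq' hpj hjq).elim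
  · exact hS.eq_of_mem hgap hS' hpj hjq hpj' hjq'

theorem IsPartC.lt_top_of_apply_succ_le (hgap : IsGappedC m a) (h : IsPartC m a p q)
    (hpj : p ≤ j) (hjq : j ≤ q) (hj : j + 1 ≤ 2 * m) (hstep : a (j + 1) ≤ a j + 1) :
    j < q := by
  by_contra hge
  obtain rfl : j = q := by omega
  rcases h with ⟨-, -, -, -, htop⟩ | ⟨-, -, hodd, hpat, -, -⟩
  · have := htop (by omega)
    omega
  · have := hpat j hpj le_rfl
    have := hpat (j - 1) (by omega) (by omega)
    have := hgap (j - 1) (by omega)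
    rw [show j - 1 + 2 = j + 1 by omega] at this
    omega

/-- A pair `a j = a (j + 1)` lies in a staircase, at even offset from its bottom; by the top
condition the staircase cannot end at `j + 1` when `a (j + 3) ≤ a (j + 1) + 2`. -/
theorem IsPartC.add_three_le_top (hgap : IsGappedC m a) (h : IsPartC m a p q)
    (hpj : p ≤ j) (hjq : j + 1 ≤ q) (hpair : a (j + 1) = a j) (hj : j + 3 ≤ 2 * m)
    (hstep : a (j + 3) ≤ a (j + 1) + 2) : j + 3 ≤ q := by
  rcases h with ⟨-, -, hpat, -, -⟩ | ⟨-, -, hodd, hpat, -, htop⟩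
  · have := hpat j hpj (by omega)
    have := hpat (j + 1) (by omega) hjq
    omega
  · have heven : (j - p) % 2 = 0 := by
      by_contra hne
      have := hpat j hpj (by omega)
      have := hpat (j - 1) (by omega) (by omega)
      have := hgap (j - 1) (by omega)
      rw [show j - 1 + 2 = j + 1 by omega] at this
      omega
    by_contra hlt
    obtain rfl : q = j + 1 := by omega
    have : a (j + 1) + 2 < a (j + 3) := htop hj
    omega

theorem IsPartC.le_top_of_apply_add_le (hgap : IsGappedC m a) (h : IsPartC m a p q)
    {k l : ℕ} (hmono : a k ≤ a (k + 1)) (hpk : p ≤ k) (hkq : k ≤ q) (hkl : k < l)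
    (hl : l ≤ 2 * m) (hle : a l + (k + 1) / 2 ≤ a k + (l + 1) / 2) : l ≤ q := by
  rcases Nat.even_or_odd (l - k) with heven | ⟨t, ht⟩
  · obtain ⟨t, ht⟩ := heven
    have := hgap.add_sub_le_of_even hkl.le hl ⟨t, ht⟩
    omega
  · have hchain := hgap.add_sub_le_of_even (j := k + 1) (by omega) hl ⟨t, by omega⟩
    have hsucc := h.lt_top_of_apply_succ_le hgap hpk hkq (by omega)
    by_cases hl1 : l = k + 1
    · subst hl1
      exact hsucc (by omega)
    · have hl3 : l = k + 3 := by omega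
      subst hl3
      exact h.add_three_le_top hgap hpk (hsucc (by omega)) (by omega) hl (by omega)

end Parts

theorem stmt4_general (n m : ℕ) (a : ℕ → ℕ)
    (ha : IsUSymC n m a) (hdist : DistC m a)
    (k l : ℕ) (hkl : k < l) (hl : l ≤ 2 * m)
    (hparts : ∃ k₁ l₁ k₂ l₂, IsPartC m a k₁ l₁ ∧ IsPartC m a k₂ l₂ ∧
      k₁ ≤ k ∧ k ≤ l₁ ∧ k₂ ≤ l ∧ l ≤ l₂ ∧ (k₁, l₁) ≠ (k₂, l₂)) :
    mapC a k < mapC a l := by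
  have hgap : IsGappedC m a := ha.2.1
  obtain ⟨k₁, l₁, k₂, l₂, hP₁, hP₂, hk₁, hkl₁, hk₂, hll₂, hne⟩ := hparts
  have hkey : a k + (l + 1) / 2 < a l + (k + 1) / 2 := by
    by_contra! hle
    have hl₁ := hP₁.le_top_of_apply_add_le hgap (hdist k (by omega)) hk₁ hkl₁ hkl hl hle
    obtain ⟨rfl, rfl⟩ := hP₁.eq_of_mem hgap hP₂ (by omega) hl₁ hk₂ hll₂
    exact hne rfl
  have hk : k ≤ a k := hgap.le_apply ha.1 (by omega)
  show a k - (k + 1) / 2 < a l - (l + 1) / 2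
  omega

/-- If `k < l` belong to distinct parts of the distinguished type-C u-symbol `a`,
then the `k`-th entry of `i(a)` is strictly smaller than the `l`-th entry. -/
theorem stmt4 (n m : ℕ) (hn : 1 ≤ n) (hm : 1 ≤ m) (a : ℕ → ℕ)
    (ha : IsUSymC n m a) (hdist : DistC m a)
    (k l : ℕ) (hkl : k < l) (hl : l ≤ 2 * m)
    (hparts : ∃ k₁ l₁ k₂ l₂, IsPartC m a k₁ l₁ ∧ IsPartC m a k₂ l₂ ∧
      k₁ ≤ k ∧ k ≤ l₁ ∧ k₂ ≤ l ∧ l ≤ l₂ ∧ (k₁, l₁) ≠ (k₂, l₂)) :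
    mapC a k < mapC a l :=
  stmt4_general n m a ha hdist k l hkl hl hparts
end

section
/- Let a = (a_0, …, a_{2m}) be a distinguished type-C u-symbol. If [k,l] is a staircase of a whose bottom k is even, then k+1 and l−1 are isolated points of a and they are the only isolated points in [k,l]. If [k,l] is a staircase of a whose bottom k is odd, then [k,l] contains no isolated points of a. -/
open scoped Classical

/-!
Because `a 0 ≥ 0`, `a 1 ≥ 1` and entries two apart differ by at least `2`, every entry satisfies
`j ≤ a j`, so `i(a)_j = a j - ⌈j/2⌉` involves no truncation and `i(a)` strictly increases along
indices of equal parity. Together with monotonicity of `a`, a coincidence `i(a)_p = i(a)_q` with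
`p < q` forces `q = p + 1`, or `q = p + 3` with `p` even. On a staircase the coincidences are
explicit: for odd bottom `i(a)` is constant on each pair `{k + 2s, k + 2s + 1}`; for even bottom
`i(a)_j = i(a)_{j+3}` whenever `j - k` is even, which leaves exactly `k + 1` and `l - 1` unmatched,
and the boundary conditions of the staircase exclude partners outside it.
-/

section

variable {m : ℕ} {a : ℕ → ℕ} (ha1 : 1 ≤ a 1)
  (hstep : ∀ i, i + 2 ≤ 2 * m → a i + 2 ≤ a (i + 2))
include ha1 hstep

theorem self_le_apply (j : ℕ) (hj : j ≤ 2 * m) : j ≤ a j := by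
  induction j using Nat.strong_induction_on with
  | _ j ih =>
    match j, hj with
    | 0, _ => exact Nat.zero_le _
    | 1, _ => exact ha1
    | t + 2, hj =>
      have := ih t (by omega) (by omega)
      have := hstep t hj
      omega

theorem mapC_add_eq {j : ℕ} (hj : j ≤ 2 * m) : mapC a j + (j + 1) / 2 = a j := by
  have := self_le_apply ha1 hstep j hj
  unfold mapC
  omega

theorem mapC_add_le_mapC_add_two_mul (t p : ℕ) (h : p + 2 * t ≤ 2 * m) :
    mapC a p + t ≤ mapC a (p + 2 * t) := by
  induction t with
  | zero => simp
  | succ s ih =>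
    have := ih (by omega)
    have := hstep (p + 2 * s) (by omega)
    have := mapC_add_eq ha1 hstep (j := p + 2 * s) (by omega)
    have := mapC_add_eq ha1 hstep (j := p + 2 * s + 2) (by omega)
    rw [show p + 2 * (s + 1) = p + 2 * s + 2 by ring]
    omega

theorem eq_add_one_or_eq_add_three_of_mapC_eq (hdist : DistC m a) {p q : ℕ} (hpq : p < q)
    (hq : q ≤ 2 * m) (heq : mapC a p = mapC a q) : q = p + 1 ∨ (q = p + 3 ∧ p % 2 = 0) := by
  obtain ⟨t, rfl | rfl⟩ : ∃ t, q = p + 2 * t + 1 ∨ q = p + 2 * (t + 1) :=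
    ⟨(q - p - 1) / 2, by omega⟩
  · rcases t with _ | s
    · exact .inl rfl
    · have hchain := mapC_add_le_mapC_add_two_mul ha1 hstep s (p + 3) (by omega)
      rw [show p + 3 + 2 * s = p + 2 * (s + 1) + 1 by ring] at hchain
      have := hdist p (by omega)
      have : a (p + 1) + 2 ≤ a (p + 3) := hstep (p + 1) (by omega)
      have := mapC_add_eq ha1 hstep (j := p) (by omega)
      have := mapC_add_eq ha1 hstep (j := p + 3) (by omega)
      omega
  · have := mapC_add_le_mapC_add_two_mul ha1 hstep (t + 1) p hq
    omega

namespace IsStairC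

variable {k l : ℕ}

theorem mapC_add_eq (hs : IsStairC m a k l) {j : ℕ} (hkj : k ≤ j) (hjl : j ≤ l) :
    mapC a j + (j + 1) / 2 = a k + 2 * ((j - k) / 2) := by
  rw [_root_.mapC_add_eq ha1 hstep (hjl.trans hs.2.1)]
  exact hs.2.2.2.1 j hkj hjl

theorem not_isIsolC_of_odd (hs : IsStairC m a k l) (hk : Odd k) {j : ℕ} (hkj : k ≤ j)
    (hjl : j ≤ l) : ¬ IsIsolC m a j := by
  rintro ⟨-, hj⟩
  obtain ⟨-, hl, hpar, -⟩ := id hs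
  have hk2 := Nat.odd_iff.mp hk
  have hmj := hs.mapC_add_eq ha1 hstep hkj hjl
  rcases Nat.even_or_odd (j - k) with he | ho
  · have := Nat.even_iff.mp he
    have := hs.mapC_add_eq ha1 hstep (j := j + 1) (by omega) (by omega)
    exact hj (j + 1) (by omega) (by omega) (by omega)
  · have := Nat.odd_iff.mp ho
    have := hs.mapC_add_eq ha1 hstep (j := j - 1) (by omega) (by omega)
    exact hj (j - 1) (by omega) (by omega) (by omega)

theorem not_isIsolC_of_even (hs : IsStairC m a k l) (hk : Even k) {j : ℕ} (hkj : k ≤ j)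
    (hjl : j ≤ l) (hj1 : j ≠ k + 1) (hj2 : j ≠ l - 1) : ¬ IsIsolC m a j := by
  rintro ⟨-, hj⟩
  obtain ⟨-, hl, hpar, -⟩ := id hs
  have hk2 := Nat.even_iff.mp hk
  have hmj := hs.mapC_add_eq ha1 hstep hkj hjl
  rcases Nat.even_or_odd (j - k) with he | ho
  · have := Nat.even_iff.mp he
    have := hs.mapC_add_eq ha1 hstep (j := j + 3) (by omega) (by omega)
    exact hj (j + 3) (by omega) (by omega) (by omega)
  · have := Nat.odd_iff.mp ho
    have := hs.mapC_add_eq ha1 hstep (j := j - 3) (by omega) (by omega)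
    exact hj (j - 3) (by omega) (by omega) (by omega)

theorem isIsolC_add_one (hdist : DistC m a) (hs : IsStairC m a k l) (hk : Even k) :
    IsIsolC m a (k + 1) := by
  obtain ⟨hkl, hl, hpar, -, hbot, -⟩ := id hs
  have hk2 := Nat.even_iff.mp hk
  refine ⟨by omega, fun t ht hne heq => ?_⟩
  have hk1 := hs.mapC_add_eq ha1 hstep (j := k + 1) (by omega) (by omega)
  have hmt := _root_.mapC_add_eq ha1 hstep ht
  rcases lt_or_gt_of_ne hne with hlt | hgt
  · rcases eq_add_one_or_eq_add_three_of_mapC_eq ha1 hstep hdist hlt (by omega) heq with h | ⟨h, -⟩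
    · have := hs.mapC_add_eq ha1 hstep (j := k) le_rfl (by omega)
      obtain rfl : t = k := by omega
      omega
    · have hb : a t + 2 < a k := by
        rw [show t = k - 2 by omega]
        exact hbot (by omega)
      omega
  · rcases eq_add_one_or_eq_add_three_of_mapC_eq ha1 hstep hdist hgt ht heq.symm with h | ⟨-, h⟩
    · have := hs.mapC_add_eq ha1 hstep (j := k) le_rfl (by omega)
      have := hstep k (by omega)
      obtain rfl : t = k + 2 := by omega
      omega
    · omega

theorem isIsolC_sub_one (hdist : DistC m a) (hs : IsStairC m a k l) (hk : Even k) :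
    IsIsolC m a (l - 1) := by
  obtain ⟨hkl, hl, hpar, hform, -, htop⟩ := id hs
  have hk2 := Nat.even_iff.mp hk
  refine ⟨by omega, fun t ht hne heq => ?_⟩
  have hl1 := hs.mapC_add_eq ha1 hstep (j := l - 1) (by omega) (by omega)
  have hal := hform l hkl le_rfl
  have hmt := _root_.mapC_add_eq ha1 hstep ht
  rcases lt_or_gt_of_ne hne with hlt | hgt
  · rcases eq_add_one_or_eq_add_three_of_mapC_eq ha1 hstep hdist hlt (by omega) heq with h | ⟨h, h'⟩
    · rcases Nat.lt_or_ge t k with htk | htk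
      · have := hs.mapC_add_eq ha1 hstep (j := k) le_rfl (by omega)
        have : a t + 2 ≤ a (t + 2) := hstep t (by omega)
        obtain rfl : t = k - 1 := by omega
        rw [show k - 1 + 2 = l by omega] at this
        omega
      · have := hs.mapC_add_eq ha1 hstep htk (by omega)
        omega
    · omega
  · rcases eq_add_one_or_eq_add_three_of_mapC_eq ha1 hstep hdist hgt ht heq.symm with h | ⟨h, -⟩
    · obtain rfl : t = l := by omega
      omega
    · have := htop (by omega)
      obtain rfl : t = l + 2 := by omega
      omega

end IsStairC

end

theorem stmt5_general (n m : ℕ) (a : ℕ → ℕ)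
    (ha : IsUSymC n m a) (hdist : DistC m a)
    (k l : ℕ) (hs : IsStairC m a k l) :
    (Even k → IsIsolC m a (k + 1) ∧ IsIsolC m a (l - 1) ∧
      ∀ j, k ≤ j → j ≤ l → IsIsolC m a j → j = k + 1 ∨ j = l - 1) ∧
    (Odd k → ∀ j, k ≤ j → j ≤ l → ¬ IsIsolC m a j) := by
  obtain ⟨ha1, hstep, -⟩ := ha
  refine ⟨fun hk => ⟨hs.isIsolC_add_one ha1 hstep hdist hk, hs.isIsolC_sub_one ha1 hstep hdist hk,
    fun j hkj hjl hj => ?_⟩, fun hk j hkj hjl => hs.not_isIsolC_of_odd ha1 hstep hk hkj hjl⟩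
  by_contra! h
  exact hs.not_isIsolC_of_even ha1 hstep hk hkj hjl h.1 h.2 hj

/-- For a staircase `[k,l]` of a distinguished type-C u-symbol: if the bottom `k`
is even then `k+1` and `l-1` are the only isolated points in `[k,l]`; if the
bottom `k` is odd then `[k,l]` contains no isolated points. -/
theorem stmt5 (n m : ℕ) (hn : 1 ≤ n) (hm : 1 ≤ m) (a : ℕ → ℕ)
    (ha : IsUSymC n m a) (hdist : DistC m a)
    (k l : ℕ) (hs : IsStairC m a k l) :
    (Even k → IsIsolC m a (k + 1) ∧ IsIsolC m a (l - 1) ∧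
      ∀ j, k ≤ j → j ≤ l → IsIsolC m a j → j = k + 1 ∨ j = l - 1) ∧
    (Odd k → ∀ j, k ≤ j → j ≤ l → ¬ IsIsolC m a j) :=
  stmt5_general n m a ha hdist k l hs
end

section
/- Let a = (a_0, …, a_{2m}) be a distinguished type-C u-symbol. For every part [k,l] of a, the number of isolated points of a contained in [k,l] is congruent to the length l−k+1 of the part modulo 2. -/
open scoped Classical

/-!
Write `b = mapC a`. The condition `a i + 2 ≤ a (i + 2)` makes `b` strictly increasing along
each parity class of indices, so `b` takes every value at most twice; hence in any interval the
number of points whose `b`-value is not repeated within the interval has the parity of its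
length. For a part `[k, l]` the boundary conditions force every value of `b` to the left of `k`
to be smaller, and every value to the right of `l` to be larger, than all values of `b` on
`[k, l]`, so being isolated is decided inside the part.
-/

section Fibres

variable {α β : Type*} [DecidableEq α] [DecidableEq β]

theorem mem_filter_forall_ne_iff {f : α → β} {s : Finset α} {i : α} :
    i ∈ s.filter (fun i => ∀ j ∈ s, j ≠ i → f j ≠ f i) ↔
      i ∈ s ∧ (s.filter (f · = f i)).card ≤ 1 := by
  simp only [Finset.mem_filter, Finset.card_le_one, and_congr_right_iff]
  refine fun hi => ⟨fun h x hx y hy => ?_, fun h j hj hji hfj => hji (h j ⟨hj, hfj⟩ i ⟨hi, rfl⟩)⟩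
  have hmem : ∀ z, z ∈ s ∧ f z = f i → z = i := fun z hz => by_contra fun hzi => h z hz.1 hzi hz.2
  exact (hmem x hx).trans (hmem y hy).symm

theorem card_filter_forall_ne_modEq_two (f : α → β) (s : Finset α)
    (hf : ∀ y, (s.filter (f · = y)).card ≤ 2) :
    (s.filter (fun i => ∀ j ∈ s, j ≠ i → f j ≠ f i)).card ≡ s.card [MOD 2] := by
  set I := s.filter (fun i => ∀ j ∈ s, j ≠ i → f j ≠ f i) with hI
  have hfibre (y : β) : (I.filter (f · = y)).card ≡ (s.filter (f · = y)).card [MOD 2] := by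
    set F := s.filter (f · = y) with hF
    have hIF : I.filter (f · = y) = F.filter (fun _ => F.card ≤ 1) := by
      ext i
      rw [Finset.mem_filter, hI, mem_filter_forall_ne_iff, Finset.mem_filter, hF,
        Finset.mem_filter]
      constructor
      · rintro ⟨⟨hi, hcard⟩, rfl⟩
        exact ⟨⟨hi, rfl⟩, hcard⟩
      · rintro ⟨⟨hi, rfl⟩, hcard⟩
        exact ⟨⟨hi, hcard⟩, rfl⟩
    rw [hIF, Finset.filter_const]
    split_ifs with hF
    · rfl
    · have : F.card ≤ 2 := hf y
      rw [Finset.card_empty, Nat.ModEq]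
      omega
  have hmaps : Set.MapsTo f s (s.image f) := fun i hi => Finset.mem_image_of_mem f hi
  rw [Finset.card_eq_sum_card_fiberwise hmaps,
    Finset.card_eq_sum_card_fiberwise (hmaps.mono (Finset.filter_subset _ s) le_rfl)]
  exact Nat.ModEq.sum fun y _ => hfibre y

theorem card_filter_eq_le_two_of_injOn_mod_two (f : ℕ → β) (s : Finset ℕ)
    (hf : ∀ x ∈ s, ∀ y ∈ s, x % 2 = y % 2 → f x = f y → x = y) (y : β) :
    (s.filter (f · = y)).card ≤ 2 := by
  calc (s.filter (f · = y)).card ≤ (Finset.range 2).card :=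
        Finset.card_le_card_of_injOn (· % 2)
          (fun x _ => Finset.mem_range.mpr (Nat.mod_lt x two_pos))
          fun x hx z hz hxz => hf x (Finset.mem_filter.mp hx).1 z (Finset.mem_filter.mp hz).1 hxz
            ((Finset.mem_filter.mp hx).2.trans (Finset.mem_filter.mp hz).2.symm)
    _ = 2 := Finset.card_range 2

end Fibres

section Cut

variable {α : Type*} [Preorder α] {N : ℕ} {b : ℕ → α}

theorem lt_of_lt_of_mod_two_eq (hb : ∀ x, x + 2 ≤ N → b x < b (x + 2)) {x y : ℕ}
    (hxy : x < y) (hy : y ≤ N) (hpar : x % 2 = y % 2) : b x < b y := by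
  induction y using Nat.strong_induction_on with
  | _ y ih =>
    obtain ⟨z, rfl⟩ : ∃ z, y = z + 2 := ⟨y - 2, by omega⟩
    obtain rfl | hxz := eq_or_lt_of_le (show x ≤ z by omega)
    · exact hb x hy
    · exact (ih z (by omega) hxz (by omega) (by omega)).trans (hb z hy)

theorem le_of_le_of_mod_two_eq (hb : ∀ x, x + 2 ≤ N → b x < b (x + 2)) {x y : ℕ}
    (hxy : x ≤ y) (hy : y ≤ N) (hpar : x % 2 = y % 2) : b x ≤ b y := by
  obtain rfl | hlt := eq_or_lt_of_le hxy
  · exact le_rfl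
  · exact (lt_of_lt_of_mod_two_eq hb hlt hy hpar).le

theorem eq_of_mod_two_eq_of_eq (hb : ∀ x, x + 2 ≤ N → b x < b (x + 2)) {x y : ℕ}
    (hx : x ≤ N) (hy : y ≤ N) (hpar : x % 2 = y % 2) (hxy : b x = b y) : x = y := by
  rcases lt_trichotomy x y with h | h | h
  · exact absurd hxy (lt_of_lt_of_mod_two_eq hb h hy hpar).ne
  · exact h
  · exact absurd hxy (lt_of_lt_of_mod_two_eq hb h hx hpar.symm).ne'

variable (N b) in
def IsCut (k : ℕ) : Prop := ∀ j < k, ∀ i, k ≤ i → i ≤ N → b j < b i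

theorem isCut_of_lt (hb : ∀ x, x + 2 ≤ N → b x < b (x + 2)) {k : ℕ}
    (h₁ : 0 < k → k ≤ N → b (k - 1) < b k)
    (h₂ : 2 ≤ k → k + 1 ≤ N → b (k - 2) < b (k + 1)) :
    IsCut N b k := by
  intro j hj i hi hiN
  by_cases hji : j % 2 = i % 2
  · exact lt_of_lt_of_mod_two_eq hb (by omega) hiN hji
  by_cases hjk : j % 2 = (k - 1) % 2
  · calc b j ≤ b (k - 1) := le_of_le_of_mod_two_eq hb (by omega) (by omega) hjk
      _ < b k := h₁ (by omega) (by omega)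
      _ ≤ b i := le_of_le_of_mod_two_eq hb hi hiN (by omega)
  · calc b j ≤ b (k - 2) := le_of_le_of_mod_two_eq hb (by omega) (by omega) (by omega)
      _ < b (k + 1) := h₂ (by omega) (by omega)
      _ ≤ b i := le_of_le_of_mod_two_eq hb (by omega) hiN (by omega)

theorem forall_ne_iff_of_isCut {k l i : ℕ} (hk : IsCut N b k) (hl : IsCut N b (l + 1))
    (hlN : l ≤ N) (hi : i ∈ Finset.Icc k l) :
    (∀ j ≤ N, j ≠ i → b j ≠ b i) ↔ ∀ j ∈ Finset.Icc k l, j ≠ i → b j ≠ b i := by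
  rw [Finset.mem_Icc] at hi
  refine ⟨fun h j hj => h j ((Finset.mem_Icc.mp hj).2.trans hlN), fun h j hjN => ?_⟩
  by_cases hjk : j < k
  · exact fun _ => (hk j hjk i hi.1 (hi.2.trans hlN)).ne
  by_cases hjl : l < j
  · exact fun _ => (hl i (by omega) j hjl hjN).ne'
  exact h j (Finset.mem_Icc.mpr ⟨by omega, by omega⟩)

end Cut

section USymbol

variable {n m : ℕ} {a : ℕ → ℕ}

theorem IsUSymC.add_two_le (ha : IsUSymC n m a) {i j : ℕ} (hij : i + 2 = j)
    (hj : j ≤ 2 * m) : a i + 2 ≤ a j :=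
  hij ▸ ha.2.1 i (hij ▸ hj)

-- This makes the truncated subtraction `a j - (j + 1) / 2` in `mapC` exact on `[0, 2m]`.
theorem IsUSymC.half_le (ha : IsUSymC n m a) : ∀ {j : ℕ}, j ≤ 2 * m → (j + 1) / 2 ≤ a j
  | 0, _ => Nat.zero_le _
  | 1, _ => ha.1
  | j + 2, hj => by
    have := ha.half_le (j := j) (by omega)
    have := ha.add_two_le rfl hj
    omega

theorem IsUSymC.mapC_lt_mapC_add_two (ha : IsUSymC n m a) :
    ∀ x, x + 2 ≤ 2 * m → mapC a x < mapC a (x + 2) := by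
  intro x hx
  have := ha.half_le (j := x) (by omega)
  have := ha.add_two_le rfl hx
  unfold mapC
  omega

end USymbol

section Parts

variable {n m : ℕ} {a : ℕ → ℕ} {k l : ℕ}

theorem IsPartC.le_and_le_two_mul (hp : IsPartC m a k l) : k ≤ l ∧ l ≤ 2 * m :=
  hp.elim (fun h => ⟨h.1, h.2.1⟩) (fun h => ⟨h.1, h.2.1⟩)

theorem IsPartC.isCut_left (ha : IsUSymC n m a) (hp : IsPartC m a k l) :
    IsCut (2 * m) (mapC a) k := by
  refine isCut_of_lt ha.mapC_lt_mapC_add_two (fun hk hkN => ?_) (fun hk hkN => ?_)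
  · have := ha.half_le (j := k - 1) (by omega)
    have := ha.half_le hkN
    unfold mapC
    rcases hp with ⟨-, -, -, hL, -⟩ | ⟨hkl, hl, hodd, hform, -, -⟩
    · have := hL hk
      omega
    · have := ha.add_two_le (i := k - 1) (j := k + 1) (by omega) (by omega)
      have := hform (k + 1) (by omega) (by omega)
      omega
  · have := ha.half_le (j := k - 2) (by omega)
    have := ha.half_le hkN
    have := ha.add_two_le (i := k - 2) (j := k) (by omega) (by omega)
    unfold mapC
    rcases hp with ⟨hkl, -, hform, -, hR⟩ | ⟨hkl, -, hodd, hform, hL, -⟩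
    · obtain rfl | hkl := eq_or_lt_of_le hkl
      · have := hR (by omega)
        omega
      · have := hform (k + 1) (by omega) (by omega)
        omega
    · have := hL (by omega)
      have := hform (k + 1) (by omega) (by omega)
      omega

theorem IsPartC.isCut_right (ha : IsUSymC n m a) (hp : IsPartC m a k l) :
    IsCut (2 * m) (mapC a) (l + 1) := by
  refine isCut_of_lt ha.mapC_lt_mapC_add_two (fun _ hlN => ?_) (fun hl hlN => ?_)
  · show mapC a l < mapC a (l + 1)
    have := ha.half_le (j := l) (by omega)
    have := ha.half_le hlN
    unfold mapC
    rcases hp with ⟨-, -, -, -, hR⟩ | ⟨hkl, -, hodd, hform, -, -⟩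
    · have := hR (by omega)
      omega
    · have := ha.add_two_le (i := l - 1) (j := l + 1) (by omega) hlN
      have := hform (l - 1) (by omega) (by omega)
      have := hform l hkl le_rfl
      omega
  · show mapC a (l - 1) < mapC a (l + 2)
    have := ha.half_le (j := l - 1) (by omega)
    have := ha.half_le hlN
    unfold mapC
    rcases hp with ⟨hkl, -, hform, hL, -⟩ | ⟨hkl, -, hodd, hform, -, hR⟩
    · have := ha.add_two_le (i := l) (j := l + 2) rfl hlN
      obtain rfl | hkl := eq_or_lt_of_le hkl
      · have := hL (by omega)
        omega
      · have := hform (l - 1) (by omega) (by omega)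
        have := hform l (by omega) le_rfl
        omega
    · have := hR hlN
      have := hform (l - 1) (by omega) (by omega)
      have := hform l hkl le_rfl
      omega

end Parts

theorem stmt7_general (n m : ℕ) (a : ℕ → ℕ)
    (ha : IsUSymC n m a)
    (k l : ℕ) (hp : IsPartC m a k l) :
    ((Finset.Icc k l).filter (IsIsolC m a)).card % 2 = (l - k + 1) % 2 := by
  obtain ⟨hkl, hl⟩ := hp.le_and_le_two_mul
  have hisol : (Finset.Icc k l).filter (IsIsolC m a) =
      (Finset.Icc k l).filter (fun i => ∀ j ∈ Finset.Icc k l, j ≠ i → mapC a j ≠ mapC a i) :=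
    Finset.filter_congr fun i hi =>
      (and_iff_right ((Finset.mem_Icc.mp hi).2.trans hl)).trans
        (forall_ne_iff_of_isCut (hp.isCut_left ha) (hp.isCut_right ha) hl hi)
  have hfibre := card_filter_eq_le_two_of_injOn_mod_two (mapC a) (Finset.Icc k l)
    fun x hx y hy => eq_of_mod_two_eq_of_eq ha.mapC_lt_mapC_add_two
      ((Finset.mem_Icc.mp hx).2.trans hl) ((Finset.mem_Icc.mp hy).2.trans hl)
  rw [hisol, card_filter_forall_ne_modEq_two (mapC a) _ hfibre, Nat.card_Icc]
  omega

/-- For every part `[k,l]` of a distinguished type-C u-symbol, the number of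
isolated points contained in `[k,l]` is congruent to the length `l - k + 1`
of the part modulo `2`. -/
theorem stmt7 (n m : ℕ) (hn : 1 ≤ n) (hm : 1 ≤ m) (a : ℕ → ℕ)
    (ha : IsUSymC n m a) (hdist : DistC m a)
    (k l : ℕ) (hp : IsPartC m a k l) :
    ((Finset.Icc k l).filter (IsIsolC m a)).card % 2 = (l - k + 1) % 2 :=
  stmt7_general n m a ha k l hp
end

section
/- Let a = (a_0, …, a_{2m}) be a distinguished type-C u-symbol with isolated points k_0, …, k_{2f}, numbered so that the corresponding entries of a' = i(a) satisfy a'_{k_0} < a'_{k_1} < ⋯ < a'_{k_{2f}}. Then for each t with 0 ≤ t < 2f, either k_t < k_{t+1}, or else k_t = k_{t+1} + 1 and [k_{t+1}, k_t] is a staircase of a whose bottom k_{t+1} is even. -/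
open scoped Classical

/-! The gap condition `a i + 2 ≤ a (i + 2)` together with `1 ≤ a 1` gives `j ≤ a j`, so the
entries `i(a)_j = a j - ⌈j/2⌉` involve no truncated subtraction, and `i(a)` is nondecreasing
along each parity class. Being distinguished adds `a l ≤ a (l + 1)`, and together these give
`i(a)_l ≤ i(a)_k` for all `l ≤ k ≤ 2m` except when `l` is even and `k = l + 1`. So if two
isolated points `l < k` have `i(a)_k < i(a)_l`, then `l` is even, `k = l + 1` and `a k = a l`;
the boundary conditions of the staircase `[l, l + 1]` hold because their failure would give
`l` or `l + 1` the same value of `i(a)` as `l + 3` or `l - 2`.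
-/

section GapCondition

variable {m : ℕ} {a : ℕ → ℕ}

theorem le_add_two_mul_of_gap (hgap : ∀ i, i + 2 ≤ 2 * m → a i + 2 ≤ a (i + 2)) :
    ∀ d p, p + 2 * d ≤ 2 * m → a p + 2 * d ≤ a (p + 2 * d)
  | 0, _, _ => le_rfl
  | d + 1, p, hp => by
    have := le_add_two_mul_of_gap hgap d p (by omega)
    have := hgap (p + 2 * d) (by omega)
    rw [show p + 2 * (d + 1) = p + 2 * d + 2 by ring]
    omega

theorem le_of_gap (h1 : 1 ≤ a 1) (hgap : ∀ i, i + 2 ≤ 2 * m → a i + 2 ≤ a (i + 2))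
    {j : ℕ} (hj : j ≤ 2 * m) : j ≤ a j := by
  have := le_add_two_mul_of_gap hgap (j / 2) (j % 2) (by omega)
  rw [Nat.mod_add_div] at this
  rcases Nat.mod_two_eq_zero_or_one j with h | h <;> rw [h] at this <;> omega

theorem mapC_add_ceil_half (h1 : 1 ≤ a 1) (hgap : ∀ i, i + 2 ≤ 2 * m → a i + 2 ≤ a (i + 2))
    {j : ℕ} (hj : j ≤ 2 * m) : mapC a j + (j + 1) / 2 = a j := by
  have := le_of_gap h1 hgap hj
  unfold mapC
  omega

theorem mapC_le_mapC_of_distC (h1 : 1 ≤ a 1)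
    (hgap : ∀ i, i + 2 ≤ 2 * m → a i + 2 ≤ a (i + 2)) (hdist : DistC m a)
    {l k : ℕ} (hlk : l ≤ k) (hk : k ≤ 2 * m) (hstep : ¬(Even l ∧ k = l + 1)) :
    mapC a l ≤ mapC a k := by
  have hl := mapC_add_ceil_half h1 hgap (j := l) (by omega)
  have hk' := mapC_add_ceil_half h1 hgap hk
  rw [Nat.even_iff] at hstep
  obtain ⟨d, rfl | rfl⟩ : ∃ d, k = l + 2 * d ∨ k = l + 1 + 2 * d := ⟨(k - l) / 2, by omega⟩
  · have := le_add_two_mul_of_gap hgap d l hk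
    omega
  · have := hdist l (by omega)
    have := mapC_add_ceil_half h1 hgap (j := l + 1) (by omega)
    have := le_add_two_mul_of_gap hgap d (l + 1) hk
    omega

theorem isStairC_of_isIsolC (h1 : 1 ≤ a 1) (hgap : ∀ i, i + 2 ≤ 2 * m → a i + 2 ≤ a (i + 2))
    {l : ℕ} (hl : IsIsolC m a l) (hl1 : IsIsolC m a (l + 1)) (hev : Even l)
    (heq : a (l + 1) = a l) : IsStairC m a l (l + 1) := by
  obtain ⟨hl2m, hliso⟩ := hl
  obtain ⟨hl12m, hl1iso⟩ := hl1
  have hl' := mapC_add_ceil_half h1 hgap hl2m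
  have hl1' := mapC_add_ceil_half h1 hgap hl12m
  rw [Nat.even_iff] at hev
  refine ⟨by omega, hl12m, by omega, fun j hj hj' => ?_, fun hl2 => ?_, fun hl3 => ?_⟩
  · obtain rfl | rfl : j = l ∨ j = l + 1 := by omega
    all_goals omega
  · by_contra hne
    have := hgap (l - 2) (by omega)
    rw [Nat.sub_add_cancel (by omega)] at this
    have := mapC_add_ceil_half h1 hgap (j := l - 2) (by omega)
    exact hl1iso (l - 2) (by omega) (by omega) (by omega)
  · by_contra hne
    have := hgap (l + 1) hl3
    have := mapC_add_ceil_half h1 hgap hl3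
    exact hliso (l + 1 + 2) hl3 (by omega) (by omega)

theorem eq_succ_and_isStairC_of_mapC_lt (h1 : 1 ≤ a 1)
    (hgap : ∀ i, i + 2 ≤ 2 * m → a i + 2 ≤ a (i + 2)) (hdist : DistC m a) {l k : ℕ}
    (hk : IsIsolC m a k) (hl : IsIsolC m a l) (hlt : mapC a k < mapC a l) (hlk : l < k) :
    k = l + 1 ∧ Even l ∧ IsStairC m a l k := by
  obtain ⟨hev, rfl⟩ : Even l ∧ k = l + 1 := by
    by_contra hstep
    exact (mapC_le_mapC_of_distC h1 hgap hdist hlk.le hk.1 hstep).not_gt hlt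
  have heq : a (l + 1) = a l := by
    have := hdist l hk.1
    have := mapC_add_ceil_half h1 hgap hl.1
    have := mapC_add_ceil_half h1 hgap hk.1
    rw [Nat.even_iff] at hev
    omega
  exact ⟨rfl, hev, isStairC_of_isIsolC h1 hgap hl hk hev heq⟩

end GapCondition

theorem stmt8_general (n m : ℕ) (a : ℕ → ℕ)
    (ha : IsUSymC n m a) (hdist : DistC m a)
    (N : ℕ) (K : ℕ → ℕ) (hE : EnumC m a N K) :
    ∀ t, t + 1 < N →
      K t < K (t + 1) ∨
        (K t = K (t + 1) + 1 ∧ Even (K (t + 1)) ∧ IsStairC m a (K (t + 1)) (K t)) := by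
  obtain ⟨hiso, -, hmono⟩ := hE
  intro t ht
  have hlt := hmono t (t + 1) t.lt_succ_self ht
  rcases lt_trichotomy (K t) (K (t + 1)) with h | h | h
  · exact Or.inl h
  · exact absurd (h ▸ hlt) (lt_irrefl _)
  · exact Or.inr <| eq_succ_and_isStairC_of_mapC_lt ha.1 ha.2.1 hdist
      (hiso t (by omega)) (hiso (t + 1) ht) hlt h

/-- For a distinguished type-C u-symbol with isolated points `K 0, …, K (N-1)`
(ordered by the entries of `i(a)`): for each `t` with `t + 1 < N`, either
`K t < K (t+1)`, or `K t = K (t+1) + 1` and `[K (t+1), K t]` is a staircase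
whose bottom `K (t+1)` is even. -/
theorem stmt8 (n m : ℕ) (hn : 1 ≤ n) (hm : 1 ≤ m) (a : ℕ → ℕ)
    (ha : IsUSymC n m a) (hdist : DistC m a)
    (N : ℕ) (K : ℕ → ℕ) (hE : EnumC m a N K) :
    ∀ t, t + 1 < N →
      K t < K (t + 1) ∨
        (K t = K (t + 1) + 1 ∧ Even (K (t + 1)) ∧ IsStairC m a (K (t + 1)) (K t)) :=
  stmt8_general n m a ha hdist N K hE
end

section
/- Let a = (a_0, …, a_{2m}) be a distinguished type-C u-symbol with isolated points k_0, …, k_{2f}, numbered so that the corresponding entries of a' = i(a) satisfy a'_{k_0} < ⋯ < a'_{k_{2f}}. Then the set of displaced isolated points of a is exactly the union, over all staircases [k,l] of a with even bottom, of the two-element sets {k+1, l−1}; moreover, for each such staircase there is an even index t with {k_t, k_{t+1}} = {k+1, l−1}, and distinct staircases with even bottom give rise to distinct such pairs. In particular, displaced isolated points occur in pairs {k_t, k_{t+1}} with t even, one pair for each staircase with even bottom. -/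
open scoped Classical

def GoodC (m : ℕ) (a : ℕ → ℕ) : Prop :=
  (∀ i, i + 1 ≤ 2*m → a i ≤ a (i+1)) ∧ (∀ i, i + 2 ≤ 2*m → a i + 2 ≤ a (i+2)) ∧
  (∀ j, j ≤ 2*m → (j+1)/2 ≤ a j)

noncomputable def cntB (m : ℕ) (a : ℕ → ℕ) (v : ℕ) : ℕ :=
  ((Finset.range (2*m+1)).filter (fun i => mapC a i < v)).card

noncomputable def cntI (m : ℕ) (a : ℕ → ℕ) (v : ℕ) : ℕ :=
  ((Finset.range (2*m+1)).filter (fun i => IsIsolC m a i ∧ mapC a i < v)).card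

section Aux
variable {m : ℕ} {a : ℕ → ℕ}

/-- lower bound -/
lemma auxA (h1 : 1 ≤ a 1) (h2 : ∀ i, i + 2 ≤ 2*m → a i + 2 ≤ a (i+2)) :
    ∀ j, j ≤ 2*m → (j+1)/2 ≤ a j := by
  intro j
  induction j using Nat.strong_induction_on with
  | _ j ih =>
    intro hj
    match j, hj with
    | 0, _ => simp
    | 1, _ => omega
    | (j+2), hj =>
      have := ih j (by omega) (by omega)
      have := h2 j (by omega)
      omega

lemma step2 (hg : GoodC m a) {i : ℕ} (h : i + 2 ≤ 2*m) :
    mapC a i + 1 ≤ mapC a (i+2) := by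
  have := hg.2.1 i h
  have := hg.2.2 i (by omega)
  have := hg.2.2 (i+2) h
  simp only [mapC]; omega

lemma mono2 (hg : GoodC m a) {i j : ℕ} (hij : i ≤ j) (hp : (j - i) % 2 = 0)
    (hj : j ≤ 2*m) : mapC a i + (j - i)/2 ≤ mapC a j := by
  obtain ⟨d, hd⟩ : ∃ d, j = i + 2*d := ⟨(j-i)/2, by omega⟩
  subst hd
  have key : ∀ d, i + 2*d ≤ 2*m → mapC a i + d ≤ mapC a (i + 2*d) := by
    intro d
    induction d with
    | zero => simp
    | succ d ih =>
      intro h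
      have h1 := ih (by omega)
      have h2 := step2 hg (i := i + 2*d) (by omega)
      have e : i + 2*d + 2 = i + 2*(d+1) := by ring
      rw [e] at h2
      omega
  have := key d (by omega)
  omega

lemma stepOdd (hg : GoodC m a) {i : ℕ} (hi : i % 2 = 1) (h : i + 1 ≤ 2*m) :
    mapC a i ≤ mapC a (i+1) := by
  have := hg.1 i h
  have := hg.2.2 i (by omega)
  simp only [mapC]; omega

lemma stepEven (hg : GoodC m a) {i : ℕ} (hi : i % 2 = 0) (h : i + 1 ≤ 2*m) :
    mapC a i ≤ mapC a (i+1) + 1 := by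
  have := hg.1 i h
  have := hg.2.2 i (by omega)
  have := hg.2.2 (i+1) h
  simp only [mapC]; omega

lemma lem3lowE (hg : GoodC m a) {j : ℕ} (hp : j % 2 = 0) (h3 : 3 ≤ j) (hj : j ≤ 2*m) :
    mapC a (j-3) < mapC a j := by
  have h1 := stepOdd hg (i := j-3) (by omega) (by omega)
  have h2 := step2 hg (i := j-2) (by omega)
  have e1 : j - 3 + 1 = j - 2 := by omega
  have e2 : j - 2 + 2 = j := by omega
  rw [e1] at h1; rw [e2] at h2
  omega

lemma lem3lowO (hg : GoodC m a) {j : ℕ} (hp : j % 2 = 1) (h3 : 3 ≤ j) (hj : j ≤ 2*m) :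
    mapC a (j-3) ≤ mapC a j := by
  have h1 := stepEven hg (i := j-3) (by omega) (by omega)
  have h2 := step2 hg (i := j-2) (by omega)
  have e1 : j - 3 + 1 = j - 2 := by omega
  have e2 : j - 2 + 2 = j := by omega
  rw [e1] at h1; rw [e2] at h2
  omega

lemma lem3high (hg : GoodC m a) {j : ℕ} (hj : j + 3 ≤ 2*m) :
    mapC a j ≤ mapC a (j+3) := by
  have h2 := step2 hg (i := j+1) (by omega)
  have e : j + 1 + 2 = j + 3 := rfl
  rw [e] at h2
  rcases Nat.mod_two_eq_zero_or_one j with hjp | hjp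
  · have h1 := stepEven hg (i := j) hjp (by omega)
    omega
  · have h1 := stepOdd hg (i := j) hjp (by omega)
    omega

lemma lowFar (hg : GoodC m a) {i j : ℕ} (hij : i + 5 ≤ j) (hp : (j - i) % 2 = 1)
    (hj : j ≤ 2*m) : mapC a i < mapC a j := by
  have h1 := mono2 hg (i := i) (j := j - 5) (by omega) (by omega) (by omega)
  have h2 := step2 hg (i := j - 5) (by omega)
  have e : j - 5 + 2 = j - 3 := by omega
  rw [e] at h2
  rcases Nat.mod_two_eq_zero_or_one j with hjp | hjp
  · have h3 := lem3lowE hg hjp (by omega) hj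
    omega
  · have h3 := lem3lowO hg hjp (by omega) hj
    omega

lemma highFar (hg : GoodC m a) {i j : ℕ} (hij : j + 5 ≤ i) (hp : (i - j) % 2 = 1)
    (hi : i ≤ 2*m) : mapC a j < mapC a i := by
  have h1 := mono2 hg (i := j + 5) (j := i) (by omega) (by omega) hi
  have h2 := step2 hg (i := j + 3) (by omega)
  have e : j + 3 + 2 = j + 5 := rfl
  rw [e] at h2
  have h3 := lem3high hg (j := j) (by omega)
  omega

/-- Low exclusion. -/
lemma lowExcl (hg : GoodC m a) {i j : ℕ} (hij : i < j) (hj : j ≤ 2*m)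
    (hb : mapC a j ≤ mapC a i) : (i + 1 = j) ∨ (j % 2 = 1 ∧ i + 3 = j) := by
  rcases Nat.mod_two_eq_zero_or_one (j - i) with hp | hp
  · exfalso
    have := mono2 hg (le_of_lt hij) hp hj
    omega
  · by_contra hcon
    push_neg at hcon
    rcases Nat.mod_two_eq_zero_or_one j with hjp | hjp
    · have h5 : i + 5 ≤ j ∨ i + 3 = j := by omega
      rcases h5 with h5 | h3
      · have := lowFar hg h5 hp hj; omega
      · have := lem3lowE hg hjp (by omega) hj
        have e : j - 3 = i := by omega
        rw [e] at this; omega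
    · have h5 : i + 5 ≤ j := by omega
      have := lowFar hg h5 hp hj; omega

/-- High exclusion. -/
lemma highExcl (hg : GoodC m a) {i j : ℕ} (hij : j < i) (hi : i ≤ 2*m)
    (hb : mapC a i < mapC a j) : i = j + 1 ∧ j % 2 = 0 := by
  rcases Nat.mod_two_eq_zero_or_one (i - j) with hp | hp
  · exfalso
    have := mono2 hg (le_of_lt hij) hp hi
    omega
  · have h1 : i = j + 1 ∨ i = j + 3 ∨ j + 5 ≤ i := by omega
    rcases h1 with h | h | h
    · subst h
      refine ⟨rfl, ?_⟩
      rcases Nat.mod_two_eq_zero_or_one j with hjp | hjp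
      · exact hjp
      · exfalso; have := stepOdd hg (i := j) hjp hi; omega
    · exfalso; subst h; have := lem3high hg (j := j) (by omega); omega
    · exfalso; have := highFar hg h hp hi; omega

lemma pairOdd (hg : GoodC m a) {i j : ℕ} (hi : i ≤ 2*m) (hj : j ≤ 2*m)
    (hne : i ≠ j) (hb : mapC a i = mapC a j) : (i + j) % 2 = 1 := by
  by_contra hcon
  rcases Nat.lt_or_ge i j with h | h
  · have := mono2 hg (le_of_lt h) (by omega) hj; omega
  · have := mono2 hg (i := j) (j := i) (by omega) (by omega) hi; omega

/-- each fiber of `mapC a` over non-isolated points has even cardinality -/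
lemma fiberEven (hg : GoodC m a) (v : ℕ) :
    Even (((Finset.range (2*m+1)).filter
      (fun i => ¬ IsIsolC m a i ∧ mapC a i = v)).card) := by
  set F := (Finset.range (2*m+1)).filter
      (fun i => ¬ IsIsolC m a i ∧ mapC a i = v) with hF
  rcases F.eq_empty_or_nonempty with h | ⟨i, hi⟩
  · rw [h]; simp
  · rw [hF, Finset.mem_filter, Finset.mem_range] at hi
    obtain ⟨hir, hni, hiv⟩ := hi
    have hile : i ≤ 2*m := by omega
    rw [IsIsolC] at hni
    push_neg at hni
    obtain ⟨l, hl, hlne, hlv⟩ := hni hile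
    have hFij : F = {i, l} := by
      ext x
      rw [hF, Finset.mem_filter, Finset.mem_range, Finset.mem_insert, Finset.mem_singleton]
      constructor
      · rintro ⟨hxr, hxni, hxv⟩
        by_contra hcon
        push_neg at hcon
        -- three distinct points x, i, l with equal values
        have p1 := pairOdd hg (by omega : x ≤ 2*m) hile hcon.1 (by rw [hxv, hiv])
        have p2 := pairOdd hg (by omega : x ≤ 2*m) hl hcon.2 (by rw [hxv, ← hiv]; exact hlv.symm)
        have p3 := pairOdd hg hile hl (fun h => hlne h.symm) hlv.symm
        omega
      · rintro (rfl | rfl)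
        · exact ⟨hir, by rw [IsIsolC]; push_neg; intro h; exact ⟨l, hl, hlne, hlv⟩, hiv⟩
        · refine ⟨by omega, ?_, by rw [hlv, hiv]⟩
          rw [IsIsolC]; push_neg
          intro h
          exact ⟨i, hile, fun hh => hlne hh.symm, hlv.symm⟩
    rw [hFij, Finset.card_insert_of_notMem (by simpa using fun h => hlne h.symm),
      Finset.card_singleton]
    exact ⟨1, rfl⟩

lemma cntParity (hg : GoodC m a) (v : ℕ) : cntB m a v % 2 = cntI m a v % 2 := by
  have hsplit : cntB m a v = cntI m a v +
      ((Finset.range (2*m+1)).filter (fun i => ¬ IsIsolC m a i ∧ mapC a i < v)).card := by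
    rw [cntB, cntI]
    have e1 : (Finset.range (2*m+1)).filter (fun i => IsIsolC m a i ∧ mapC a i < v)
        = ((Finset.range (2*m+1)).filter (fun i => mapC a i < v)).filter
            (fun i => IsIsolC m a i) := by
      ext x; simp only [Finset.mem_filter]; tauto
    have e2 : (Finset.range (2*m+1)).filter (fun i => ¬ IsIsolC m a i ∧ mapC a i < v)
        = ((Finset.range (2*m+1)).filter (fun i => mapC a i < v)).filter
            (fun i => ¬ IsIsolC m a i) := by
      ext x; simp only [Finset.mem_filter]; tauto
    rw [e1, e2, Finset.card_filter_add_card_filter_not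
      (p := fun i => IsIsolC m a i)]
  have heven : Even (((Finset.range (2*m+1)).filter
      (fun i => ¬ IsIsolC m a i ∧ mapC a i < v)).card) := by
    have hU : (Finset.range (2*m+1)).filter (fun i => ¬ IsIsolC m a i ∧ mapC a i < v)
        = (Finset.range v).biUnion (fun w => (Finset.range (2*m+1)).filter
            (fun i => (¬ IsIsolC m a i ∧ mapC a i = w))) := by
      ext x
      simp only [Finset.mem_biUnion, Finset.mem_filter, Finset.mem_range]
      constructor
      · rintro ⟨hx, hni, hlt⟩
        exact ⟨mapC a x, hlt, hx, hni, rfl⟩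
      · rintro ⟨w, hw, hx, hni, hvw⟩
        exact ⟨hx, hni, by omega⟩
    rw [hU, Finset.card_biUnion]
    · apply Finset.even_sum
      intro w _
      exact fiberEven hg w
    · intro x _ y _ hxy
      rw [Function.onFun, Finset.disjoint_left]
      intro i hi hi2
      rw [Finset.mem_filter] at hi hi2
      exact hxy (by rw [← hi.2.2, ← hi2.2.2])
  obtain ⟨c, hc⟩ := heven
  omega

lemma cntFormula (hg : GoodC m a) {j : ℕ} (hj : j ≤ 2*m) :
    cntB m a (mapC a j)
      + ((if 1 ≤ j ∧ mapC a j ≤ mapC a (j-1) then 1 else 0)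
        + (if j % 2 = 1 ∧ 3 ≤ j ∧ mapC a j ≤ mapC a (j-3) then 1 else 0))
    = j + (if j % 2 = 0 ∧ j + 1 ≤ 2*m ∧ mapC a (j+1) < mapC a j then 1 else 0) := by
  set A := (Finset.range j).filter (fun i => mapC a i < mapC a j) with hA
  set B := (Finset.Ico (j+1) (2*m+1)).filter (fun i => mapC a i < mapC a j) with hB
  set L := (Finset.range j).filter (fun i => mapC a j ≤ mapC a i) with hL
  -- split cntB
  have hsplit : cntB m a (mapC a j) = A.card + B.card := by
    rw [cntB]
    have e : (Finset.range (2*m+1)).filter (fun i => mapC a i < mapC a j)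
        = A ∪ B := by
      ext x
      simp only [hA, hB, Finset.mem_union, Finset.mem_filter, Finset.mem_range,
        Finset.mem_Ico]
      constructor
      · rintro ⟨hx, hlt⟩
        rcases Nat.lt_or_ge x j with h | h
        · exact Or.inl ⟨h, hlt⟩
        · refine Or.inr ⟨⟨?_, by omega⟩, hlt⟩
          rcases Nat.eq_or_lt_of_le h with rfl | h'
          · omega
          · omega
      · rintro (⟨hx, hlt⟩ | ⟨hx, hlt⟩) <;> exact ⟨by omega, hlt⟩
    rw [e, Finset.card_union_of_disjoint]
    rw [Finset.disjoint_left]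
    intro x hx hx2
    simp only [hA, hB, Finset.mem_filter, Finset.mem_range, Finset.mem_Ico] at hx hx2
    omega
  -- A and L partition range j
  have hAL : A.card + L.card = j := by
    have h0 := Finset.card_filter_add_card_filter_not
      (s := Finset.range j) (p := fun i => mapC a i < mapC a j)
    rw [Finset.card_range] at h0
    have hLL : L = (Finset.range j).filter (fun i => ¬ mapC a i < mapC a j) := by
      ext x
      simp only [hL, Finset.mem_filter, not_lt]
    rw [hA, hLL, h0]
  -- L explicitly
  have hLcard : L.card = (if 1 ≤ j ∧ mapC a j ≤ mapC a (j-1) then 1 else 0)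
        + (if j % 2 = 1 ∧ 3 ≤ j ∧ mapC a j ≤ mapC a (j-3) then 1 else 0) := by
    split_ifs with h1 h2 h2
    · have : L = {j-1, j-3} := by
        ext x
        simp only [hL, Finset.mem_filter, Finset.mem_range, Finset.mem_insert,
          Finset.mem_singleton]
        constructor
        · rintro ⟨hx, hb⟩
          rcases lowExcl hg hx hj hb with h | h <;> omega
        · rintro (rfl | rfl)
          · exact ⟨by omega, h1.2⟩
          · exact ⟨by omega, h2.2.2⟩
      rw [this, Finset.card_insert_of_notMem (by simp; omega), Finset.card_singleton]
    · have : L = {j-1} := by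
        ext x
        simp only [hL, Finset.mem_filter, Finset.mem_range, Finset.mem_singleton]
        constructor
        · rintro ⟨hx, hb⟩
          rcases lowExcl hg hx hj hb with h | h
          · omega
          · exfalso
            apply h2
            refine ⟨h.1, by omega, ?_⟩
            have e3 : j - 3 = x := by omega
            rw [e3]; exact hb
        · rintro rfl
          exact ⟨by omega, h1.2⟩
      rw [this, Finset.card_singleton]
    · have : L = {j-3} := by
        ext x
        simp only [hL, Finset.mem_filter, Finset.mem_range, Finset.mem_singleton]
        constructor
        · rintro ⟨hx, hb⟩
          rcases lowExcl hg hx hj hb with h | h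
          · exfalso
            apply h1
            refine ⟨by omega, ?_⟩
            have e3 : j - 1 = x := by omega
            rw [e3]; exact hb
          · omega
        · rintro rfl
          exact ⟨by omega, h2.2.2⟩
      rw [this, Finset.card_singleton]
    · have : L = ∅ := by
        ext x
        simp only [hL, Finset.mem_filter, Finset.mem_range, Finset.notMem_empty,
          iff_false, not_and]
        intro hx hb
        rcases lowExcl hg hx hj hb with h | h
        · apply h1
          refine ⟨by omega, ?_⟩
          have e3 : j - 1 = x := by omega
          rw [e3]; exact hb
        · apply h2
          refine ⟨h.1, by omega, ?_⟩
          have e3 : j - 3 = x := by omega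
          rw [e3]; exact hb
      rw [this, Finset.card_empty]
  -- B explicitly
  have hBcard : B.card = (if j % 2 = 0 ∧ j + 1 ≤ 2*m ∧ mapC a (j+1) < mapC a j
      then 1 else 0) := by
    split_ifs with h3
    · have : B = {j+1} := by
        ext x
        simp only [hB, Finset.mem_filter, Finset.mem_Ico, Finset.mem_singleton]
        constructor
        · rintro ⟨hx, hb⟩
          have := highExcl hg (by omega : j < x) (by omega) hb
          omega
        · rintro rfl
          exact ⟨⟨le_refl _, by omega⟩, h3.2.2⟩
      rw [this, Finset.card_singleton]
    · have : B = ∅ := by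
        ext x
        simp only [hB, Finset.mem_filter, Finset.mem_Ico, Finset.notMem_empty,
          iff_false, not_and]
        intro hx hb
        have h := highExcl hg (by omega : j < x) (by omega) hb
        apply h3
        refine ⟨h.2, by omega, ?_⟩
        have e3 : j + 1 = x := by omega
        rw [e3]; exact hb
      rw [this, Finset.card_empty]
  omega


/-- left extension of a pair -/
lemma stairLeft (hg : GoodC m a) : ∀ j, j % 2 = 0 → j + 1 ≤ 2*m → a (j+1) = a j →
    ∃ k, k % 2 = 0 ∧ k ≤ j ∧ (∀ i, k ≤ i → i ≤ j+1 → a i = a k + 2*((i-k)/2)) ∧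
      (1 < k → a (k-2) + 2 < a k) := by
  intro j
  induction j using Nat.strong_induction_on with
  | _ j ih =>
    intro hje hj1 hp
    by_cases hbc : 1 < j → a (j-2) + 2 < a j
    · refine ⟨j, hje, le_refl _, ?_, hbc⟩
      intro i h1 h2
      have : i = j ∨ i = j + 1 := by omega
      rcases this with rfl | rfl
      · simp
      · omega
    · push_neg at hbc
      obtain ⟨hj2, hval⟩ := hbc
      have h2j : a (j-2) + 2 ≤ a j := by
        have := hg.2.1 (j-2) (by omega)
        have e : j - 2 + 2 = j := by omega
        rwa [e] at this
      have heq : a (j-2) + 2 = a j := by omega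
      -- a (j-1) = a (j-2)
      have hm1 : a (j-1) = a (j-2) := by
        have hA := hg.1 (j-2) (by omega)
        have e1 : j - 2 + 1 = j - 1 := by omega
        rw [e1] at hA
        have hB := hg.2.1 (j-1) (by omega)
        have e2 : j - 1 + 2 = j + 1 := by omega
        rw [e2] at hB
        omega
      have hm1' : a (j - 2 + 1) = a (j - 2) := by
        rw [show j - 2 + 1 = j - 1 by omega]; exact hm1
      obtain ⟨k, hk0, hk1, hk2, hk3⟩ := ih (j-2) (by omega) (by omega) (by omega) hm1'
      refine ⟨k, hk0, by omega, ?_, hk3⟩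
      intro i h1 h2
      have hij : i ≤ j - 1 ∨ i = j ∨ i = j + 1 := by omega
      have hkj := hk2 (j-2) (by omega) (by omega)
      rcases hij with h | h | h
      · exact hk2 i h1 (by omega)
      · subst h; omega
      · subst h; omega

/-- right extension of a pair -/
lemma stairRight (hg : GoodC m a) : ∀ d j, 2*m - j ≤ d → j % 2 = 0 → j + 1 ≤ 2*m →
    a (j+1) = a j →
    ∃ l, l % 2 = 1 ∧ j + 1 ≤ l ∧ l ≤ 2*m ∧
      (∀ i, j ≤ i → i ≤ l → a i = a j + 2*((i-j)/2)) ∧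
      (l + 2 ≤ 2*m → a l + 2 < a (l+2)) := by
  intro d
  induction d with
  | zero => intro j h0 hje hj1 hp; omega
  | succ d ih =>
    intro j hd hje hj1 hp
    by_cases hbc : j + 3 ≤ 2*m → a (j+1) + 2 < a (j+3)
    · refine ⟨j+1, by omega, le_refl _, hj1, ?_, ?_⟩
      · intro i h1 h2
        have : i = j ∨ i = j + 1 := by omega
        rcases this with rfl | rfl
        · simp
        · omega
      · intro h
        exact hbc (by omega)
    · push_neg at hbc
      obtain ⟨hj3, hval⟩ := hbc
      have h2j : a (j+1) + 2 ≤ a (j+3) := hg.2.1 (j+1) (by omega)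
      have heq : a (j+3) = a (j+1) + 2 := by omega
      have hm1 : a (j+2) = a (j+3) := by
        have hA : a (j+2) ≤ a (j+3) := hg.1 (j+2) (by omega)
        have hB := hg.2.1 j (by omega)
        omega
      obtain ⟨l, hl0, hl1, hl2, hl3, hl4⟩ := ih (j+2) (by omega) (by omega) (by omega)
        (hm1.symm : a (j+3) = a (j+2))
      refine ⟨l, hl0, by omega, hl2, ?_, hl4⟩
      intro i h1 h2
      have hij : i = j ∨ i = j + 1 ∨ j + 2 ≤ i := by omega
      rcases hij with h | h | h
      · subst h; simp
      · subst h; omega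
      · have h5 := hl3 i h h2
        have hB := hg.2.1 j (by omega)
        have e : i - j = (i - (j+2)) + 2 := by omega
        rw [e]
        omega

/-- maximal staircase through an even-position pair -/
lemma stairMax (hg : GoodC m a) {j : ℕ} (hje : j % 2 = 0) (hj1 : j + 1 ≤ 2*m)
    (hp : a (j+1) = a j) :
    ∃ k l, IsStairC m a k l ∧ k % 2 = 0 ∧ k ≤ j ∧ j + 1 ≤ l := by
  obtain ⟨k, hk0, hk1, hk2, hk3⟩ := stairLeft hg j hje hj1 hp
  obtain ⟨l, hl0, hl1, hl2, hl3, hl4⟩ := stairRight hg (2*m) j (by omega) hje hj1 hp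
  refine ⟨k, l, ⟨by omega, hl2, by omega, ?_, hk3, hl4⟩, hk0, hk1, hl1⟩
  intro i h1 h2
  have haj : a j = a k + 2*((j-k)/2) := hk2 j hk1 (by omega)
  rcases Nat.le_total i j with h | h
  · exact hk2 i h1 (by omega)
  · have := hl3 i h h2
    omega
/-- values along a staircase -/
lemma stairVal (hg : GoodC m a) {k l : ℕ} (hst : IsStairC m a k l) (hke : k % 2 = 0) :
    ∀ i, k ≤ i → i ≤ l → mapC a i + (i - k) % 2 = mapC a k + (i - k) / 2 := by
  obtain ⟨hkl, hl2m, hlk, hpat, hbl, hbr⟩ := hst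
  intro i h1 h2
  have hp := hpat i h1 h2
  have hp1 := hpat (k+1) (by omega) (by omega)
  have hb1 := hg.2.2 (k+1) (by omega)
  have hbi := hg.2.2 i (by omega)
  simp only [mapC]
  omega

lemma stairBelow (hg : GoodC m a) {k l : ℕ} (hst : IsStairC m a k l) (hke : k % 2 = 0) :
    ∀ i, i < k → mapC a i + 2 ≤ mapC a k := by
  obtain ⟨hkl, hl2m, hlk, hpat, hbl, hbr⟩ := hst
  intro i hi
  have hk2 : 2 ≤ k := by omega
  have hp1 := hpat (k+1) (by omega) (by omega)
  rcases Nat.mod_two_eq_zero_or_one i with hip | hip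
  · -- i even, reduce to k-2
    have hmm := mono2 hg (i := i) (j := k-2) (by omega) (by omega) (by omega)
    have hbd := hbl (by omega)
    have hb2 := hg.2.2 (k-2) (by omega)
    have hb0 := hg.2.2 k (by omega)
    simp only [mapC] at *
    omega
  · -- i odd, reduce to k-1
    have hmm := mono2 hg (i := i) (j := k-1) (by omega) (by omega) (by omega)
    have hbd : a (k-1) + 2 ≤ a (k+1) := by
      have := hg.2.1 (k-1) (by omega)
      have e : k - 1 + 2 = k + 1 := by omega
      rwa [e] at this
    have hb2 := hg.2.2 (k-1) (by omega)
    have hb0 := hg.2.2 k (by omega)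
    simp only [mapC] at *
    omega

lemma stairAbove (hg : GoodC m a) {k l : ℕ} (hst : IsStairC m a k l) (hke : k % 2 = 0) :
    ∀ i, l < i → i ≤ 2*m → mapC a (l-1) + 1 ≤ mapC a i := by
  obtain ⟨hkl, hl2m, hlk, hpat, hbl, hbr⟩ := hst
  intro i h1 h2
  have hlo : l % 2 = 1 := by omega
  have hpl1 := hpat (l-1) (by omega) (by omega)
  have hpl := hpat l hkl (le_refl _)
  rcases Nat.mod_two_eq_zero_or_one i with hip | hip
  · -- i even: i ≥ l+1, reduce to l+1
    have hmm := mono2 hg (i := l+1) (j := i) (by omega) (by omega) h2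
    have hbd : a (l-1) + 2 ≤ a (l+1) := by
      have := hg.2.1 (l-1) (by omega)
      have e : l - 1 + 2 = l + 1 := by omega
      rwa [e] at this
    have hb2 := hg.2.2 (l+1) (by omega)
    have hb1 := hg.2.2 (l-1) (by omega)
    simp only [mapC] at *
    omega
  · -- i odd: i ≥ l+2, reduce to l+2
    have hmm := mono2 hg (i := l+2) (j := i) (by omega) (by omega) h2
    have hbd := hbr (by omega)
    have hb2 := hg.2.2 (l+2) (by omega)
    have hb1 := hg.2.2 (l-1) (by omega)
    simp only [mapC] at *
    omega

lemma stairIsolK1 (hg : GoodC m a) {k l : ℕ} (hst : IsStairC m a k l) (hke : k % 2 = 0) :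
    IsIsolC m a (k+1) := by
  have hkl : k ≤ l := hst.1
  have hl2m : l ≤ 2*m := hst.2.1
  have hlk : (l - k) % 2 = 1 := hst.2.2.1
  refine ⟨by omega, ?_⟩
  intro i hi hne
  have hv1 := stairVal hg hst hke (k+1) (by omega) (by omega)
  have hvl1 := stairVal hg hst hke (l-1) (by omega) (by omega)
  rcases Nat.lt_or_ge i k with h | h
  · have := stairBelow hg hst hke i h
    have hv0 := stairVal hg hst hke k (le_refl _) (by omega)
    omega
  · rcases le_or_gt i l with h' | h'
    · have hvi := stairVal hg hst hke i h h'
      omega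
    · have := stairAbove hg hst hke i h' hi
      omega

lemma stairIsolL1 (hg : GoodC m a) {k l : ℕ} (hst : IsStairC m a k l) (hke : k % 2 = 0) :
    IsIsolC m a (l-1) := by
  have hkl : k ≤ l := hst.1
  have hl2m : l ≤ 2*m := hst.2.1
  have hlk : (l - k) % 2 = 1 := hst.2.2.1
  refine ⟨by omega, ?_⟩
  intro i hi hne
  have hv1 := stairVal hg hst hke (k+1) (by omega) (by omega)
  have hvl1 := stairVal hg hst hke (l-1) (by omega) (by omega)
  rcases Nat.lt_or_ge i k with h | h
  · have := stairBelow hg hst hke i h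
    have hv0 := stairVal hg hst hke k (le_refl _) (by omega)
    omega
  · rcases le_or_gt i l with h' | h'
    · have hvi := stairVal hg hst hke i h h'
      omega
    · have := stairAbove hg hst hke i h' hi
      omega

lemma stairBetween (hg : GoodC m a) {k l : ℕ} (hst : IsStairC m a k l) (hke : k % 2 = 0) :
    ∀ i, i ≤ 2*m → mapC a (k+1) < mapC a i → mapC a i < mapC a (l-1) →
      ¬ IsIsolC m a i := by
  have hkl : k ≤ l := hst.1
  have hl2m : l ≤ 2*m := hst.2.1
  have hlk : (l - k) % 2 = 1 := hst.2.2.1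
  intro i hi hlow hhigh hIso
  have hv1 := stairVal hg hst hke (k+1) (by omega) (by omega)
  have hvl1 := stairVal hg hst hke (l-1) (by omega) (by omega)
  have hik : k ≤ i := by
    by_contra hcon
    have := stairBelow hg hst hke i (by omega)
    have hv0 := stairVal hg hst hke k (le_refl _) (by omega)
    omega
  have hil : i ≤ l := by
    by_contra hcon
    have := stairAbove hg hst hke i (by omega) hi
    omega
  have hvi := stairVal hg hst hke i hik hil
  rcases Nat.mod_two_eq_zero_or_one (i - k) with hp | hp
  · -- partner i + 3
    have hle : i + 3 ≤ l := by omega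
    have hvp := stairVal hg hst hke (i+3) (by omega) hle
    exact hIso.2 (i+3) (by omega) (by omega) (by omega)
  · -- partner i - 3
    have hge : k ≤ i - 3 ∧ 3 ≤ i - k := by omega
    have hvp := stairVal hg hst hke (i-3) (by omega) (by omega)
    exact hIso.2 (i-3) (by omega) (by omega) (by omega)


lemma rankEq (hg : GoodC m a) {N : ℕ} {K : ℕ → ℕ} (hE : EnumC m a N K) {t : ℕ}
    (ht : t < N) : cntI m a (mapC a (K t)) = t := by
  rw [cntI]
  have hinj : Set.InjOn K (Finset.range t) := by
    intro s hs s' hs' hss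
    simp only [Finset.coe_range, Set.mem_Iio] at hs hs'
    by_contra hne
    rcases Nat.lt_or_ge s s' with h | h
    · have := hE.2.2 s s' h (by omega); rw [hss] at this; omega
    · have := hE.2.2 s' s (by omega) (by omega); rw [hss] at this; omega
  have himg : (Finset.range (2*m+1)).filter
      (fun i => IsIsolC m a i ∧ mapC a i < mapC a (K t)) = (Finset.range t).image K := by
    ext x
    simp only [Finset.mem_filter, Finset.mem_range, Finset.mem_image]
    constructor
    · rintro ⟨hx, hIso, hlt⟩
      obtain ⟨s, hsN, hsx⟩ := hE.2.1 x hIso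
      refine ⟨s, ?_, hsx⟩
      by_contra hcon
      push_neg at hcon
      rcases eq_or_lt_of_le hcon with h | h
      · subst h; rw [hsx] at hlt; omega
      · have := hE.2.2 t s h hsN
        rw [hsx] at this; omega
    · rintro ⟨s, hs, rfl⟩
      have hIso := hE.1 s (by omega)
      exact ⟨by have := hIso.1; omega, hIso, hE.2.2 s t hs ht⟩
  rw [himg, Finset.card_image_of_injOn hinj, Finset.card_range]

lemma stairK1cnt (hg : GoodC m a) {k l : ℕ} (hst : IsStairC m a k l) (hke : k % 2 = 0) :
    cntB m a (mapC a (k+1)) = k := by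
  have hkl : k ≤ l := hst.1
  have hl2m : l ≤ 2*m := hst.2.1
  have hlk : (l - k) % 2 = 1 := hst.2.2.1
  have hf := cntFormula hg (j := k+1) (by omega)
  have hv1 := stairVal hg hst hke (k+1) (by omega) (by omega)
  have hv0 := stairVal hg hst hke k (le_refl _) (by omega)
  have hc1 : 1 ≤ k+1 ∧ mapC a (k+1) ≤ mapC a (k+1-1) := by
    refine ⟨by omega, ?_⟩
    show mapC a (k+1) ≤ mapC a k
    omega
  have hc2 : ¬ ((k+1) % 2 = 1 ∧ 3 ≤ k+1 ∧ mapC a (k+1) ≤ mapC a (k+1-3)) := by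
    rintro ⟨h1, h2, h3⟩
    have h3' : mapC a (k+1) ≤ mapC a (k-2) := by
      rw [show k+1-3 = k-2 by omega] at h3; exact h3
    have := stairBelow hg hst hke (k-2) (by omega)
    omega
  have hc3 : ¬ ((k+1) % 2 = 0 ∧ k+1+1 ≤ 2*m ∧ mapC a (k+1+1) < mapC a (k+1)) := by
    rintro ⟨h1, -⟩; omega
  rw [if_pos hc1, if_neg hc2, if_neg hc3] at hf
  omega

lemma stairL1cnt (hg : GoodC m a) {k l : ℕ} (hst : IsStairC m a k l) (hke : k % 2 = 0) :
    cntB m a (mapC a (l-1)) = l := by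
  have hkl : k ≤ l := hst.1
  have hl2m : l ≤ 2*m := hst.2.1
  have hlk : (l - k) % 2 = 1 := hst.2.2.1
  have hf := cntFormula hg (j := l-1) (by omega)
  rw [show l-1+1 = l by omega] at hf
  have hv1 := stairVal hg hst hke (k+1) (by omega) (by omega)
  have hvl1 := stairVal hg hst hke (l-1) (by omega) (by omega)
  have hvl := stairVal hg hst hke l hkl (le_refl _)
  have hc1 : ¬ (1 ≤ l-1 ∧ mapC a (l-1) ≤ mapC a (l-1-1)) := by
    rintro ⟨h1, h2⟩
    rcases Nat.lt_or_ge (l-1-1) k with hc | hc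
    · -- l = k+1, l-1-1 = k-1
      have hb := stairBelow hg hst hke (k-1) (by omega)
      have hv0 := stairVal hg hst hke k (le_refl _) (by omega)
      rw [show l-1-1 = k-1 by omega, show l-1 = k by omega] at h2
      omega
    · have hvp := stairVal hg hst hke (l-1-1) hc (by omega)
      omega
  have hc2 : ¬ ((l-1) % 2 = 1 ∧ 3 ≤ l-1 ∧ mapC a (l-1) ≤ mapC a (l-1-3)) := by
    rintro ⟨h1, -⟩; omega
  have hc3 : (l-1) % 2 = 0 ∧ l ≤ 2*m ∧ mapC a l < mapC a (l-1) := by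
    refine ⟨by omega, hl2m, by omega⟩
  rw [if_neg hc1, if_neg hc2, if_pos hc3] at hf
  omega

lemma dispT (hg : GoodC m a) {N : ℕ} {K : ℕ → ℕ} (hE : EnumC m a N K) {t : ℕ}
    (ht : t < N) : t % 2 = cntB m a (mapC a (K t)) % 2 := by
  rw [cntParity hg, rankEq hg hE ht]

end Aux

/-- For a distinguished type-C u-symbol with isolated points `K 0, …, K (N-1)`
(ordered by the entries of `i(a)`; `K t` is displaced when `K t ≢ t (mod 2)`):
the displaced isolated points are exactly the points `k+1, l-1` of the
staircases `[k,l]` with even bottom; each such staircase yields a pair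
`{K t, K (t+1)} = {k+1, l-1}` with `t` even; and distinct staircases with
even bottom give distinct pairs. -/
theorem stmt9 (n m : ℕ) (hn : 1 ≤ n) (hm : 1 ≤ m) (a : ℕ → ℕ)
    (ha : IsUSymC n m a) (hdist : DistC m a)
    (N : ℕ) (K : ℕ → ℕ) (hE : EnumC m a N K) :
    (∀ j, (∃ t, t < N ∧ K t = j ∧ K t % 2 ≠ t % 2) ↔
      (∃ k l, IsStairC m a k l ∧ Even k ∧ (j = k + 1 ∨ j = l - 1))) ∧
    (∀ k l, IsStairC m a k l → Even k →
      ∃ t, Even t ∧ t + 1 < N ∧ ({K t, K (t + 1)} : Finset ℕ) = {k + 1, l - 1}) ∧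
    (∀ k l k' l', IsStairC m a k l → Even k → IsStairC m a k' l' → Even k' →
      (k, l) ≠ (k', l') → ({k + 1, l - 1} : Finset ℕ) ≠ {k' + 1, l' - 1}) := by
  have hg : GoodC m a := ⟨hdist, ha.2.1, auxA ha.1 ha.2.1⟩
  refine ⟨?_, ?_, ?_⟩
  · -- part 1
    intro j
    constructor
    · rintro ⟨t, htN, rfl, hd⟩
      have hIso := hE.1 t htN
      have hj2m : K t ≤ 2*m := hIso.1
      have hpar := dispT hg hE htN
      have hf := cntFormula hg hj2m
      by_cases hc1 : 1 ≤ K t ∧ mapC a (K t) ≤ mapC a (K t - 1)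
      · rw [if_pos hc1] at hf
        obtain ⟨hc1a, hc1b⟩ := hc1
        by_cases hc2 : (K t) % 2 = 1 ∧ 3 ≤ K t ∧ mapC a (K t) ≤ mapC a (K t - 3)
        · rw [if_pos hc2] at hf
          exfalso
          by_cases hc3 : (K t) % 2 = 0 ∧ K t + 1 ≤ 2*m ∧ mapC a (K t + 1) < mapC a (K t)
          · omega
          · rw [if_neg hc3] at hf; omega
        · rw [if_neg hc2] at hf
          by_cases hc3 : (K t) % 2 = 0 ∧ K t + 1 ≤ 2*m ∧ mapC a (K t + 1) < mapC a (K t)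
          · rw [if_pos hc3] at hf; exfalso; omega
          · rw [if_neg hc3] at hf
            rcases Nat.mod_two_eq_zero_or_one (K t) with hje | hjo
            · -- j even : contradiction with isolation
              exfalso
              have hso := stepOdd hg (i := K t - 1) (by omega) (by omega)
              rw [show K t - 1 + 1 = K t by omega] at hso
              exact hIso.2 (K t - 1) (by omega) (by omega) (by omega)
            · -- j odd : j = k+1 of a staircase
              have hne := hIso.2 (K t - 1) (by omega) (by omega)
              have hmon : a (K t - 1) ≤ a (K t) := by
                have := hg.1 (K t - 1) (by omega)
                rwa [show K t - 1 + 1 = K t by omega] at this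
              have heqa : a (K t - 1 + 1) = a (K t - 1) := by
                rw [show K t - 1 + 1 = K t by omega]
                have b1 := hg.2.2 (K t) (by omega)
                have b2 := hg.2.2 (K t - 1) (by omega)
                simp only [mapC] at hc1b hne
                omega
              obtain ⟨k, l, hst, hke, hkj, hjl⟩ := stairMax hg (j := K t - 1)
                (by omega) (by omega) heqa
              refine ⟨k, l, hst, Nat.even_iff.mpr hke, Or.inl ?_⟩
              by_contra hcon
              have hkl := hst.1
              have hl2m := hst.2.1
              have hlk := hst.2.2.1
              apply hc2
              have hv3 := stairVal hg hst hke (K t - 3) (by omega) (by omega)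
              have hvj := stairVal hg hst hke (K t) (by omega) (by omega)
              exact ⟨hjo, by omega, by omega⟩
      · rw [if_neg hc1] at hf
        by_cases hc2 : (K t) % 2 = 1 ∧ 3 ≤ K t ∧ mapC a (K t) ≤ mapC a (K t - 3)
        · -- impossible: would force c1
          exfalso
          rw [if_pos hc2] at hf
          obtain ⟨hjo, hj3, hb3⟩ := hc2
          have hm2 : a (K t - 1) ≤ a (K t) := by
            have := hg.1 (K t - 1) (by omega)
            rwa [show K t - 1 + 1 = K t by omega] at this
          have hm3 : a (K t - 3) + 2 ≤ a (K t - 1) := by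
            have := hg.2.1 (K t - 3) (by omega)
            rwa [show K t - 3 + 2 = K t - 1 by omega] at this
          apply hc1
          refine ⟨by omega, ?_⟩
          have b1 := hg.2.2 (K t) (by omega)
          have b2 := hg.2.2 (K t - 1) (by omega)
          have b3 := hg.2.2 (K t - 3) (by omega)
          simp only [mapC] at hb3 ⊢
          omega
        · rw [if_neg hc2] at hf
          by_cases hc3 : (K t) % 2 = 0 ∧ K t + 1 ≤ 2*m ∧ mapC a (K t + 1) < mapC a (K t)
          · rw [if_pos hc3] at hf
            obtain ⟨hje, hjm, hblt⟩ := hc3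
            have heqa : a (K t + 1) = a (K t) := by
              have := hg.1 (K t) (by omega)
              have b1 := hg.2.2 (K t) (by omega)
              have b2 := hg.2.2 (K t + 1) (by omega)
              simp only [mapC] at hblt
              omega
            obtain ⟨k, l, hst, hke, hkj, hjl⟩ := stairMax hg hje hjm heqa
            refine ⟨k, l, hst, Nat.even_iff.mpr hke, Or.inr ?_⟩
            by_contra hcon
            have hkl := hst.1
            have hl2m := hst.2.1
            have hlk := hst.2.2.1
            have hv0 := stairVal hg hst hke (K t) (by omega) (by omega)
            have hv3 := stairVal hg hst hke (K t + 3) (by omega) (by omega)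
            exact hIso.2 (K t + 3) (by omega) (by omega) (by omega)
          · rw [if_neg hc3] at hf; exfalso; omega
    · rintro ⟨k, l, hst, hkeE, hor⟩
      have hke := Nat.even_iff.mp hkeE
      have hkl := hst.1
      have hl2m := hst.2.1
      have hlk := hst.2.2.1
      rcases hor with rfl | rfl
      · obtain ⟨t, htN, hKt⟩ := hE.2.1 (k+1) (stairIsolK1 hg hst hke)
        refine ⟨t, htN, hKt, ?_⟩
        have hpar := dispT hg hE htN
        rw [hKt, stairK1cnt hg hst hke] at hpar
        rw [hKt]
        omega
      · obtain ⟨t, htN, hKt⟩ := hE.2.1 (l-1) (stairIsolL1 hg hst hke)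
        refine ⟨t, htN, hKt, ?_⟩
        have hpar := dispT hg hE htN
        rw [hKt, stairL1cnt hg hst hke] at hpar
        rw [hKt]
        omega
  · -- part 2
    intro k l hst hkeE
    have hke := Nat.even_iff.mp hkeE
    have hkl := hst.1
    have hl2m := hst.2.1
    have hlk := hst.2.2.1
    obtain ⟨t1, ht1N, hKt1⟩ := hE.2.1 (k+1) (stairIsolK1 hg hst hke)
    obtain ⟨t2, ht2N, hKt2⟩ := hE.2.1 (l-1) (stairIsolL1 hg hst hke)
    have hv1 := stairVal hg hst hke (k+1) (by omega) (by omega)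
    have hvl1 := stairVal hg hst hke (l-1) (by omega) (by omega)
    have hvlt : mapC a (K t1) < mapC a (K t2) := by rw [hKt1, hKt2]; omega
    have ht12 : t1 < t2 := by
      rcases Nat.lt_trichotomy t1 t2 with h | h | h
      · exact h
      · exfalso; rw [h] at hvlt; omega
      · exfalso; have := hE.2.2 t2 t1 h ht1N; omega
    have hsucc : t2 = t1 + 1 := by
      by_contra hcon
      have hlt2 : t1 + 1 < t2 := by omega
      have hx := hE.1 (t1+1) (by omega)
      have h1 := hE.2.2 t1 (t1+1) (by omega) (by omega)
      have h2 := hE.2.2 (t1+1) t2 hlt2 ht2N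
      exact stairBetween hg hst hke (K (t1+1)) hx.1
        (by rw [← hKt1]; exact h1) (by rw [← hKt2]; exact h2) hx
    have hpar := dispT hg hE ht1N
    rw [hKt1, stairK1cnt hg hst hke] at hpar
    refine ⟨t1, Nat.even_iff.mpr (by omega), by omega, ?_⟩
    have hK2 : K (t1+1) = l - 1 := by rw [← hsucc]; exact hKt2
    rw [hKt1, hK2]
  · -- part 3
    intro k l k' l' hst hkeE hst' hkeE' hne heq
    have hke := Nat.even_iff.mp hkeE
    have hke' := Nat.even_iff.mp hkeE'
    have h1 := hst.1
    have h2 := hst.2.2.1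
    have h1' := hst'.1
    have h2' := hst'.2.2.1
    have hmem : k + 1 ∈ ({k'+1, l'-1} : Finset ℕ) := by rw [← heq]; simp
    have hmem2 : l - 1 ∈ ({k'+1, l'-1} : Finset ℕ) := by rw [← heq]; simp
    simp only [Finset.mem_insert, Finset.mem_singleton] at hmem hmem2
    apply hne
    have hkk : k = k' := by rcases hmem with h | h <;> omega
    have hll : l = l' := by rcases hmem2 with h | h <;> omega
    rw [hkk, hll]
end

section
/- Let a be a distinguished type-C u-symbol. Then: the top of each block of a is a nondisplaced isolated point; the bottom of each block of a that has a bottom is a nondisplaced isolated point; every other isolated point of a contained in a block is displaced, and each block contains an even number (possibly zero) of such displaced isolated points; and every isolated point of a belongs to some block. -/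
open scoped Classical

/-- `[k,l]` is a block of `a` with a bottom: a union of consecutive parts
`P 0, …, P (r-1)`, where `P 0` and `P (r-1)` are ladders, `P (r-1)` is the unique
part with even top, and `P 0` is the unique part with odd bottom. -/
def IsBlockBotC (m : ℕ) (a : ℕ → ℕ) (k l : ℕ) : Prop :=
  ∃ (r : ℕ) (P : ℕ → ℕ × ℕ), 0 < r ∧ (P 0).1 = k ∧ (P (r - 1)).2 = l ∧
    (∀ s, s < r → IsPartC m a (P s).1 (P s).2) ∧
    (∀ s, s + 1 < r → (P (s + 1)).1 = (P s).2 + 1) ∧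
    IsLadderC m a (P 0).1 (P 0).2 ∧
    IsLadderC m a (P (r - 1)).1 (P (r - 1)).2 ∧
    (∀ s, s < r → (Even ((P s).2) ↔ s = r - 1)) ∧
    (∀ s, s < r → (Odd ((P s).1) ↔ s = 0))

/-- `[0,l]` is the bottomless block of `a`: a union of consecutive parts
starting at `0`, all with even bottom, the last one being a ladder and the
unique part with even top. -/
def IsBlockTopC (m : ℕ) (a : ℕ → ℕ) (l : ℕ) : Prop :=
  ∃ (r : ℕ) (P : ℕ → ℕ × ℕ), 0 < r ∧ (P 0).1 = 0 ∧ (P (r - 1)).2 = l ∧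
    (∀ s, s < r → IsPartC m a (P s).1 (P s).2) ∧
    (∀ s, s + 1 < r → (P (s + 1)).1 = (P s).2 + 1) ∧
    IsLadderC m a (P (r - 1)).1 (P (r - 1)).2 ∧
    (∀ s, s < r → (Even ((P s).2) ↔ s = r - 1)) ∧
    (∀ s, s < r → Even ((P s).1))

/-- `[k,l]` is a block of `a` (either with a bottom, or the bottomless block). -/
def IsBlockC (m : ℕ) (a : ℕ → ℕ) (k l : ℕ) : Prop :=
  IsBlockBotC m a k l ∨ (k = 0 ∧ IsBlockTopC m a l)

/-!
Write `b = i(a)`. Since `a i + 2 ≤ a (i + 2)`, `b` is strictly increasing along each parity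
class, so a value of `b` is taken at most twice, at indices of opposite parity. If `K t = k` is
isolated, `t` counts the isolated indices below `k` in `b`; the non-isolated ones among all indices
below `k` come in pairs, so `t` has the parity of their total number, which is `k`, or `k ± 1`
exactly when `k` lies in a pair `{2i, 2i+1}` of equal entries of `a`. So an isolated point is
displaced iff it lies in such a flat pair.

Inside a ladder only an odd bottom or an even top can be isolated, and these lie in no flat pair,
while every point of a staircase with even bottom does. The ends of a block cut `b` (all values
below the cut are smaller than all values above it), so coinciding values pair up inside the
block: the number of isolated points in `[k, l]` has the parity of `l + 1 - k`, and removing the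
nondisplaced ends leaves an even number. Finally, an isolated point lies in a ladder or in a
staircase with even bottom, and a block around it is obtained by adding maximal parts upwards up
to the first even top, and downwards down to a ladder with odd bottom or to the index `0`.
-/

structure IsDistShapeC (m : ℕ) (a : ℕ → ℕ) : Prop where
  one_le : 1 ≤ a 1
  step : ∀ i, i + 2 ≤ 2 * m → a i + 2 ≤ a (i + 2)
  mono : DistC m a

/-- `x` lies in a pair `{2i, 2i+1}` of equal entries of `a`. -/
def InFlatPairC (m : ℕ) (a : ℕ → ℕ) (x : ℕ) : Prop :=
  (x % 2 = 1 ∧ a x = a (x - 1)) ∨ (x % 2 = 0 ∧ x < 2 * m ∧ a (x + 1) = a x)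

theorem not_isIsolC_of_mapC_eq {m : ℕ} {a : ℕ → ℕ} {x y : ℕ} (hx : ¬ IsIsolC m a x)
    (hx2 : x ≤ 2 * m) (h : mapC a y = mapC a x) : ¬ IsIsolC m a y := by
  intro hy
  by_cases hxy : x = y
  · exact hx (hxy ▸ hy)
  · exact hy.2 x hx2 hxy h.symm

/-! ### The symbol `i(a)` -/

namespace IsDistShapeC

variable {m : ℕ} {a : ℕ → ℕ}

theorem half_le (ha : IsDistShapeC m a) {j : ℕ} (hj : j ≤ 2 * m) : (j + 1) / 2 ≤ a j := by
  induction j using Nat.strong_induction_on with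
  | _ j ih =>
    match j, hj with
    | 0, _ => omega
    | 1, _ => exact ha.one_le
    | j + 2, hj =>
      have := ih j (by omega) (by omega)
      have := ha.step j hj
      omega

theorem add_two_le (ha : IsDistShapeC m a) {i j : ℕ} (hij : i + 2 = j) (hj : j ≤ 2 * m) :
    a i + 2 ≤ a j :=
  hij ▸ ha.step i (hij ▸ hj)

theorem le_of_succ_eq (ha : IsDistShapeC m a) {i j : ℕ} (hij : i + 1 = j) (hj : j ≤ 2 * m) :
    a i ≤ a j :=
  hij ▸ ha.mono i (hij ▸ hj)

theorem mapC_lt_mapC_add_two (ha : IsDistShapeC m a) {i : ℕ} (hi : i + 2 ≤ 2 * m) :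
    mapC a i < mapC a (i + 2) := by
  have := ha.step i hi
  have := ha.half_le (j := i) (by omega)
  simp only [mapC]
  omega

theorem mapC_lt_mapC (ha : IsDistShapeC m a) {i j : ℕ} (hij : i < j) (hj : j ≤ 2 * m)
    (hpar : i % 2 = j % 2) : mapC a i < mapC a j := by
  obtain ⟨s, rfl⟩ : ∃ s, j = i + 2 * (s + 1) := ⟨(j - i) / 2 - 1, by omega⟩
  induction s with
  | zero => exact ha.mapC_lt_mapC_add_two hj
  | succ s ih =>
    have := ih (by omega) (by omega) (by omega)
    have := ha.mapC_lt_mapC_add_two (i := i + 2 * (s + 1)) (by omega)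
    rw [show i + 2 * (s + 1 + 1) = i + 2 * (s + 1) + 2 by ring]
    omega

theorem mapC_succ (ha : IsDistShapeC m a) {i : ℕ} (hi : i + 1 ≤ 2 * m) :
    mapC a (i + 1) + (i + 1) % 2 + a i = mapC a i + a (i + 1) := by
  have := ha.half_le (j := i) (by omega)
  have := ha.half_le hi
  have := ha.mono i hi
  simp only [mapC]
  omega

/-- Along `i(a)`, only a step from an even to the next odd index can go down. -/
theorem mapC_le_mapC (ha : IsDistShapeC m a) {i j : ℕ} (hij : i ≤ j) (hj : j ≤ 2 * m)
    (hpar : i % 2 = 1 ∨ j % 2 = 0) : mapC a i ≤ mapC a j := by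
  rcases Nat.eq_or_lt_of_le hij with rfl | hlt
  · rfl
  by_cases hsame : i % 2 = j % 2
  · exact (ha.mapC_lt_mapC hlt hj hsame).le
  have := ha.mapC_succ (i := j - 1) (by omega)
  have := ha.le_of_succ_eq (i := j - 1) (j := j) (by omega) hj
  rw [show j - 1 + 1 = j by omega] at *
  rcases Nat.eq_or_lt_of_le (show i ≤ j - 1 by omega) with rfl | h
  · omega
  · have := ha.mapC_lt_mapC h (by omega) (by omega)
    omega

theorem mapC_le_mapC_of_mod_eq (ha : IsDistShapeC m a) {i j : ℕ} (hij : i ≤ j) (hj : j ≤ 2 * m)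
    (hpar : i % 2 = j % 2) : mapC a i ≤ mapC a j :=
  ha.mapC_le_mapC hij hj (by omega)

theorem mod_two_ne_of_mapC_eq (ha : IsDistShapeC m a) {i j : ℕ} (hi : i ≤ 2 * m) (hj : j ≤ 2 * m)
    (hne : i ≠ j) (h : mapC a i = mapC a j) : i % 2 ≠ j % 2 := by
  intro hpar
  rcases Nat.lt_or_gt_of_ne hne with hlt | hlt
  · exact (ha.mapC_lt_mapC hlt hj hpar).ne h
  · exact (ha.mapC_lt_mapC hlt hi hpar.symm).ne' h

theorem eq_of_mapC_eq (ha : IsDistShapeC m a) {i j k : ℕ} (hi : i ≤ 2 * m) (hj : j ≤ 2 * m)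
    (hk : k ≤ 2 * m) (hik : i ≠ k) (hjk : j ≠ k) (hi' : mapC a i = mapC a k)
    (hj' : mapC a j = mapC a k) : i = j := by
  by_contra hij
  have := ha.mod_two_ne_of_mapC_eq hi hk hik hi'
  have := ha.mod_two_ne_of_mapC_eq hj hk hjk hj'
  have := ha.mod_two_ne_of_mapC_eq hi hj hij (hi'.trans hj'.symm)
  omega

theorem mapC_lt_mapC_of_cut (ha : IsDistShapeC m a) {c i j : ℕ} (hc : c % 2 = 1)
    (hcut : mapC a (c - 1) < mapC a c) (hic : i < c) (hcj : c ≤ j) (hj : j ≤ 2 * m) :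
    mapC a i < mapC a j :=
  calc mapC a i ≤ mapC a (c - 1) := ha.mapC_le_mapC (by omega) (by omega) (by omega)
    _ < mapC a c := hcut
    _ ≤ mapC a j := ha.mapC_le_mapC hcj hj (by omega)

theorem isIsolC_of_mapC_lt (ha : IsDistShapeC m a) {k : ℕ} (hk : k ≤ 2 * m)
    (hpred : 0 < k → mapC a (k - 1) < mapC a k) (hsucc : k < 2 * m → mapC a k < mapC a (k + 1)) :
    IsIsolC m a k := by
  refine ⟨hk, fun j hj hjk => ?_⟩
  by_cases hpar : j % 2 = k % 2
  · exact fun h => ha.mod_two_ne_of_mapC_eq hj hk hjk h hpar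
  rcases Nat.lt_or_gt_of_ne hjk with hlt | hlt
  · have := ha.mapC_le_mapC_of_mod_eq (i := j) (j := k - 1) (by omega) (by omega) (by omega)
    have := hpred (by omega)
    omega
  · have := ha.mapC_le_mapC_of_mod_eq (i := k + 1) (j := j) (by omega) hj (by omega)
    have := hsucc (by omega)
    omega

/-- Each value of `i(a)` taken at a non-isolated index is taken exactly twice. -/
theorem even_card_of_not_isIsolC (ha : IsDistShapeC m a) {s : Finset ℕ}
    (hs : ∀ x ∈ s, x ≤ 2 * m ∧ ¬ IsIsolC m a x)
    (hclosed : ∀ x ∈ s, ∀ y ≤ 2 * m, mapC a y = mapC a x → y ∈ s) : Even s.card := by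
  have hfiber : ∀ v ∈ s.image (mapC a), (s.filter (fun x => mapC a x = v)).card = 2 := by
    simp only [Finset.mem_image]
    rintro v ⟨x, hx, rfl⟩
    obtain ⟨hx2, hxiso⟩ := hs x hx
    obtain ⟨y, hy2, hyx, hy⟩ : ∃ y ≤ 2 * m, y ≠ x ∧ mapC a y = mapC a x := by
      by_contra! h
      exact hxiso ⟨hx2, h⟩
    rw [Finset.card_eq_two]
    refine ⟨x, y, hyx.symm, Finset.ext fun z => ?_⟩
    simp only [Finset.mem_filter, Finset.mem_insert, Finset.mem_singleton]
    constructor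
    · rintro ⟨hz, hzx⟩
      by_cases hzx' : z = x
      · exact Or.inl hzx'
      · exact Or.inr (ha.eq_of_mapC_eq (hs z hz).1 hy2 hx2 hzx' hyx hzx hy)
    · rintro (rfl | rfl)
      · exact ⟨hx, rfl⟩
      · exact ⟨hclosed x hx z hy2 hy, hy⟩
  rw [Finset.card_eq_sum_card_image (mapC a) s, Finset.sum_const_nat hfiber]
  exact ⟨_, (mul_two _)⟩

theorem mapC_lt_iff (ha : IsDistShapeC m a) {j k : ℕ} (hiso : IsIsolC m a k) (hj : j ≤ 2 * m) :
    mapC a j < mapC a k ↔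
      (j < k ∧ ¬ (j = k - 1 ∧ k % 2 = 1 ∧ a k = a (k - 1))) ∨
        (j = k + 1 ∧ k % 2 = 0 ∧ a (k + 1) = a k) := by
  obtain ⟨hk, hisol⟩ := hiso
  rcases lt_trichotomy j k with hjk | rfl | hkj
  · have hne := hisol j hj hjk.ne
    have := ha.mapC_succ (i := k - 1) (by omega)
    have := ha.mono (k - 1) (by omega)
    rw [show k - 1 + 1 = k by omega] at *
    by_cases hpar : j % 2 = k % 2
    · have := ha.mapC_lt_mapC hjk hk hpar
      omega
    · rcases Nat.eq_or_lt_of_le (show j ≤ k - 1 by omega) with rfl | hlt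
      · omega
      · have := ha.mapC_lt_mapC hlt (by omega) (by omega)
        omega
  · omega
  · have hne := hisol j hj hkj.ne'
    have := ha.mapC_succ (i := k) (by omega)
    have := ha.mono k (by omega)
    by_cases hpar : j % 2 = k % 2
    · have := ha.mapC_lt_mapC hkj hj hpar.symm
      omega
    · rcases Nat.eq_or_lt_of_le (show k + 1 ≤ j by omega) with rfl | hlt
      · omega
      · have := ha.mapC_lt_mapC hlt hj (by omega)
        omega

/-- The indices below an isolated point `k` in `i(a)` are those below `k` in `ℕ`, except that
`k - 1` moves above `k` or `k + 1` below `k` exactly when `k` lies in a flat pair. -/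
theorem card_filter_mapC_lt_mod_two (ha : IsDistShapeC m a) {k : ℕ} (hiso : IsIsolC m a k) :
    ((Finset.range (2 * m + 1)).filter (fun j => mapC a j < mapC a k)).card % 2 = k % 2 ↔
      ¬ InFlatPairC m a k := by
  have hk := hiso.1
  have key := fun j (hj : j ≤ 2 * m) => ha.mapC_lt_iff (j := j) hiso hj
  unfold InFlatPairC
  by_cases hA : k % 2 = 1 ∧ a k = a (k - 1)
  · have hL : (Finset.range (2 * m + 1)).filter (fun j => mapC a j < mapC a k) =
        (Finset.range k).erase (k - 1) := by
      ext j
      simp only [Finset.mem_filter, Finset.mem_range, Finset.mem_erase]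
      by_cases hj : j ≤ 2 * m
      · rw [key j hj]; omega
      · omega
    rw [hL, Finset.card_erase_of_mem (by simp; omega), Finset.card_range]
    omega
  by_cases hB : k % 2 = 0 ∧ k < 2 * m ∧ a (k + 1) = a k
  · have hL : (Finset.range (2 * m + 1)).filter (fun j => mapC a j < mapC a k) =
        insert (k + 1) (Finset.range k) := by
      ext j
      simp only [Finset.mem_filter, Finset.mem_range, Finset.mem_insert]
      by_cases hj : j ≤ 2 * m
      · rw [key j hj]; omega
      · omega
    rw [hL, Finset.card_insert_of_notMem (by simp), Finset.card_range]
    omega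
  · have hL : (Finset.range (2 * m + 1)).filter (fun j => mapC a j < mapC a k) =
        Finset.range k := by
      ext j
      simp only [Finset.mem_filter, Finset.mem_range]
      by_cases hj : j ≤ 2 * m
      · rw [key j hj]; omega
      · omega
    rw [hL, Finset.card_range]
    omega

end IsDistShapeC

/-! ### Displaced isolated points -/

namespace EnumC

variable {m N : ℕ} {a K : ℕ → ℕ}

theorem card_filter_lt (hE : EnumC m a N K) {t : ℕ} (ht : t < N) :
    ((Finset.range (2 * m + 1)).filter
      (fun j => mapC a j < mapC a (K t) ∧ IsIsolC m a j)).card = t := by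
  obtain ⟨hiso, hsurj, hmono⟩ := hE
  have hinj : ∀ s < N, ∀ s' < N, K s = K s' → s = s' := by
    intro s hs s' hs' h
    by_contra hne
    rcases Nat.lt_or_gt_of_ne hne with hlt | hlt
    · exact (hmono s s' hlt hs').ne (congrArg (mapC a) h)
    · exact (hmono s' s hlt hs).ne' (congrArg (mapC a) h)
  refine (Finset.card_nbij K (fun s hs => ?_) (fun s hs s' hs' h => ?_) (fun j hj => ?_)).symm.trans
    (Finset.card_range t)
  · simp only [Finset.coe_range, Set.mem_Iio] at hs
    simp only [Finset.coe_filter, Finset.mem_range, Set.mem_ofPred_eq]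
    exact ⟨by have := (hiso s (by omega)).1; omega, hmono s t hs ht, hiso s (by omega)⟩
  · simp only [Finset.coe_range, Set.mem_Iio] at hs hs'
    exact hinj s (by omega) s' (by omega) h
  · simp only [Finset.coe_filter, Finset.mem_range, Set.mem_ofPred_eq] at hj
    obtain ⟨s, hs, rfl⟩ := hsurj j hj.2.2
    refine ⟨s, ?_, rfl⟩
    simp only [Finset.coe_range, Set.mem_Iio]
    by_contra! hts
    rcases Nat.eq_or_lt_of_le hts with rfl | hlt
    · exact lt_irrefl _ hj.2.1
    · exact (hmono t s hlt hs).not_gt hj.2.1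

/-- The parity of `t` is that of the number of indices below `K t` in `i(a)`, since the
non-isolated ones among them come in pairs. -/
theorem mod_two_eq_iff (hE : EnumC m a N K) (ha : IsDistShapeC m a) {t : ℕ} (ht : t < N) :
    K t % 2 = t % 2 ↔ ¬ InFlatPairC m a (K t) := by
  have hiso := hE.1 t ht
  set below := (Finset.range (2 * m + 1)).filter (fun j => mapC a j < mapC a (K t))
  have hsplit := Finset.card_filter_add_card_filter_not (s := below) (IsIsolC m a)
  rw [Finset.filter_filter, hE.card_filter_lt ht] at hsplit
  obtain ⟨c, hc⟩ : Even (below.filter (fun j => ¬ IsIsolC m a j)).card := by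
    refine ha.even_card_of_not_isIsolC (fun x hx => ?_) (fun x hx y hy hyx => ?_)
    · simp only [below, Finset.mem_filter, Finset.mem_range] at hx
      exact ⟨by omega, hx.2⟩
    · simp only [below, Finset.mem_filter, Finset.mem_range] at hx ⊢
      exact ⟨⟨by omega, hyx ▸ hx.1.2⟩, not_isIsolC_of_mapC_eq hx.2 (by omega) hyx⟩
  rw [← ha.card_filter_mapC_lt_mod_two hiso]
  change _ ↔ below.card % 2 = _
  omega

theorem displaced_iff (hE : EnumC m a N K) (ha : IsDistShapeC m a) {j : ℕ} :
    (∃ t, t < N ∧ K t = j ∧ K t % 2 ≠ t % 2) ↔ IsIsolC m a j ∧ InFlatPairC m a j := by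
  constructor
  · rintro ⟨t, ht, rfl, hdisp⟩
    exact ⟨hE.1 t ht, not_not.mp (mt (hE.mod_two_eq_iff ha ht).mpr hdisp)⟩
  · rintro ⟨hiso, hflat⟩
    obtain ⟨t, ht, rfl⟩ := hE.2.1 j hiso
    exact ⟨t, ht, rfl, fun h => (hE.mod_two_eq_iff ha ht).mp h hflat⟩

end EnumC

/-! ### Isolated points in blocks -/

namespace IsLadderC

variable {m : ℕ} {a : ℕ → ℕ} {p q : ℕ}

theorem pred_lt_top (hl : IsLadderC m a p q) (hq : 0 < q) : a (q - 1) < a q := by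
  obtain ⟨hpq, -, hpat, hbot, -⟩ := hl
  rcases Nat.eq_or_lt_of_le hpq with rfl | hlt
  · have := hbot hq
    omega
  · have := hpat (q - 1) (by omega) (by omega)
    have := hpat q hpq le_rfl
    omega

theorem bot_lt_succ (hl : IsLadderC m a p q) (hp : p < 2 * m) : a p < a (p + 1) := by
  obtain ⟨hpq, -, hpat, -, htop⟩ := hl
  rcases Nat.eq_or_lt_of_le hpq with rfl | hlt
  · have := htop hp
    omega
  · have := hpat (p + 1) (by omega) (by omega)
    omega

theorem mapC_pred_lt_bot (hl : IsLadderC m a p q) (ha : IsDistShapeC m a) (hp : p % 2 = 1) :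
    mapC a (p - 1) < mapC a p := by
  have := ha.mapC_succ (i := p - 1) (by have := hl.2.1; have := hl.1; omega)
  have := hl.2.2.2.1 (by omega)
  rw [show p - 1 + 1 = p by omega] at *
  omega

theorem mapC_lt_succ_top (hl : IsLadderC m a p q) (ha : IsDistShapeC m a) (hq : q % 2 = 0)
    (hq2 : q < 2 * m) : mapC a q < mapC a (q + 1) := by
  have := ha.mapC_succ (i := q) hq2
  have := hl.2.2.2.2 hq2
  omega

theorem isIsolC_top (hl : IsLadderC m a p q) (ha : IsDistShapeC m a) (hq : q % 2 = 0) :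
    IsIsolC m a q := by
  refine ha.isIsolC_of_mapC_lt hl.2.1 (fun hq0 => ?_) (hl.mapC_lt_succ_top ha hq)
  have := ha.mapC_succ (i := q - 1) (by have := hl.2.1; omega)
  have := hl.pred_lt_top hq0
  rw [show q - 1 + 1 = q by omega] at *
  omega

theorem isIsolC_bot (hl : IsLadderC m a p q) (ha : IsDistShapeC m a) (hp : p % 2 = 1) :
    IsIsolC m a p := by
  refine ha.isIsolC_of_mapC_lt (by have := hl.2.1; have := hl.1; omega)
    (fun _ => hl.mapC_pred_lt_bot ha hp) (fun hp2 => ?_)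
  have := ha.mapC_succ (i := p) hp2
  have := hl.bot_lt_succ hp2
  omega

theorem not_inFlatPairC_top (hl : IsLadderC m a p q) (hq : q % 2 = 0) : ¬ InFlatPairC m a q := by
  rintro (⟨h, -⟩ | ⟨-, hq2, hflat⟩)
  · omega
  · have := hl.2.2.2.2 hq2
    omega

theorem not_inFlatPairC_bot (hl : IsLadderC m a p q) (hp : p % 2 = 1) : ¬ InFlatPairC m a p := by
  rintro (⟨-, hflat⟩ | ⟨h, -⟩)
  · have := hl.2.2.2.1 (by omega)
    omega
  · omega

/-- Inside a ladder, `i(a)` takes equal values at `2i` and `2i + 1`. -/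
theorem eq_of_isIsolC (hl : IsLadderC m a p q) (ha : IsDistShapeC m a) {j : ℕ} (hpj : p ≤ j)
    (hjq : j ≤ q) (hiso : IsIsolC m a j) : (j = p ∧ p % 2 = 1) ∨ (j = q ∧ q % 2 = 0) := by
  obtain ⟨-, hq2, hpat, -, -⟩ := hl
  by_contra hnot
  rcases Nat.mod_two_eq_zero_or_one j with hj | hj
  · have := hpat j hpj (by omega)
    have := hpat (j + 1) (by omega) (by omega)
    have := ha.mapC_succ (i := j) (by omega)
    exact hiso.2 (j + 1) (by omega) (by omega) (by omega)
  · have := hpat j hpj hjq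
    have := hpat (j - 1) (by omega) (by omega)
    have := ha.mapC_succ (i := j - 1) (by omega)
    rw [show j - 1 + 1 = j by omega] at *
    exact hiso.2 (j - 1) (by omega) (by omega) (by omega)

end IsLadderC

theorem IsStairC.inFlatPairC_of_isIsolC {m : ℕ} {a : ℕ → ℕ} {p q : ℕ} (hs : IsStairC m a p q)
    (ha : IsDistShapeC m a) {j : ℕ} (hpj : p ≤ j) (hjq : j ≤ q) (hiso : IsIsolC m a j) :
    InFlatPairC m a j := by
  obtain ⟨-, hq2, hlen, hpat, -, -⟩ := hs
  rcases Nat.mod_two_eq_zero_or_one p with hp | hp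
  · rcases Nat.mod_two_eq_zero_or_one j with hj | hj
    · have := hpat j hpj hjq
      have := hpat (j + 1) (by omega) (by omega)
      exact Or.inr ⟨hj, by omega, by omega⟩
    · have := hpat j hpj hjq
      have := hpat (j - 1) (by omega) (by omega)
      exact Or.inl ⟨hj, by omega⟩
  · exfalso
    rcases Nat.mod_two_eq_zero_or_one j with hj | hj
    · have := hpat j hpj hjq
      have := hpat (j - 1) (by omega) (by omega)
      have := ha.mapC_succ (i := j - 1) (by omega)
      rw [show j - 1 + 1 = j by omega] at *
      exact hiso.2 (j - 1) (by omega) (by omega) (by omega)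
    · have := hpat j hpj hjq
      have := hpat (j + 1) (by omega) (by omega)
      have := ha.mapC_succ (i := j) (by omega)
      exact hiso.2 (j + 1) (by omega) (by omega) (by omega)

namespace IsPartC

variable {m : ℕ} {a : ℕ → ℕ} {p e : ℕ}

theorem le (h : IsPartC m a p e) : p ≤ e := h.elim (·.1) (·.1)

theorem snd_le (h : IsPartC m a p e) : e ≤ 2 * m := h.elim (·.2.1) (·.2.1)

theorem isLadderC_of_mod_eq (h : IsPartC m a p e) (hpe : p % 2 = e % 2) : IsLadderC m a p e :=
  h.resolve_right fun hs => by have := hs.1; have := hs.2.2.1; omega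

end IsPartC

section Parts

variable {r : ℕ} {P : ℕ → ℕ × ℕ}

theorem exists_mem_of_consecutive (hcons : ∀ s, s + 1 < r → (P (s + 1)).1 = (P s).2 + 1)
    (hr : 0 < r) {j : ℕ} (hj0 : (P 0).1 ≤ j) (hj : j ≤ (P (r - 1)).2) :
    ∃ s < r, (P s).1 ≤ j ∧ j ≤ (P s).2 := by
  suffices ∀ s < r, j ≤ (P s).2 → ∃ s' < r, (P s').1 ≤ j ∧ j ≤ (P s').2 from
    this (r - 1) (by omega) hj
  intro s
  induction s with
  | zero => exact fun hs hjs => ⟨0, hs, hj0, hjs⟩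
  | succ s ih =>
    intro hs hjs
    by_cases hle : (P (s + 1)).1 ≤ j
    · exact ⟨s + 1, hs, hle, hjs⟩
    · exact ih (by omega) (by have := hcons s hs; omega)

theorem fst_le_snd_of_consecutive (hcons : ∀ s, s + 1 < r → (P (s + 1)).1 = (P s).2 + 1)
    (hle : ∀ s < r, (P s).1 ≤ (P s).2) : ∀ s < r, (P 0).1 ≤ (P s).2 := by
  intro s
  induction s with
  | zero => exact hle 0
  | succ s ih =>
    intro hs
    have := hcons s hs
    have := hle (s + 1) hs
    have := ih (by omega)
    omega

variable {m : ℕ} {a : ℕ → ℕ}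

theorem IsDistShapeC.isIsolC_cases_of_parts (ha : IsDistShapeC m a) (hr : 0 < r)
    (hparts : ∀ s < r, IsPartC m a (P s).1 (P s).2)
    (hcons : ∀ s, s + 1 < r → (P (s + 1)).1 = (P s).2 + 1)
    (htop : ∀ s < r, Even (P s).2 → s = r - 1) (hbot : ∀ s < r, Odd (P s).1 → s = 0)
    {j : ℕ} (hj0 : (P 0).1 ≤ j) (hj : j ≤ (P (r - 1)).2) (hiso : IsIsolC m a j) :
    (j = (P 0).1 ∧ j % 2 = 1) ∨ j = (P (r - 1)).2 ∨ InFlatPairC m a j := by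
  obtain ⟨s, hs, hsj, hjs⟩ := exists_mem_of_consecutive hcons hr hj0 hj
  rcases hparts s hs with hlad | hstair
  · rcases hlad.eq_of_isIsolC ha hsj hjs hiso with ⟨rfl, hodd⟩ | ⟨rfl, heven⟩
    · exact Or.inl ⟨by rw [hbot s hs (Nat.odd_iff.mpr hodd)], hodd⟩
    · exact Or.inr (Or.inl (by rw [htop s hs (Nat.even_iff.mpr heven)]))
  · exact Or.inr (Or.inr (hstair.inFlatPairC_of_isIsolC ha hsj hjs hiso))

end Parts

namespace IsBlockBotC

variable {m : ℕ} {a : ℕ → ℕ} {k l : ℕ}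

theorem ladders (hb : IsBlockBotC m a k l) :
    k % 2 = 1 ∧ l % 2 = 0 ∧ k ≤ l ∧ (∃ q, IsLadderC m a k q) ∧ ∃ p, IsLadderC m a p l := by
  obtain ⟨r, P, hr, rfl, rfl, hparts, hcons, hlad0, hladr, htop, hbot⟩ := hb
  refine ⟨Nat.odd_iff.mp ((hbot 0 hr).mpr rfl), Nat.even_iff.mp ((htop _ (by omega)).mpr rfl),
    fst_le_snd_of_consecutive hcons (fun s hs => (hparts s hs).le) _ (by omega), ⟨_, hlad0⟩,
    ⟨_, hladr⟩⟩

theorem isIsolC_cases (hb : IsBlockBotC m a k l) (ha : IsDistShapeC m a) {j : ℕ} (hkj : k ≤ j)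
    (hjl : j ≤ l) (hiso : IsIsolC m a j) : j = k ∨ j = l ∨ InFlatPairC m a j := by
  obtain ⟨r, P, hr, rfl, rfl, hparts, hcons, -, -, htop, hbot⟩ := hb
  rcases ha.isIsolC_cases_of_parts hr hparts hcons (fun s hs => (htop s hs).mp)
    (fun s hs => (hbot s hs).mp) hkj hjl hiso with h | h
  · exact Or.inl h.1
  · exact Or.inr h

end IsBlockBotC

namespace IsBlockTopC

variable {m : ℕ} {a : ℕ → ℕ} {l : ℕ}

theorem ladder (hb : IsBlockTopC m a l) : l % 2 = 0 ∧ ∃ p, IsLadderC m a p l := by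
  obtain ⟨r, P, hr, -, rfl, -, -, hladr, htop, -⟩ := hb
  exact ⟨Nat.even_iff.mp ((htop _ (by omega)).mpr rfl), ⟨_, hladr⟩⟩

theorem isIsolC_cases (hb : IsBlockTopC m a l) (ha : IsDistShapeC m a) {j : ℕ} (hjl : j ≤ l)
    (hiso : IsIsolC m a j) : j = l ∨ InFlatPairC m a j := by
  obtain ⟨r, P, hr, hP0, rfl, hparts, hcons, -, htop, heven⟩ := hb
  rcases ha.isIsolC_cases_of_parts hr hparts hcons (fun s hs => (htop s hs).mp)
    (fun s hs hodd => absurd (heven s hs) (Nat.not_even_iff_odd.mpr hodd)) (by omega) hjl hiso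
    with ⟨h, hodd⟩ | h
  · omega
  · exact h

end IsBlockTopC

namespace IsDistShapeC

variable {m : ℕ} {a : ℕ → ℕ}

/-- Cuts of `i(a)` at `k` and `l + 1` keep coinciding values inside `[k, l]`, so the
non-isolated indices of `[k, l]` pair up. -/
theorem card_filter_isIsolC_Icc_mod_two (ha : IsDistShapeC m a) {k l : ℕ} (hl : l ≤ 2 * m)
    (hbot : 0 < k → k % 2 = 1 ∧ mapC a (k - 1) < mapC a k)
    (htop : l < 2 * m → l % 2 = 0 ∧ mapC a l < mapC a (l + 1)) :
    ((Finset.Icc k l).filter (IsIsolC m a)).card % 2 = (l + 1 - k) % 2 := by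
  have hsplit := Finset.card_filter_add_card_filter_not (s := Finset.Icc k l) (IsIsolC m a)
  rw [Nat.card_Icc] at hsplit
  obtain ⟨c, hc⟩ : Even ((Finset.Icc k l).filter (fun j => ¬ IsIsolC m a j)).card := by
    refine ha.even_card_of_not_isIsolC (fun x hx => ?_) (fun x hx y hy hyx => ?_)
    · simp only [Finset.mem_filter, Finset.mem_Icc] at hx
      exact ⟨by omega, hx.2⟩
    · simp only [Finset.mem_filter, Finset.mem_Icc] at hx ⊢
      refine ⟨⟨?_, ?_⟩, not_isIsolC_of_mapC_eq hx.2 (by omega) hyx⟩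
      · by_contra! hyk
        obtain ⟨hk, hcut⟩ := hbot (by omega)
        exact (ha.mapC_lt_mapC_of_cut hk hcut hyk hx.1.1 (by omega)).ne hyx
      · by_contra! hly
        obtain ⟨hl', hcut⟩ := htop (by omega)
        exact (ha.mapC_lt_mapC_of_cut (c := l + 1) (by omega) (by simpa using hcut) (by omega)
          hly hy).ne' hyx
  omega

end IsDistShapeC

theorem IsBlockBotC.even_card_displaced {m : ℕ} {a : ℕ → ℕ} {k l : ℕ} (hb : IsBlockBotC m a k l)
    (ha : IsDistShapeC m a) :
    Even ((Finset.Icc k l).filter (fun j => IsIsolC m a j ∧ InFlatPairC m a j)).card := by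
  obtain ⟨hk, hl, hkl, ⟨q, hbotl⟩, ⟨p, htopl⟩⟩ := hb.ladders
  have hl2 := htopl.2.1
  have hmod := ha.card_filter_isIsolC_Icc_mod_two hl2
    (fun _ => ⟨hk, hbotl.mapC_pred_lt_bot ha hk⟩) (fun h => ⟨hl, htopl.mapC_lt_succ_top ha hl h⟩)
  have hsplit := Finset.card_filter_add_card_filter_not
    (s := (Finset.Icc k l).filter (IsIsolC m a)) (InFlatPairC m a)
  have hends : ((Finset.Icc k l).filter (IsIsolC m a)).filter (fun j => ¬ InFlatPairC m a j) =
      {k, l} := by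
    ext j
    simp only [Finset.mem_filter, Finset.mem_Icc, Finset.mem_insert, Finset.mem_singleton]
    constructor
    · rintro ⟨⟨⟨hkj, hjl⟩, hiso⟩, hflat⟩
      rcases hb.isIsolC_cases ha hkj hjl hiso with h | h | h
      · exact Or.inl h
      · exact Or.inr h
      · exact (hflat h).elim
    · rintro (rfl | rfl)
      · exact ⟨⟨⟨le_rfl, hkl⟩, hbotl.isIsolC_bot ha hk⟩, hbotl.not_inFlatPairC_bot hk⟩
      · exact ⟨⟨⟨hkl, le_rfl⟩, htopl.isIsolC_top ha hl⟩, htopl.not_inFlatPairC_top hl⟩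
  rw [Finset.filter_filter, hends, Finset.card_pair (by omega)] at hsplit
  rw [Nat.even_iff]
  omega

theorem IsBlockTopC.even_card_displaced {m : ℕ} {a : ℕ → ℕ} {l : ℕ} (hb : IsBlockTopC m a l)
    (ha : IsDistShapeC m a) :
    Even ((Finset.Icc 0 l).filter (fun j => IsIsolC m a j ∧ InFlatPairC m a j)).card := by
  obtain ⟨hl, ⟨p, htopl⟩⟩ := hb.ladder
  have hmod := ha.card_filter_isIsolC_Icc_mod_two (k := 0) htopl.2.1 (by omega)
    (fun h => ⟨hl, htopl.mapC_lt_succ_top ha hl h⟩)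
  have hsplit := Finset.card_filter_add_card_filter_not
    (s := (Finset.Icc 0 l).filter (IsIsolC m a)) (InFlatPairC m a)
  have hend : ((Finset.Icc 0 l).filter (IsIsolC m a)).filter (fun j => ¬ InFlatPairC m a j) =
      {l} := by
    ext j
    simp only [Finset.mem_filter, Finset.mem_Icc, Finset.mem_singleton]
    constructor
    · rintro ⟨⟨⟨-, hjl⟩, hiso⟩, hflat⟩
      exact (hb.isIsolC_cases ha hjl hiso).resolve_right hflat
    · rintro rfl
      exact ⟨⟨⟨Nat.zero_le _, le_rfl⟩, htopl.isIsolC_top ha hl⟩, htopl.not_inFlatPairC_top hl⟩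
  rw [Finset.filter_filter, hend, Finset.card_singleton] at hsplit
  rw [Nat.even_iff]
  omega

namespace IsBlockC

variable {m : ℕ} {a : ℕ → ℕ} {k l : ℕ}

theorem top_ladder (hb : IsBlockC m a k l) : l % 2 = 0 ∧ ∃ p, IsLadderC m a p l := by
  rcases hb with hb | ⟨-, hb⟩
  · exact ⟨hb.ladders.2.1, hb.ladders.2.2.2.2⟩
  · exact hb.ladder

theorem even_card_displaced (hb : IsBlockC m a k l) (ha : IsDistShapeC m a) :
    Even ((Finset.Icc k l).filter (fun j => IsIsolC m a j ∧ InFlatPairC m a j)).card := by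
  rcases hb with hb | ⟨rfl, hb⟩
  · exact hb.even_card_displaced ha
  · exact hb.even_card_displaced ha

end IsBlockC

/-! ### Every isolated point lies in a block -/

theorem exists_maximal_run_up (R : ℕ → Prop) {q b : ℕ} (hq : q ≤ b) :
    ∃ e, q ≤ e ∧ e ≤ b ∧ (∀ i, q ≤ i → i < e → R i) ∧ (e < b → ¬ R e) := by
  have hex : ∃ n, q + n = b ∨ ¬ R (q + n) := ⟨b - q, Or.inl (by omega)⟩
  have hmin := fun n => Nat.find_min (m := n) hex
  have hle : Nat.find hex ≤ b - q := Nat.find_min' hex (Or.inl (by omega))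
  refine ⟨q + Nat.find hex, by omega, by omega, fun i hqi hi => ?_, fun hlt => ?_⟩
  · by_contra hR
    exact hmin (i - q) (by omega) (Or.inr (by rwa [Nat.add_sub_cancel' hqi]))
  · exact (Nat.find_spec hex).resolve_left (by omega)

theorem exists_maximal_run_down (R : ℕ → Prop) (q : ℕ) :
    ∃ p ≤ q, (∀ i, p ≤ i → i < q → R i) ∧ (0 < p → ¬ R (p - 1)) := by
  induction q with
  | zero => exact ⟨0, le_rfl, fun i _ hi => absurd hi (Nat.not_lt_zero i), fun h => by omega⟩
  | succ q ih =>
    by_cases hR : R q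
    · obtain ⟨p, hpq, hrun, hbot⟩ := ih
      refine ⟨p, by omega, fun i hpi hi => ?_, hbot⟩
      rcases Nat.lt_succ_iff_lt_or_eq.mp hi with hi | rfl
      · exact hrun i hpi hi
      · exact hR
    · exact ⟨q + 1, le_rfl, fun i h1 h2 => absurd h2 (by omega), fun _ => hR⟩

theorem ladder_pattern {a : ℕ → ℕ} {p e : ℕ} (hrun : ∀ i, p ≤ i → i < e → a (i + 1) = a i + 1) :
    ∀ j, p ≤ j → j ≤ e → a j = a p + (j - p) := by
  intro j hpj hje
  induction j, hpj using Nat.le_induction with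
  | base => simp
  | succ j hpj ih =>
    have := hrun j hpj (by omega)
    have := ih (by omega)
    omega

theorem exists_maximal_run (R : ℕ → Prop) {q b : ℕ} (hq : q ≤ b) :
    ∃ p e, p ≤ q ∧ q ≤ e ∧ e ≤ b ∧ (∀ i, p ≤ i → i < e → R i) ∧ (0 < p → ¬ R (p - 1)) ∧
      (e < b → ¬ R e) := by
  obtain ⟨p, hpq, hdown, hbot⟩ := exists_maximal_run_down R q
  obtain ⟨e, hqe, he, hup, htop⟩ := exists_maximal_run_up R hq
  refine ⟨p, e, hpq, hqe, he, fun i hpi hie => ?_, hbot, htop⟩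
  rcases Nat.lt_or_ge i q with hiq | hqi
  · exact hdown i hpi hiq
  · exact hup i hqi hie

theorem stair_pattern {a : ℕ → ℕ} {p e : ℕ} (hp : p % 2 = 0)
    (hrun : ∀ i, p ≤ i → i < e → a (i + 1) = a i + 2 * (i % 2)) :
    ∀ j, p ≤ j → j ≤ e → a j = a p + 2 * ((j - p) / 2) := by
  intro j hpj hje
  induction j, hpj using Nat.le_induction with
  | base => simp
  | succ j hpj ih =>
    have := hrun j hpj (by omega)
    have := ih (by omega)
    rcases Nat.mod_two_eq_zero_or_one j with hj | hj <;>
    · rw [hj] at *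
      omega

namespace IsDistShapeC

variable {m : ℕ} {a : ℕ → ℕ}

theorem exists_ladder_run_up (ha : IsDistShapeC m a) {q : ℕ} (hq : q ≤ 2 * m)
    (hflat : q < 2 * m → a (q + 1) ≠ a q) :
    ∃ e, q ≤ e ∧ e ≤ 2 * m ∧ (∀ i, q ≤ i → i < e → a (i + 1) = a i + 1) ∧
      (e < 2 * m → a e + 1 < a (e + 1)) := by
  obtain ⟨e, hqe, he, hrun, hmax⟩ := exists_maximal_run_up (fun i => a (i + 1) = a i + 1) hq
  refine ⟨e, hqe, he, hrun, fun hlt => ?_⟩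
  have := hmax hlt
  have := ha.mono e hlt
  rcases Nat.eq_or_lt_of_le hqe with rfl | hlt'
  · have := hflat hlt
    omega
  · have := hrun (e - 1) (by omega) (by omega)
    have := ha.add_two_le (i := e - 1) (j := e + 1) (by omega) (by omega)
    rw [show e - 1 + 1 = e by omega] at *
    omega

theorem exists_ladder_run_down (ha : IsDistShapeC m a) {q : ℕ} (hq : q ≤ 2 * m)
    (hflat : 0 < q → a q ≠ a (q - 1)) :
    ∃ p ≤ q, (∀ i, p ≤ i → i < q → a (i + 1) = a i + 1) ∧ (0 < p → a (p - 1) + 1 < a p) := by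
  obtain ⟨p, hpq, hrun, hmax⟩ := exists_maximal_run_down (fun i => a (i + 1) = a i + 1) q
  refine ⟨p, hpq, hrun, fun hp => ?_⟩
  have := hmax hp
  have := ha.le_of_succ_eq (i := p - 1) (j := p) (by omega) (by omega)
  rw [show p - 1 + 1 = p by omega] at *
  rcases Nat.eq_or_lt_of_le hpq with rfl | hlt
  · have := hflat hp
    omega
  · have := hrun p le_rfl hlt
    have := ha.add_two_le (i := p - 1) (j := p + 1) (by omega) (by omega)
    omega

theorem exists_isStairC_of_flat (ha : IsDistShapeC m a) {q : ℕ}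
    (hq : q % 2 = 0) (hq2 : q < 2 * m) (hflat : a (q + 1) = a q) :
    ∃ p e, p ≤ q ∧ q < e ∧ p % 2 = 0 ∧ IsStairC m a p e := by
  -- a maximal run `[p', e']` of staircase steps through `q`, to be trimmed to an even bottom `p`
  -- and an odd top `e`
  obtain ⟨p', e', hpq, hqe, he', hrun, hbot, htop⟩ :=
    exists_maximal_run (fun i => a (i + 1) = a i + 2 * (i % 2)) hq2.le
  replace hqe : q < e' := by
    rcases Nat.eq_or_lt_of_le hqe with rfl | h
    · exact absurd (by omega) (htop hq2)
    · exact h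
  replace hbot : 0 < p' → a p' ≠ a (p' - 1) + 2 * ((p' - 1) % 2) := fun hp => by
    simpa only [Nat.sub_add_cancel hp] using hbot hp
  obtain ⟨p, hp, hpp'⟩ : ∃ p, p % 2 = 0 ∧ (p = p' ∨ p = p' + 1) :=
    ⟨p' + p' % 2, by omega, by omega⟩
  obtain ⟨e, he, hee'⟩ : ∃ e, e % 2 = 1 ∧ (e = e' ∨ e + 1 = e') :=
    ⟨e' - (e' + 1) % 2, by omega, by omega⟩
  have hpat := stair_pattern (e := e') hp (fun i hi hie => hrun i (by omega) hie)
  have hstep : ∀ i j, p' ≤ i → j ≤ e' → i + 1 = j → a j = a i + 2 * (i % 2) :=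
    fun i j hi hj hij => hij ▸ hrun i hi (by omega)
  refine ⟨p, e, by omega, by omega, hp, by omega, by omega, by omega,
    fun j hj hje => hpat j hj (by omega), fun hp1 => ?_, fun he2 => ?_⟩
  · have := hbot (by omega)
    have := hstep p' (p' + 1) le_rfl (by omega) rfl
    rcases hpp' with rfl | rfl
    · have := ha.add_two_le (i := p - 1) (j := p + 1) (by omega) (by omega)
      have := ha.le_of_succ_eq (i := p - 2) (j := p - 1) (by omega) (by omega)
      omega
    · have := ha.le_of_succ_eq (i := p' - 1) (j := p') (by omega) (by omega)
      rw [show p' + 1 - 2 = p' - 1 by omega]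
      omega
  · have := htop (by omega)
    have := hstep (e' - 1) e' (by omega) le_rfl (by omega)
    have := ha.le_of_succ_eq (i := e' + 1) (j := e' + 2) rfl (by omega)
    have := ha.le_of_succ_eq (i := e') (j := e' + 1) rfl (by omega)
    rcases hee' with rfl | rfl
    · have := ha.add_two_le (i := e - 1) (j := e + 1) (by omega) (by omega)
      rw [show (e - 1) % 2 = 0 by omega] at *
      omega
    · rw [show e + 1 - 1 = e by omega, show e + 1 + 1 = e + 2 by omega] at *
      omega

end IsDistShapeC

/-- Parts of `a` may end at `q - 1` and begin at `q`: no ladder or staircase runs across. -/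
def IsCutC (m : ℕ) (a : ℕ → ℕ) (q : ℕ) : Prop :=
  (0 < q → a (q - 1) + 2 ≤ a q) ∧
  (1 < q → q < 2 * m → a (q + 1) = a q → a (q - 2) + 2 < a q) ∧
  (1 < q → q < 2 * m → a (q - 1) = a (q - 2) → a (q - 1) + 2 < a (q + 1))

/-- `[q, l]` is a union of consecutive parts with even bottoms, the last one a ladder and the only
one with even top; `IsBlockTopC m a l` is the case `q = 0`. -/
def ChainFromC (m : ℕ) (a : ℕ → ℕ) (q l : ℕ) : Prop :=
  ∃ (r : ℕ) (P : ℕ → ℕ × ℕ), 0 < r ∧ (P 0).1 = q ∧ (P (r - 1)).2 = l ∧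
    (∀ s, s < r → IsPartC m a (P s).1 (P s).2) ∧
    (∀ s, s + 1 < r → (P (s + 1)).1 = (P s).2 + 1) ∧
    IsLadderC m a (P (r - 1)).1 (P (r - 1)).2 ∧
    (∀ s, s < r → (Even ((P s).2) ↔ s = r - 1)) ∧
    (∀ s, s < r → Even ((P s).1))

section Cuts

variable {m : ℕ} {a : ℕ → ℕ} {p e : ℕ}

theorem IsPartC.isCutC_succ (h : IsPartC m a p e) (ha : IsDistShapeC m a) (he : e < 2 * m) :
    IsCutC m a (e + 1) := by
  simp only [IsCutC, Nat.add_sub_cancel, show e + 1 - 2 = e - 1 by omega,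
    show e + 1 + 1 = e + 2 from rfl]
  rcases h with hl | ⟨hpe, -, hlen, hpat, -, htop⟩
  · have := hl.2.2.2.2 he
    have := hl.pred_lt_top
    refine ⟨fun _ => by omega, fun h1 _ _ => ?_, fun h1 _ hflat => ?_⟩ <;>
    · have := this (by omega)
      omega
  · have := hpat e hpe le_rfl
    have := hpat (e - 1) (by omega) (by omega)
    have := ha.add_two_le (i := e - 1) (j := e + 1) (by omega) (by omega)
    have := ha.le_of_succ_eq (i := e) (j := e + 1) rfl (by omega)
    refine ⟨fun _ => by omega, fun _ h2 hflat => ?_, fun _ h2 _ => ?_⟩ <;>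
    · have := htop (by omega)
      omega

theorem IsPartC.isCutC_bot (h : IsPartC m a p e) (ha : IsDistShapeC m a) : IsCutC m a p := by
  rcases h with hl | ⟨hpe, he, hlen, hpat, hbot, -⟩
  · have hbot := hl.2.2.2.1
    refine ⟨fun h => by have := hbot h; omega, fun _ h2 _ => ?_, fun _ h2 _ => ?_⟩
    · have := hl.bot_lt_succ h2
      omega
    · have := hbot (by omega)
      have := hl.bot_lt_succ h2
      omega
  · have := hpat (p + 1) (by omega) (by omega)
    rw [show p + 1 - p = 1 by omega] at this
    refine ⟨fun h => ?_, fun h1 _ _ => by have := hbot h1; omega,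
      fun h1 _ hflat => by have := hbot h1; omega⟩
    have := ha.add_two_le (i := p - 1) (j := p + 1) (by omega) (by omega)
    omega

end Cuts

section Chains

variable {m : ℕ} {a : ℕ → ℕ}

theorem ChainFromC.single {q e : ℕ} (hl : IsLadderC m a q e) (hq : q % 2 = 0) (he : e % 2 = 0) :
    ChainFromC m a q e :=
  ⟨1, fun _ => (q, e), one_pos, rfl, rfl, fun _ _ => Or.inl hl, fun s hs => by omega, hl,
    fun s hs => by simpa [show s = 0 by omega] using Nat.even_iff.mpr he,
    fun _ _ => Nat.even_iff.mpr hq⟩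

theorem IsBlockBotC.single {k l : ℕ} (hl : IsLadderC m a k l) (hk : k % 2 = 1) (hl' : l % 2 = 0) :
    IsBlockBotC m a k l :=
  ⟨1, fun _ => (k, l), one_pos, rfl, rfl, fun _ _ => Or.inl hl, fun s hs => by omega, hl, hl,
    fun s hs => by simpa [show s = 0 by omega] using Nat.even_iff.mpr hl',
    fun s hs => by simpa [show s = 0 by omega] using Nat.odd_iff.mpr hk⟩

theorem ChainFromC.cons {p e l : ℕ} (hch : ChainFromC m a (e + 1) l) (hX : IsPartC m a p e)
    (hp : p % 2 = 0) (he : e % 2 = 1) : ChainFromC m a p l := by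
  obtain ⟨r, P, hr, hP0, hPr, hparts, hcons, hladr, htop, hbot⟩ := hch
  have hr' : r + 1 - 1 = r - 1 + 1 := by omega
  refine ⟨r + 1, fun s => match s with | 0 => (p, e) | s + 1 => P s, by omega, rfl,
    hr' ▸ hPr, fun s hs => ?_, fun s hs => ?_, hr' ▸ hladr, fun s hs => ?_, fun s hs => ?_⟩
  · cases s with
    | zero => exact hX
    | succ s => exact hparts s (by omega)
  · cases s with
    | zero => exact hP0
    | succ s => exact hcons s (by omega)
  · cases s with
    | zero => simp only [Nat.not_even_iff_odd.mpr (Nat.odd_iff.mpr he), false_iff]; omega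
    | succ s => exact (htop s (by omega)).trans (by omega)
  · cases s with
    | zero => exact Nat.even_iff.mpr hp
    | succ s => exact hbot s (by omega)

theorem IsBlockBotC.cons {k e l : ℕ} (hch : ChainFromC m a (e + 1) l) (hX : IsLadderC m a k e)
    (hk : k % 2 = 1) (he : e % 2 = 1) : IsBlockBotC m a k l := by
  obtain ⟨r, P, hr, hP0, hPr, hparts, hcons, hladr, htop, hbot⟩ := hch
  have hr' : r + 1 - 1 = r - 1 + 1 := by omega
  refine ⟨r + 1, fun s => match s with | 0 => (k, e) | s + 1 => P s, by omega, rfl,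
    hr' ▸ hPr, fun s hs => ?_, fun s hs => ?_, hX, hr' ▸ hladr, fun s hs => ?_, fun s hs => ?_⟩
  · cases s with
    | zero => exact Or.inl hX
    | succ s => exact hparts s (by omega)
  · cases s with
    | zero => exact hP0
    | succ s => exact hcons s (by omega)
  · cases s with
    | zero => simp only [Nat.not_even_iff_odd.mpr (Nat.odd_iff.mpr he), false_iff]; omega
    | succ s => exact (htop s (by omega)).trans (by omega)
  · cases s with
    | zero => exact iff_of_true (Nat.odd_iff.mpr hk) rfl
    | succ s => exact iff_of_false (Nat.not_odd_iff_even.mpr (hbot s (by omega))) (by omega)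

end Chains

namespace IsDistShapeC

variable {m : ℕ} {a : ℕ → ℕ}

theorem exists_isPartC_of_isCutC (ha : IsDistShapeC m a) {q : ℕ} (hq : q ≤ 2 * m)
    (hqe : q % 2 = 0) (hc : IsCutC m a q) : ∃ e, IsPartC m a q e := by
  by_cases hflat : q < 2 * m ∧ a (q + 1) = a q
  · obtain ⟨p, e, hpq, hqe', hp, hs⟩ := ha.exists_isStairC_of_flat hqe hflat.1 hflat.2
    obtain rfl : p = q := by
      by_contra hne
      have := hs.2.2.2.1 q hpq (by omega)
      have := hs.2.2.2.1 (q - 2) (by omega) (by omega)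
      have := hc.2.1 (by omega) hflat.1 hflat.2
      omega
    exact ⟨e, Or.inr hs⟩
  · obtain ⟨e, hqe', he, hrun, htop⟩ := ha.exists_ladder_run_up hq fun h h' => hflat ⟨h, h'⟩
    exact ⟨e, Or.inl ⟨hqe', he, ladder_pattern hrun, fun h => by have := hc.1 h; omega, htop⟩⟩

theorem exists_isPartC_ending_of_isCutC (ha : IsDistShapeC m a) {q : ℕ} (hq0 : 0 < q)
    (hq : q ≤ 2 * m) (hqe : q % 2 = 0) (hc : IsCutC m a q) : ∃ p, IsPartC m a p (q - 1) := by
  by_cases hflat : a (q - 1) = a (q - 2)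
  · obtain ⟨p, e, hpq, hqe', hp, hs⟩ :=
      ha.exists_isStairC_of_flat (q := q - 2) (by omega) (by omega)
        (by rw [show q - 2 + 1 = q - 1 by omega]; exact hflat)
    obtain rfl : e = q - 1 := by
      by_contra hne
      have := hs.2.2.2.1 (q - 1) (by omega) (by omega)
      have := hs.2.2.2.1 (q + 1) (by omega) (by have := hs.2.1; have := hs.2.2.1; omega)
      have := hc.2.2 (by omega) (by have := hs.2.1; have := hs.2.2.1; omega) hflat
      omega
    exact ⟨p, Or.inr hs⟩
  · obtain ⟨p, hpq, hrun, hbot⟩ := ha.exists_ladder_run_down (q := q - 1) (by omega)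
      fun _ => by rwa [show q - 1 - 1 = q - 2 by omega]
    refine ⟨p, Or.inl ⟨hpq, by omega, ladder_pattern hrun, hbot, fun _ => ?_⟩⟩
    have := hc.1 hq0
    rw [show q - 1 + 1 = q by omega]
    omega

theorem exists_isPartC_mem (ha : IsDistShapeC m a) {j : ℕ} (hiso : IsIsolC m a j) :
    ∃ p e, p ≤ j ∧ j ≤ e ∧ IsPartC m a p e ∧ (p % 2 = 1 → IsLadderC m a p e) := by
  have hj := hiso.1
  by_cases hflat : InFlatPairC m a j
  · obtain ⟨q, hq, hqj, hq2, hqflat⟩ : ∃ q, q % 2 = 0 ∧ (q = j ∨ q + 1 = j) ∧ q < 2 * m ∧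
        a (q + 1) = a q := by
      rcases hflat with ⟨hj1, hj'⟩ | ⟨hj0, hj2, hj'⟩
      · exact ⟨j - 1, by omega, by omega, by omega, by rw [show j - 1 + 1 = j by omega]; exact hj'⟩
      · exact ⟨j, hj0, Or.inl rfl, hj2, hj'⟩
    obtain ⟨p, e, hpq, hqe, hp, hs⟩ := ha.exists_isStairC_of_flat hq hq2 hqflat
    exact ⟨p, e, by omega, by omega, Or.inr hs, fun h => absurd hp (by omega)⟩
  have hup : j < 2 * m → a (j + 1) ≠ a j := fun hj2 hj' => by
    have := ha.mapC_succ hj2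
    exact hflat (Or.inr ⟨by_contra fun hodd => hiso.2 (j + 1) hj2 (by omega) (by omega), hj2, hj'⟩)
  have hdown : 0 < j → a j ≠ a (j - 1) := fun hj0 hj' => by
    have := ha.mapC_succ (i := j - 1) (by omega)
    rw [show j - 1 + 1 = j by omega] at this
    exact hflat (Or.inl ⟨by_contra fun heven => hiso.2 (j - 1) (by omega) (by omega) (by omega),
      hj'⟩)
  obtain ⟨p, hpj, hrun₁, hbot⟩ := ha.exists_ladder_run_down hj hdown
  obtain ⟨e, hje, he, hrun₂, htop⟩ := ha.exists_ladder_run_up hj hup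
  have hl : IsLadderC m a p e := ⟨by omega, he, ladder_pattern fun i hpi hie =>
    (lt_or_ge i j).elim (hrun₁ i hpi) (fun hji => hrun₂ i hji hie), hbot, htop⟩
  exact ⟨p, e, hpj, hje, Or.inl hl, fun _ => hl⟩

theorem exists_chainFromC_succ (ha : IsDistShapeC m a) {p e : ℕ} (hpart : IsPartC m a p e)
    (he : e % 2 = 1) : ∃ l, e + 1 ≤ l ∧ ChainFromC m a (e + 1) l := by
  induction h : 2 * m - e using Nat.strong_induction_on generalizing p e with
  | _ n ih =>
    have he2 : e < 2 * m := by have := hpart.snd_le; omega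
    obtain ⟨e', hpart'⟩ :=
      ha.exists_isPartC_of_isCutC (by omega) (by omega) (hpart.isCutC_succ ha he2)
    rcases Nat.mod_two_eq_zero_or_one e' with he' | he'
    · exact ⟨e', hpart'.le,
        .single (hpart'.isLadderC_of_mod_eq (by omega)) (by omega) he'⟩
    · obtain ⟨l, hl, hch⟩ := ih (2 * m - e') (by have := hpart'.le; omega) hpart' he' rfl
      exact ⟨l, by have := hpart'.le; omega, hch.cons hpart' (by omega) he'⟩

theorem exists_isBlockC_of_chainFromC (ha : IsDistShapeC m a) {q l : ℕ}
    (hch : ChainFromC m a q l) (hq : q % 2 = 0) (hq2 : q ≤ 2 * m) (hc : IsCutC m a q) :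
    ∃ k ≤ q, IsBlockC m a k l := by
  induction q using Nat.strong_induction_on with
  | _ q ih =>
    rcases Nat.eq_zero_or_pos q with rfl | hq0
    · exact ⟨0, le_rfl, Or.inr ⟨rfl, hch⟩⟩
    obtain ⟨p, hpart⟩ := ha.exists_isPartC_ending_of_isCutC hq0 hq2 hq hc
    rw [show q = q - 1 + 1 by omega] at hch
    rcases Nat.mod_two_eq_zero_or_one p with hp | hp
    · obtain ⟨k, hk, hblock⟩ := ih p (by have := hpart.le; omega)
        (hch.cons hpart hp (by omega)) hp (by have := hpart.le; omega) (hpart.isCutC_bot ha)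
      exact ⟨k, by have := hpart.le; omega, hblock⟩
    · exact ⟨p, by have := hpart.le; omega,
        Or.inl (IsBlockBotC.cons hch (hpart.isLadderC_of_mod_eq (by omega)) hp (by omega))⟩

theorem exists_isBlockC_mem (ha : IsDistShapeC m a) {j : ℕ} (hiso : IsIsolC m a j) :
    ∃ k l, IsBlockC m a k l ∧ k ≤ j ∧ j ≤ l := by
  obtain ⟨p, e, hpj, hje, hpart, hlad⟩ := ha.exists_isPartC_mem hiso
  obtain ⟨l, hel, hch⟩ :
      ∃ l, e ≤ l ∧ (e % 2 = 0 ∧ l = e ∨ e % 2 = 1 ∧ ChainFromC m a (e + 1) l) := by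
    rcases Nat.mod_two_eq_zero_or_one e with he | he
    · exact ⟨e, le_rfl, Or.inl ⟨he, rfl⟩⟩
    · obtain ⟨l, hl, hch⟩ := ha.exists_chainFromC_succ hpart he
      exact ⟨l, by omega, Or.inr ⟨he, hch⟩⟩
  rcases Nat.mod_two_eq_zero_or_one p with hp | hp
  · have hchp : ChainFromC m a p l := by
      rcases hch with ⟨he, rfl⟩ | ⟨he, hch⟩
      · exact .single (hpart.isLadderC_of_mod_eq (by omega)) hp he
      · exact hch.cons hpart hp he
    obtain ⟨k, hk, hblock⟩ :=
      ha.exists_isBlockC_of_chainFromC hchp hp (by have := hpart.snd_le; have := hpart.le; omega)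
        (hpart.isCutC_bot ha)
    exact ⟨k, l, hblock, by omega, by omega⟩
  · refine ⟨p, l, Or.inl ?_, hpj, by omega⟩
    rcases hch with ⟨he, rfl⟩ | ⟨he, hch⟩
    · exact .single (hlad hp) hp he
    · exact IsBlockBotC.cons hch (hlad hp) hp he

end IsDistShapeC

theorem stmt10_general (n m : ℕ) (a : ℕ → ℕ)
    (ha : IsUSymC n m a) (hdist : DistC m a)
    (N : ℕ) (K : ℕ → ℕ) (hE : EnumC m a N K) :
    (∀ k l, IsBlockC m a k l →
      IsIsolC m a l ∧ ∀ t, t < N → K t = l → K t % 2 = t % 2) ∧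
    (∀ k l, IsBlockBotC m a k l →
      IsIsolC m a k ∧ ∀ t, t < N → K t = k → K t % 2 = t % 2) ∧
    (∀ k l, IsBlockBotC m a k l → ∀ j, k ≤ j → j ≤ l → j ≠ k → j ≠ l →
      IsIsolC m a j → ∃ t, t < N ∧ K t = j ∧ K t % 2 ≠ t % 2) ∧
    (∀ l, IsBlockTopC m a l → ∀ j, j ≤ l → j ≠ l →
      IsIsolC m a j → ∃ t, t < N ∧ K t = j ∧ K t % 2 ≠ t % 2) ∧
    (∀ k l, IsBlockC m a k l →
      Even (((Finset.Icc k l).filter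
        (fun j => ∃ t, t < N ∧ K t = j ∧ K t % 2 ≠ t % 2)).card)) ∧
    (∀ j, IsIsolC m a j → ∃ k l, IsBlockC m a k l ∧ k ≤ j ∧ j ≤ l) := by
  have hs : IsDistShapeC m a := ⟨ha.1, ha.2.1, hdist⟩
  have nondisplaced {x : ℕ} (hx : ¬ InFlatPairC m a x) : ∀ t, t < N → K t = x → K t % 2 = t % 2 :=
    fun t ht hKt => (hE.mod_two_eq_iff hs ht).mpr (hKt ▸ hx)
  have displaced {x : ℕ} (hiso : IsIsolC m a x) (hx : InFlatPairC m a x) :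
      ∃ t, t < N ∧ K t = x ∧ K t % 2 ≠ t % 2 :=
    (hE.displaced_iff hs).mpr ⟨hiso, hx⟩
  refine ⟨fun k l hb => ?_, fun k l hb => ?_, fun k l hb j hkj hjl hjk hjl' hiso => ?_,
    fun l hb j hjl hjl' hiso => ?_, fun k l hb => ?_, fun j hiso => hs.exists_isBlockC_mem hiso⟩
  · obtain ⟨hl, p, hlad⟩ := hb.top_ladder
    exact ⟨hlad.isIsolC_top hs hl, nondisplaced (hlad.not_inFlatPairC_top hl)⟩
  · obtain ⟨hk, -, -, ⟨q, hlad⟩, -⟩ := hb.ladders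
    exact ⟨hlad.isIsolC_bot hs hk, nondisplaced (hlad.not_inFlatPairC_bot hk)⟩
  · exact displaced hiso (((hb.isIsolC_cases hs hkj hjl hiso).resolve_left hjk).resolve_left hjl')
  · exact displaced hiso ((hb.isIsolC_cases hs hjl hiso).resolve_left hjl')
  · rw [Finset.filter_congr fun j _ => hE.displaced_iff hs]
    exact hb.even_card_displaced hs

/-- For a distinguished type-C u-symbol `a` with isolated points enumerated by
`K` (so `K t` is displaced iff `K t ≢ t (mod 2)`): the top of each block is a
nondisplaced isolated point; the bottom of each block that has a bottom is a
nondisplaced isolated point; every other isolated point in a block is displaced;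
each block contains an even number of displaced isolated points; and every
isolated point belongs to some block. -/
theorem stmt10 (n m : ℕ) (hn : 1 ≤ n) (hm : 1 ≤ m) (a : ℕ → ℕ)
    (ha : IsUSymC n m a) (hdist : DistC m a)
    (N : ℕ) (K : ℕ → ℕ) (hE : EnumC m a N K) :
    (∀ k l, IsBlockC m a k l →
      IsIsolC m a l ∧ ∀ t, t < N → K t = l → K t % 2 = t % 2) ∧
    (∀ k l, IsBlockBotC m a k l →
      IsIsolC m a k ∧ ∀ t, t < N → K t = k → K t % 2 = t % 2) ∧
    (∀ k l, IsBlockBotC m a k l → ∀ j, k ≤ j → j ≤ l → j ≠ k → j ≠ l →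
      IsIsolC m a j → ∃ t, t < N ∧ K t = j ∧ K t % 2 ≠ t % 2) ∧
    (∀ l, IsBlockTopC m a l → ∀ j, j ≤ l → j ≠ l →
      IsIsolC m a j → ∃ t, t < N ∧ K t = j ∧ K t % 2 ≠ t % 2) ∧
    (∀ k l, IsBlockC m a k l →
      Even (((Finset.Icc k l).filter
        (fun j => ∃ t, t < N ∧ K t = j ∧ K t % 2 ≠ t % 2)).card)) ∧
    (∀ j, IsIsolC m a j → ∃ k l, IsBlockC m a k l ∧ k ≤ j ∧ j ≤ l) :=
  stmt10_general n m a ha hdist N K hE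
end
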